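/- arXiv:2307.11547 — 5 statements merged into one kernel-verified Lean document; each statement's English description precedes it below -/
import Mathlib

section
/- For every positive integer n, r_0(n) = ∑_{d | n} χ₄(d), where χ₄ is the non-principal Dirichlet character mod 4. -/
/-- `r₀(n)`: number of representations of `n` as a sum of two squares in the
first quadrant. -/
noncomputable def r0 (n : ℕ) : ℕ :=
  Nat.card {p : ℤ × ℤ // (n : ℤ) = p.1 ^ 2 + p.2 ^ 2 ∧ 0 ≤ p.1 ∧ 0 < p.2}

open GaussianInt Zsqrtd

namespace R0Aux

/-- natural norm -/
def Nn (z : GaussianInt) : ℕ := z.norm.natAbs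

lemma Nn_coe (z : GaussianInt) : (Nn z : ℤ) = z.norm := Int.natAbs_of_nonneg (norm_nonneg z)

lemma Nn_mul (x y : GaussianInt) : Nn (x * y) = Nn x * Nn y := by
  simp [Nn, Zsqrtd.norm_mul, Int.natAbs_mul]

lemma Nn_eq_zero {z : GaussianInt} : Nn z = 0 ↔ z = 0 := by
  rw [Nn, Int.natAbs_eq_zero, GaussianInt.norm_eq_zero]

lemma Nn_eq_one {z : GaussianInt} : Nn z = 1 ↔ IsUnit z := Zsqrtd.norm_eq_one_iff

lemma Nn_star (z : GaussianInt) : Nn (star z) = Nn z := by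
  simp only [Nn, Zsqrtd.norm_def, Zsqrtd.re_star, Zsqrtd.im_star]; ring_nf

lemma Nn_dvd {x z : GaussianInt} (h : x ∣ z) : Nn x ∣ Nn z := by
  obtain ⟨w, rfl⟩ := h; exact Dvd.intro _ (Nn_mul x w).symm

lemma Nn_assoc {x y : GaussianInt} (h : Associated x y) : Nn x = Nn y :=
  Nat.dvd_antisymm (Nn_dvd h.dvd) (Nn_dvd h.symm.dvd)

/-- quadrant predicate -/
def Q (z : GaussianInt) : Prop := 0 ≤ z.re ∧ 0 < z.im

lemma card_eq (n : ℕ) : r0 n = Nat.card {z : GaussianInt // Nn z = n ∧ Q z} := by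
  apply Nat.card_congr
  refine ⟨fun p => ⟨⟨p.1.1, p.1.2⟩, ?_⟩, fun z => ⟨⟨z.1.re, z.1.im⟩, ?_⟩, fun p => rfl, fun z => rfl⟩
  · obtain ⟨⟨a, b⟩, h, ha, hb⟩ := p
    refine ⟨?_, ha, hb⟩
    have h2 : (⟨a,b⟩ : GaussianInt).norm = n := by
      rw [Zsqrtd.norm_def]; dsimp only; rw [show a*a - -1*b*b = a^2+b^2 by ring]; exact h.symm
    simp [Nn, h2]
  · obtain ⟨z, hz, h⟩ := z
    refine ⟨?_, h.1, h.2⟩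
    have h3 := Nn_coe z
    rw [hz, Zsqrtd.norm_def] at h3
    dsimp only
    rw [h3]; ring

lemma isUnit_iff {u : GaussianInt} :
    IsUnit u ↔ u = 1 ∨ u = -1 ∨ u = ⟨0,1⟩ ∨ u = ⟨0,-1⟩ := by
  constructor
  · intro h
    have h1 : u.norm = 1 := (Zsqrtd.norm_eq_one_iff' (by norm_num) u).mpr h
    rcases u with ⟨x, y⟩
    rw [Zsqrtd.norm_def] at h1
    have h2 : x*x + y*y = 1 := by linarith
    have hx : -1 ≤ x ∧ x ≤ 1 := ⟨by nlinarith, by nlinarith⟩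
    have hy : -1 ≤ y ∧ y ≤ 1 := ⟨by nlinarith, by nlinarith⟩
    obtain ⟨hx1, hx2⟩ := hx; obtain ⟨hy1, hy2⟩ := hy
    interval_cases x <;> interval_cases y <;> simp_all <;> decide
  · rintro (rfl|rfl|rfl|rfl)
    · exact isUnit_one
    · exact isUnit_one.neg
    · exact IsUnit.of_mul_eq_one ⟨0,-1⟩ (by decide)
    · exact IsUnit.of_mul_eq_one ⟨0,1⟩ (by decide)

lemma assoc_unit_mul {u z : GaussianInt} (hu : IsUnit u) : Associated z (u * z) :=
  ⟨hu.unit, by rw [mul_comm, IsUnit.unit_spec]⟩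

lemma exists_unique_quad (z : GaussianInt) (hz : z ≠ 0) :
    ∃! w : GaussianInt, (0 ≤ w.re ∧ 0 < w.im) ∧ Associated z w := by
  have hz' : ¬(z.re = 0 ∧ z.im = 0) := by
    intro ⟨h1, h2⟩; exact hz (Zsqrtd.ext h1 h2)
  have hI : IsUnit (⟨0,1⟩ : GaussianInt) := isUnit_iff.mpr (by tauto)
  have hI' : IsUnit (⟨0,-1⟩ : GaussianInt) := isUnit_iff.mpr (by tauto)
  have key : ∃ w : GaussianInt, (0 ≤ w.re ∧ 0 < w.im) ∧ Associated z w := by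
    rcases le_or_gt z.im 0 with h2 | h2
    · rcases le_or_gt z.re 0 with h1 | h1
      · rcases eq_or_lt_of_le h2 with h2' | h2'
        · refine ⟨⟨0,-1⟩*z, ⟨?_, ?_⟩, assoc_unit_mul hI'⟩ <;>
            simp [Zsqrtd.re_mul, Zsqrtd.im_mul] <;> omega
        · refine ⟨-z, ⟨?_, ?_⟩, ⟨-1, by simp⟩⟩ <;> simp <;> omega
      · refine ⟨⟨0,1⟩*z, ⟨?_, ?_⟩, assoc_unit_mul hI⟩ <;>
          simp [Zsqrtd.re_mul, Zsqrtd.im_mul] <;> omega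
    · rcases le_or_gt 0 z.re with h1 | h1
      · exact ⟨z, ⟨h1, h2⟩, Associated.refl z⟩
      · refine ⟨⟨0,-1⟩*z, ⟨?_, ?_⟩, assoc_unit_mul hI'⟩ <;>
          simp [Zsqrtd.re_mul, Zsqrtd.im_mul] <;> omega
  obtain ⟨w, hw⟩ := key
  refine ⟨w, hw, fun w' hw' => ?_⟩
  obtain ⟨u, hu⟩ := (hw'.2.symm.trans hw.2).symm
  have hu' := isUnit_iff.mp u.isUnit
  have hwim := hw.1.2; have hwre := hw.1.1
  have hw'im := hw'.1.2; have hw're := hw'.1.1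
  rcases hu' with h | h | h | h <;> rw [h] at hu <;> subst hu
  · simp
  · simp at hw'im hw're; omega
  · simp [Zsqrtd.re_mul, Zsqrtd.im_mul] at hw'im hw're; omega
  · simp [Zsqrtd.re_mul, Zsqrtd.im_mul] at hw'im hw're; omega

/-- canonical quadrant representative -/
noncomputable def quadRep (z : GaussianInt) : GaussianInt :=
  if hz : z ≠ 0 then (exists_unique_quad z hz).exists.choose else 0

lemma quadRep_spec {z : GaussianInt} (hz : z ≠ 0) :
    Q (quadRep z) ∧ Associated z (quadRep z) := by
  rw [quadRep, dif_pos hz]; exact (exists_unique_quad z hz).exists.choose_spec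

lemma quadRep_eq {z w : GaussianInt} (hz : z ≠ 0) (hw : Q w) (h : Associated z w) :
    quadRep z = w := by
  have h1 := quadRep_spec hz
  exact ((exists_unique_quad z hz).unique ⟨h1.1, h1.2⟩ ⟨hw, h⟩)

lemma quadRep_Nn {z : GaussianInt} (hz : z ≠ 0) : Nn (quadRep z) = Nn z :=
  (Nn_assoc (quadRep_spec hz).2).symm

lemma star_dvd_iff {a b : GaussianInt} : star a ∣ star b ↔ a ∣ b := by
  constructor
  · rintro ⟨c, hc⟩
    exact ⟨star c, by rw [← star_star b, hc, star_mul', mul_comm, star_star, mul_comm]⟩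
  · rintro ⟨c, hc⟩
    exact ⟨star c, by rw [hc, star_mul', mul_comm]⟩

lemma star_prime {π : GaussianInt} (h : Prime π) : Prime (star π) := by
  obtain ⟨h0, h1, h2⟩ := h
  refine ⟨by simpa using h0, by simpa [isUnit_star] using h1, fun a b hab => ?_⟩
  have : π ∣ star a * star b := by
    rw [← star_mul']
    have := star_dvd_iff.mpr hab
    rwa [star_star] at this
  rcases h2 _ _ this with h | h
  · left; rw [← star_star a]; exact star_dvd_iff.mpr h
  · right; rw [← star_star b]; exact star_dvd_iff.mpr h

lemma Nn_natCast (q : ℕ) : Nn (q : GaussianInt) = q * q := by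
  have : (q : GaussianInt).norm = (q : ℤ) * (q : ℤ) := by
    rw [Zsqrtd.norm_def]; push_cast [Zsqrtd.re_natCast, Zsqrtd.im_natCast]; ring
  simp [Nn, this, Int.natAbs_mul]

/-- a prime of ℤ[i] dividing `z * star z` gives (after possibly conjugating) a prime
dividing `z`; moreover it still divides anything star-invariant. -/
lemma exists_prime_dvd_of_dvd_norm {q : ℕ} (hq2 : 2 ≤ q) {z : GaussianInt}
    (hdvd : (q : ℤ) ∣ z.norm) :
    ∃ π : GaussianInt, Prime π ∧ π ∣ z ∧ π ∣ (q : GaussianInt) := by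
  have hne0 : (q : GaussianInt) ≠ 0 := by
    simp only [ne_eq, Nat.cast_eq_zero]; omega
  have hnu : ¬IsUnit (q : GaussianInt) := by
    rw [← Nn_eq_one, Nn_natCast]
    nlinarith
  obtain ⟨π₀, hirr, hπ₀q⟩ := WfDvdMonoid.exists_irreducible_factor hnu hne0
  have hprime : Prime π₀ := hirr.prime
  have hzz : (q : GaussianInt) ∣ z * star z := by
    rw [← Zsqrtd.norm_eq_mul_conj]
    have h2 : ((z.norm : ℤ) : GaussianInt) = (z.norm : GaussianInt) := rfl
    have := map_dvd (Int.castRingHom GaussianInt) hdvd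
    simpa using this
  rcases hprime.2.2 _ _ (hπ₀q.trans hzz) with h | h
  · exact ⟨π₀, hprime, h, hπ₀q⟩
  · refine ⟨star π₀, star_prime hprime, ?_, ?_⟩
    · have := star_dvd_iff.mpr h  -- star π₀ ∣ star (star z)
      rwa [star_star] at this
    · have := star_dvd_iff.mpr hπ₀q
      rwa [star_natCast] at this

/-- existence of coprime factorization -/
lemma exists_factor : ∀ m : ℕ, ∀ n : ℕ, ∀ z : GaussianInt, Nat.Coprime m n →
    Nn z = m * n → ∃ x y, z = x * y ∧ Nn x = m ∧ Nn y = n := by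
  intro m
  induction m using Nat.strong_induction_on with
  | _ m ih =>
    intro n z hco hN
    rcases eq_or_ne m 0 with rfl | hm0
    · have hn1 : n = 1 := by simpa [Nat.coprime_zero_left] using hco
      exact ⟨z, 1, (mul_one z).symm, by simpa [hn1] using hN, by simp [hn1, Nn_eq_one]⟩
    rcases eq_or_ne m 1 with rfl | hm1
    · exact ⟨1, z, (one_mul z).symm, by simp [Nn_eq_one], by simpa using hN⟩
    -- now m ≥ 2
    have hm2 : 2 ≤ m := by omega
    set q := m.minFac with hqdef
    have hq : q.Prime := Nat.minFac_prime hm1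
    have hqm : q ∣ m := Nat.minFac_dvd m
    have hqz : (q : ℤ) ∣ z.norm := by
      rw [← Nn_coe, hN]
      exact_mod_cast Int.natCast_dvd_natCast.mpr (hqm.mul_right n)
    obtain ⟨π, hπ, hπz, hπq⟩ := exists_prime_dvd_of_dvd_norm hq.two_le hqz
    set k := Nn π with hkdef
    have hkq : k ∣ q ^ 2 := by
      have := Nn_dvd hπq
      rwa [Nn_natCast, ← pow_two] at this
    have hk1 : k ≠ 1 := fun h => hπ.not_unit (Nn_eq_one.mp h)
    have hkmn : k ∣ m * n := by rw [← hN]; exact Nn_dvd hπz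
    have hqn : Nat.Coprime q n := Nat.Coprime.coprime_dvd_left hqm hco
    have hkn : Nat.Coprime k n := by
      obtain ⟨i, hi, hik⟩ := (Nat.dvd_prime_pow hq).mp hkq
      rw [hik]
      exact hqn.pow_left i
    have hkm : k ∣ m := hkn.dvd_of_dvd_mul_right hkmn
    have hk2 : 2 ≤ k := by
      have hk0 : k ≠ 0 := by
        rw [hkdef, ne_eq, Nn_eq_zero]; exact hπ.ne_zero
      omega
    obtain ⟨z', rfl⟩ := hπz
    have hNz' : Nn z' = (m / k) * n := by
      have h1 : k * Nn z' = m * n := by rw [← Nn_mul]; exact hN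
      have h2 : m = k * (m / k) := (Nat.mul_div_cancel' hkm).symm
      have hk0 : 0 < k := by omega
      rw [h2, mul_assoc] at h1
      exact Nat.eq_of_mul_eq_mul_left hk0 h1
    have hlt : m / k < m := Nat.div_lt_self (by omega) hk2
    have hco' : Nat.Coprime (m / k) n := Nat.Coprime.coprime_dvd_left (Nat.div_dvd_of_dvd hkm) hco
    obtain ⟨x', y', rfl, hx', hy'⟩ := ih (m / k) hlt n z' hco' hNz'
    refine ⟨π * x', y', (mul_assoc _ _ _).symm, ?_, hy'⟩
    rw [Nn_mul, hx', ← hkdef, Nat.mul_div_cancel' hkm]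

/-- uniqueness of coprime factorization up to units -/
lemma isCoprime_of_coprime_norm {x y : GaussianInt} (h : Nat.Coprime (Nn x) (Nn y))
    (hx0 : x ≠ 0) : IsCoprime x y := by
  refine isCoprime_of_prime_dvd (fun ⟨h1, _⟩ => hx0 h1) (fun π hπ hπx hπy => ?_)
  have h1 : Nn π ∣ Nn x := Nn_dvd hπx
  have h2 : Nn π ∣ Nn y := Nn_dvd hπy
  have h3 : Nn π ∣ 1 := h ▸ Nat.dvd_gcd h1 h2
  exact hπ.not_unit (Nn_eq_one.mp (Nat.eq_one_of_dvd_one h3))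

lemma unique_factor {m n : ℕ} (hmn : Nat.Coprime m n) {x y x' y' : GaussianInt}
    (hx : Nn x = m) (hy : Nn y = n) (hx' : Nn x' = m) (hy' : Nn y' = n)
    (hm : 0 < m) (hn : 0 < n)
    (h : Associated (x * y) (x' * y')) : Associated x x' ∧ Associated y y' := by
  have hx0 : x ≠ 0 := fun h0 => by simp [h0, Nn_eq_zero.mpr] at hx; omega
  have hx'0 : x' ≠ 0 := fun h0 => by simp [h0, Nn_eq_zero.mpr] at hx'; omega
  have hco1 : IsCoprime x' y := isCoprime_of_coprime_norm (by rw [hx', hy]; exact hmn) hx'0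
  have hco2 : IsCoprime x y' := isCoprime_of_coprime_norm (by rw [hx, hy']; exact hmn) hx0
  have hd1 : x' ∣ x * y := (dvd_mul_right x' y').trans h.symm.dvd
  have hd2 : x ∣ x' * y' := (dvd_mul_right x y).trans h.dvd
  have hxx' : Associated x x' :=
    associated_of_dvd_dvd (hco2.dvd_of_dvd_mul_right hd2) (hco1.dvd_of_dvd_mul_right hd1)
  exact ⟨hxx', h.of_mul_left hxx' hx0⟩

lemma eq_of_quad_assoc {x y : GaussianInt} (hx0 : x ≠ 0) (hQx : Q x) (hQy : Q y)
    (h : Associated x y) : x = y :=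
  (exists_unique_quad x hx0).unique ⟨hQx, Associated.refl x⟩ ⟨hQy, h⟩

lemma card_one_of_unique (n : ℕ) (z₀ : GaussianInt) (h₀ : Nn z₀ = n) (hn : 0 < n)
    (h : ∀ z : GaussianInt, Nn z = n → Associated z z₀) :
    Nat.card {z : GaussianInt // Nn z = n ∧ Q z} = 1 := by
  have hz₀ : z₀ ≠ 0 := fun h0 => by rw [h0, Nn_eq_zero.mpr rfl] at h₀; omega
  rw [Nat.card_eq_one_iff_unique]
  constructor
  · constructor
    intro ⟨z, hz, hQz⟩ ⟨z', hz', hQz'⟩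
    have hzne : z ≠ 0 := fun h0 => by rw [h0, Nn_eq_zero.mpr rfl] at hz; omega
    have hz'ne : z' ≠ 0 := fun h0 => by rw [h0, Nn_eq_zero.mpr rfl] at hz'; omega
    have : z = z' := eq_of_quad_assoc hzne hQz hQz' ((h z hz).trans (h z' hz').symm)
    exact Subtype.ext this
  · refine ⟨⟨quadRep z₀, ?_, (quadRep_spec hz₀).1⟩⟩
    rw [quadRep_Nn hz₀, h₀]

lemma r0_zero : r0 0 = 0 := by
  rw [card_eq]
  have : IsEmpty {z : GaussianInt // Nn z = 0 ∧ Q z} := by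
    constructor
    intro ⟨z, hz, hQz⟩
    rw [Nn_eq_zero] at hz
    subst hz
    exact absurd hQz.2 (by simp)
  exact Nat.card_of_isEmpty

lemma r0_one : r0 1 = 1 := by
  rw [card_eq]
  refine card_one_of_unique 1 ⟨0,1⟩ (by decide) one_pos (fun z hz => ?_)
  have h1 : IsUnit z := Nn_eq_one.mp hz
  have h2 : IsUnit (⟨0,1⟩ : GaussianInt) := isUnit_iff.mpr (by tauto)
  exact (associated_one_iff_isUnit.mpr h1).trans (associated_one_iff_isUnit.mpr h2).symm

lemma r0_mul {m n : ℕ} (hmn : Nat.Coprime m n) : r0 (m * n) = r0 m * r0 n := by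
  rcases Nat.eq_zero_or_pos m with rfl | hm
  · have : n = 1 := by simpa [Nat.coprime_zero_left] using hmn
    subst this
    simp [r0_zero, r0_one]
  rcases Nat.eq_zero_or_pos n with rfl | hn
  · have : m = 1 := by simpa [Nat.coprime_zero_right] using hmn
    subst this
    simp [r0_zero, r0_one]
  rw [card_eq, card_eq m, card_eq n, ← Nat.card_prod]
  apply Nat.card_congr
  symm
  have Nn_ne_zero : ∀ {w : GaussianInt} {k : ℕ}, Nn w = k → 0 < k → w ≠ 0 :=
    fun hw hk h0 => by rw [h0, Nn_eq_zero.mpr rfl] at hw; omega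
  refine Equiv.ofBijective
    (fun p => ⟨quadRep (p.1.1 * p.2.1), ?_, ?_⟩) ⟨?_, ?_⟩
  · have h1 : p.1.1 * p.2.1 ≠ 0 :=
      mul_ne_zero (Nn_ne_zero p.1.2.1 hm) (Nn_ne_zero p.2.2.1 hn)
    rw [quadRep_Nn h1, Nn_mul, p.1.2.1, p.2.2.1]
  · have h1 : p.1.1 * p.2.1 ≠ 0 :=
      mul_ne_zero (Nn_ne_zero p.1.2.1 hm) (Nn_ne_zero p.2.2.1 hn)
    exact (quadRep_spec h1).1
  · rintro ⟨⟨x, hx, hQx⟩, ⟨y, hy, hQy⟩⟩ ⟨⟨x', hx', hQx'⟩, ⟨y', hy', hQy'⟩⟩ heq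
    simp only [Subtype.mk.injEq] at heq
    have hx0 : x ≠ 0 := Nn_ne_zero hx hm
    have hy0 : y ≠ 0 := Nn_ne_zero hy hn
    have hx'0 : x' ≠ 0 := Nn_ne_zero hx' hm
    have hy'0 : y' ≠ 0 := Nn_ne_zero hy' hn
    have hxy0 : x * y ≠ 0 := mul_ne_zero hx0 hy0
    have hxy'0 : x' * y' ≠ 0 := mul_ne_zero hx'0 hy'0
    have hassoc : Associated (x * y) (x' * y') :=
      ((quadRep_spec hxy0).2.trans (heq ▸ (quadRep_spec hxy'0).2.symm))
    obtain ⟨h1, h2⟩ := unique_factor hmn hx hy hx' hy' hm hn hassoc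
    have : x = x' := eq_of_quad_assoc hx0 hQx hQx' h1
    have : y = y' := eq_of_quad_assoc hy0 hQy hQy' h2
    simp_all
  · rintro ⟨z, hz, hQz⟩
    have hz0 : z ≠ 0 := Nn_ne_zero hz (by positivity)
    obtain ⟨x, y, rfl, hx, hy⟩ := exists_factor m n z hmn hz
    have hx0 : x ≠ 0 := Nn_ne_zero hx hm
    have hy0 : y ≠ 0 := Nn_ne_zero hy hn
    refine ⟨⟨⟨quadRep x, by rw [quadRep_Nn hx0, hx], (quadRep_spec hx0).1⟩,
            ⟨quadRep y, by rw [quadRep_Nn hy0, hy], (quadRep_spec hy0).1⟩⟩, ?_⟩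
    have h1 : quadRep x * quadRep y ≠ 0 :=
      mul_ne_zero (fun h0 => hx0 (by rw [← Nn_eq_zero, ← quadRep_Nn hx0, h0]; rfl))
        (fun h0 => hy0 (by rw [← Nn_eq_zero, ← quadRep_Nn hy0, h0]; rfl))
    apply Subtype.ext
    dsimp only
    exact quadRep_eq h1 hQz
      ((quadRep_spec hx0).2.symm.mul_mul (quadRep_spec hy0).2.symm)

lemma Nn_pow (z : GaussianInt) (k : ℕ) : Nn (z ^ k) = Nn z ^ k := by
  induction k with
  | zero => simp [Nn_eq_one.mpr isUnit_one]
  | succ k ih => rw [pow_succ, pow_succ, Nn_mul, ih]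

lemma prime_of_Nn_prime {z : GaussianInt} (h : Nat.Prime (Nn z)) : Prime z := by
  have hirr : Irreducible z := by
    constructor
    · rw [← Nn_eq_one]; exact fun h1 => h.ne_one h1
    · intro a b hab
      have := Nn_mul a b
      rw [← hab] at this
      rcases (Nat.Prime.eq_one_or_self_of_dvd h (Nn a) ⟨Nn b, this⟩) with h1 | h1
      · exact Or.inl (Nn_eq_one.mp h1)
      · right
        rw [← Nn_eq_one]
        have hb := this
        rw [h1] at hb
        have : Nn z ≠ 0 := h.ne_zero
        have : 0 < Nn z := Nat.pos_of_ne_zero this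
        -- hb : Nn z = Nn z * Nn b
        nlinarith [hb]
  exact hirr.prime

/-- `1 + i` -/
def pi2 : GaussianInt := ⟨1, 1⟩

lemma Nn_pi2 : Nn pi2 = 2 := by decide

lemma prime_pi2 : Prime pi2 := prime_of_Nn_prime (by rw [Nn_pi2]; exact Nat.prime_two)

lemma pi2_dvd_of_two_dvd {z : GaussianInt} (h : 2 ∣ Nn z) : pi2 ∣ z := by
  have h2 : ((2 : ℕ) : ℤ) ∣ z.norm := by rw [← Nn_coe]; exact_mod_cast Int.natCast_dvd_natCast.mpr h
  obtain ⟨π, hπ, hπz, hπ2⟩ := exists_prime_dvd_of_dvd_norm (le_refl 2) h2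
  have h2fact : ((2 : ℕ) : GaussianInt) = pi2 * star pi2 := by decide
  rcases hπ.2.2 _ _ (h2fact ▸ hπ2) with h | h
  · exact (hπ.associated_of_dvd prime_pi2 h).symm.dvd.trans hπz
  · have := (hπ.associated_of_dvd (star_prime prime_pi2) h).symm.dvd.trans hπz
    -- star pi2 ∣ z; but star pi2 is associated to pi2
    have hassoc : Associated (star pi2) pi2 := by
      refine ⟨⟨⟨0,1⟩, ⟨0,-1⟩, by decide, by decide⟩, by decide⟩
    exact hassoc.symm.dvd.trans this

lemma assoc_pi2_pow : ∀ k : ℕ, ∀ z : GaussianInt, Nn z = 2 ^ k → Associated z (pi2 ^ k) := by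
  intro k
  induction k with
  | zero =>
    intro z hz
    simpa using associated_one_iff_isUnit.mpr (Nn_eq_one.mp (by simpa using hz))
  | succ k ih =>
    intro z hz
    have h2 : 2 ∣ Nn z := by rw [hz]; exact dvd_pow_self 2 (Nat.succ_ne_zero k)
    obtain ⟨w, rfl⟩ := pi2_dvd_of_two_dvd h2
    rw [Nn_mul, Nn_pi2] at hz
    have hw : Nn w = 2 ^ k := by
      have : (2 : ℕ) ^ (k + 1) = 2 * 2 ^ k := by ring
      omega
    exact Associated.mul_left pi2 (ih w hw) |>.trans (by rw [pow_succ, mul_comm])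

lemma r0_two_pow (k : ℕ) : r0 (2 ^ k) = 1 := by
  rw [card_eq]
  exact card_one_of_unique (2 ^ k) (pi2 ^ k) (by rw [Nn_pow, Nn_pi2]) (by positivity)
    (fun z hz => assoc_pi2_pow k z hz)

lemma natCast_dvd_of_dvd_norm {p : ℕ} (hpp : Prime (p : GaussianInt)) {z : GaussianInt}
    (h : p ∣ Nn z) : (p : GaussianInt) ∣ z := by
  have h2 : ((p : ℤ) : GaussianInt) ∣ (z.norm : GaussianInt) := by
    have : (p : ℤ) ∣ z.norm := by rw [← Nn_coe]; exact_mod_cast Int.natCast_dvd_natCast.mpr h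
    exact map_dvd (Int.castRingHom GaussianInt) this
  rw [Zsqrtd.norm_eq_mul_conj] at h2
  have h3 : (p : GaussianInt) ∣ z * star z := by exact_mod_cast h2
  rcases hpp.2.2 _ _ h3 with h4 | h4
  · exact h4
  · have := star_dvd_iff.mpr h4
    rwa [star_natCast, star_star] at this

lemma assoc_inert_pow (p : ℕ) (hp : p.Prime) (hpp : Prime (p : GaussianInt)) :
    ∀ k : ℕ, ∀ z : GaussianInt, Nn z = p ^ k →
      Even k ∧ Associated z ((p : GaussianInt) ^ (k / 2)) := by
  intro k
  induction k using Nat.strong_induction_on with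
  | _ k ih =>
    intro z hz
    rcases Nat.eq_zero_or_pos k with rfl | hk
    · exact ⟨Even.zero, by simpa using associated_one_iff_isUnit.mpr (Nn_eq_one.mp (by simpa using hz))⟩
    have hdvd : p ∣ Nn z := by rw [hz]; exact dvd_pow_self p (by omega)
    obtain ⟨w, rfl⟩ := natCast_dvd_of_dvd_norm hpp hdvd
    rw [Nn_mul, Nn_natCast] at hz
    have hp2 : 2 ≤ p := hp.two_le
    have hk2 : 2 ≤ k := by
      rcases Nat.lt_or_ge k 2 with h | h
      · interval_cases k
        -- p * p * Nn w = p ^ 1 : impossible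
        exfalso
        have hw0 : Nn w ≠ 0 := by
          intro h0; rw [h0] at hz; simp at hz; omega
        rw [pow_one] at hz
        nlinarith [Nat.one_le_iff_ne_zero.mpr hw0]
      · exact h
    have hw : Nn w = p ^ (k - 2) := by
      have hpk : p ^ k = p * p * p ^ (k - 2) := by
        rw [← pow_two, ← pow_add]
        congr 1
        omega
      rw [hpk] at hz
      have hpos : 0 < p * p := by positivity
      exact Nat.eq_of_mul_eq_mul_left hpos hz
    obtain ⟨hev, hassoc⟩ := ih (k - 2) (by omega) w hw
    refine ⟨?_, ?_⟩
    · rcases hev with ⟨j, hj⟩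
      exact ⟨j + 1, by omega⟩
    · have h1 : Associated ((p : GaussianInt) * w) ((p : GaussianInt) * (p : GaussianInt) ^ ((k-2)/2)) :=
        Associated.mul_left _ hassoc
      have h2 : (p : GaussianInt) * (p : GaussianInt) ^ ((k-2)/2) = (p : GaussianInt) ^ (k / 2) := by
        rw [← pow_succ']
        congr 1
        rcases hev with ⟨j, hj⟩
        omega
      rwa [h2] at h1

lemma r0_prime_pow_three (p : ℕ) (hp : p.Prime) (h3 : p % 4 = 3) (k : ℕ) :
    r0 (p ^ k) = if Even k then 1 else 0 := by
  haveI : Fact p.Prime := ⟨hp⟩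
  have hpp : Prime (p : GaussianInt) := GaussianInt.prime_of_nat_prime_of_mod_four_eq_three p h3
  by_cases hev : Even k
  · rw [if_pos hev, card_eq]
    refine card_one_of_unique _ ((p : GaussianInt) ^ (k / 2)) ?_ (pow_pos hp.pos k)
      (fun z hz => (assoc_inert_pow p hp hpp k z hz).2)
    rw [Nn_pow, Nn_natCast, ← pow_two, ← pow_mul]
    congr 1
    rcases hev with ⟨j, hj⟩
    omega
  · rw [if_neg hev, card_eq]
    have : IsEmpty {z : GaussianInt // Nn z = p ^ k ∧ Q z} := by
      constructor
      intro ⟨z, hz, hQz⟩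
      exact hev (assoc_inert_pow p hp hpp k z hz).1
    exact Nat.card_of_isEmpty

lemma natCast_dvd_mul_conj {p : ℕ} {z : GaussianInt} (h : p ∣ Nn z) :
    (p : GaussianInt) ∣ z * star z := by
  have h2 : ((p : ℤ) : GaussianInt) ∣ (z.norm : GaussianInt) := by
    have : (p : ℤ) ∣ z.norm := by rw [← Nn_coe]; exact_mod_cast Int.natCast_dvd_natCast.mpr h
    exact map_dvd (Int.castRingHom GaussianInt) this
  rw [Zsqrtd.norm_eq_mul_conj] at h2
  exact_mod_cast h2

lemma split_setup (p : ℕ) (hp : p.Prime) (h1 : p % 4 = 1) :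
    ∃ π : GaussianInt, Nn π = p ∧ Prime π ∧ ¬ Associated π (star π) ∧
      (p : GaussianInt) = π * star π := by
  haveI : Fact p.Prime := ⟨hp⟩
  obtain ⟨a, b, hab⟩ := Nat.Prime.sq_add_sq (p := p) (by omega)
  set π : GaussianInt := ⟨(a : ℤ), (b : ℤ)⟩ with hπdef
  have hnorm : π.norm = (p : ℤ) := by
    rw [Zsqrtd.norm_def, hπdef]
    push_cast [← hab]
    ring
  have hNn : Nn π = p := by
    rw [Nn, hnorm]; simp
  have hprime : Prime π := prime_of_Nn_prime (by rw [hNn]; exact hp)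
  have hmul : (p : GaussianInt) = π * star π := by
    have := Zsqrtd.norm_eq_mul_conj π
    rw [hnorm] at this
    exact_mod_cast this
  have hp5 : 5 ≤ p := by
    have := hp.two_le
    omega
  have ha0 : a ≠ 0 := by
    rintro rfl
    simp at hab
    -- b^2 = p
    have hbp : b ∣ p := ⟨b, by rw [← hab]; ring⟩
    rcases hp.eq_one_or_self_of_dvd b hbp with rfl | rfl
    · omega
    · nlinarith
  have hb0 : b ≠ 0 := by
    rintro rfl
    simp at hab
    have hbp : a ∣ p := ⟨a, by rw [← hab]; ring⟩
    rcases hp.eq_one_or_self_of_dvd a hbp with rfl | rfl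
    · omega
    · nlinarith
  have hanb : a ≠ b := by
    rintro rfl
    have h2 : 2 ∣ p := Dvd.intro (a*a) (by nlinarith [hab])
    omega
  have hna : ¬ Associated π (star π) := by
    rintro ⟨u, hu⟩
    have hu' := isUnit_iff.mp u.isUnit
    have hre : (star π).re = (a : ℤ) := by rw [hπdef]; simp [Zsqrtd.re_star]
    have him : (star π).im = -(b : ℤ) := by rw [hπdef]; simp [Zsqrtd.im_star]
    have ha1 : 1 ≤ (a : ℤ) := by exact_mod_cast Nat.one_le_iff_ne_zero.mpr ha0
    have hb1 : 1 ≤ (b : ℤ) := by exact_mod_cast Nat.one_le_iff_ne_zero.mpr hb0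
    have hab' : (a : ℤ) ≠ (b : ℤ) := by exact_mod_cast hanb
    have hπre : π.re = (a : ℤ) := rfl
    have hπim : π.im = (b : ℤ) := rfl
    rcases hu' with h | h | h | h <;> rw [h] at hu <;>
      (have h1 := congrArg Zsqrtd.re hu) <;>
      (have h2 := congrArg Zsqrtd.im hu) <;>
      (simp only [Zsqrtd.re_mul, Zsqrtd.im_mul, hre, him, Zsqrtd.re_one, Zsqrtd.im_one,
        Zsqrtd.re_neg, Zsqrtd.im_neg, mul_one, mul_zero, mul_neg, zero_add, add_zero,
        neg_neg, neg_zero] at h1 h2) <;>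
      omega
  exact ⟨π, hNn, hprime, hna, hmul⟩

lemma split_decomp {p : ℕ} (hp : 2 ≤ p) {π : GaussianInt} (hπ : Prime π)
    (hNn : Nn π = p) (hmul : (p : GaussianInt) = π * star π) :
    ∀ k : ℕ, ∀ z : GaussianInt, Nn z = p ^ k →
      ∃ i, i ≤ k ∧ Associated z (π ^ i * (star π) ^ (k - i)) := by
  intro k
  induction k with
  | zero =>
    intro z hz
    have hu : IsUnit z := Nn_eq_one.mp (by simpa using hz)
    exact ⟨0, le_refl 0, by simpa using associated_one_iff_isUnit.mpr hu⟩
  | succ k ih =>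
    intro z hz
    have hdvd : p ∣ Nn z := by rw [hz]; exact dvd_pow_self p (Nat.succ_ne_zero k)
    have h2 := natCast_dvd_mul_conj hdvd
    rw [hmul] at h2
    have hsπ : Prime (star π) := star_prime hπ
    have hcases : π ∣ z ∨ star π ∣ z := by
      have h3 : π ∣ z * star z := (dvd_mul_right π (star π)).trans h2
      rcases hπ.2.2 _ _ h3 with h | h
      · exact Or.inl h
      · right
        rw [← star_star z]
        exact star_dvd_iff.mpr h
    have hppos : 0 < p := by omega
    rcases hcases with ⟨w, rfl⟩ | ⟨w, rfl⟩
    · rw [Nn_mul, hNn, pow_succ'] at hz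
      have hw : Nn w = p ^ k := Nat.eq_of_mul_eq_mul_left hppos hz
      obtain ⟨i, hi, hassoc⟩ := ih w hw
      refine ⟨i + 1, by omega, ?_⟩
      have heq : π * (π ^ i * (star π) ^ (k - i)) = π ^ (i+1) * (star π) ^ (k + 1 - (i+1)) := by
        rw [show k + 1 - (i+1) = k - i from by omega]
        ring
      exact (Associated.mul_left π hassoc).trans (heq ▸ Associated.refl _)
    · rw [Nn_mul, Nn_star, hNn, pow_succ'] at hz
      have hw : Nn w = p ^ k := Nat.eq_of_mul_eq_mul_left hppos hz
      obtain ⟨i, hi, hassoc⟩ := ih w hw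
      refine ⟨i, by omega, ?_⟩
      have heq : star π * (π ^ i * (star π) ^ (k - i)) = π ^ i * (star π) ^ (k + 1 - i) := by
        rw [show k + 1 - i = (k - i) + 1 from by omega]
        ring
      exact (Associated.mul_left (star π) hassoc).trans (heq ▸ Associated.refl _)

lemma split_distinct {π : GaussianInt} (hπ : Prime π) (hna : ¬ Associated π (star π))
    {k : ℕ} : ∀ {i j : ℕ}, i ≤ k → j ≤ k →
    Associated (π ^ i * (star π) ^ (k - i)) (π ^ j * (star π) ^ (k - j)) → i = j := by
  have key : ∀ i j : ℕ, i ≤ k → j ≤ k → i < j →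
      ¬ Associated (π ^ i * (star π) ^ (k - i)) (π ^ j * (star π) ^ (k - j)) := by
    intro i j hik hjk hij hassoc
    have h1 : π ^ j ∣ π ^ i * (star π) ^ (k - i) :=
      (dvd_mul_right (π ^ j) ((star π) ^ (k - j))).trans hassoc.symm.dvd
    have h2 : π ^ i * π ^ (j - i) ∣ π ^ i * (star π) ^ (k - i) := by
      rwa [← pow_add, show i + (j - i) = j from by omega]
    have h3 : π ^ (j - i) ∣ (star π) ^ (k - i) :=
      (mul_dvd_mul_iff_left (pow_ne_zero i hπ.ne_zero)).mp h2
    have h4 : π ∣ (star π) ^ (k - i) :=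
      (dvd_pow_self π (by omega : j - i ≠ 0)).trans h3
    have h5 : π ∣ star π := hπ.dvd_of_dvd_pow h4
    exact hna (hπ.associated_of_dvd (star_prime hπ) h5)
  intro i j hik hjk hassoc
  rcases lt_trichotomy i j with h | h | h
  · exact absurd hassoc (key i j hik hjk h)
  · exact h
  · exact absurd hassoc.symm (key j i hjk hik h)

lemma r0_prime_pow_one (p : ℕ) (hp : p.Prime) (h1 : p % 4 = 1) (k : ℕ) :
    r0 (p ^ k) = k + 1 := by
  obtain ⟨π, hNn, hπ, hna, hmul⟩ := split_setup p hp h1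
  have hπ0 : π ≠ 0 := hπ.ne_zero
  have hsπ0 : star π ≠ 0 := by simpa using hπ0
  have hbase : ∀ i : ℕ, i ≤ k → Nn (π ^ i * (star π) ^ (k - i)) = p ^ k := by
    intro i hi
    rw [Nn_mul, Nn_pow, Nn_pow, Nn_star, hNn, ← pow_add,
      show i + (k - i) = k from by omega]
  have hb0 : ∀ i : ℕ, (π ^ i * (star π) ^ (k - i)) ≠ 0 :=
    fun i => mul_ne_zero (pow_ne_zero _ hπ0) (pow_ne_zero _ hsπ0)
  rw [card_eq]
  have e : Fin (k + 1) ≃ {z : GaussianInt // Nn z = p ^ k ∧ Q z} := by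
    refine Equiv.ofBijective (fun i =>
      ⟨quadRep (π ^ i.val * (star π) ^ (k - i.val)),
       by rw [quadRep_Nn (hb0 i.val)]; exact hbase i.val (by omega),
       (quadRep_spec (hb0 i.val)).1⟩) ⟨?_, ?_⟩
    · intro i j hij
      simp only [Subtype.mk.injEq] at hij
      have hassoc : Associated (π ^ i.val * (star π) ^ (k - i.val))
          (π ^ j.val * (star π) ^ (k - j.val)) :=
        (quadRep_spec (hb0 i.val)).2.trans (hij ▸ (quadRep_spec (hb0 j.val)).2.symm)
      exact Fin.ext (split_distinct hπ hna (by omega) (by omega) hassoc)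
    · rintro ⟨z, hz, hQz⟩
      obtain ⟨i, hi, hassoc⟩ := split_decomp hp.two_le hπ hNn hmul k z hz
      refine ⟨⟨i, by omega⟩, Subtype.ext ?_⟩
      exact quadRep_eq (hb0 i) hQz hassoc.symm
  rw [Nat.card_congr e.symm]
  simp


open ArithmeticFunction in
/-- `r0` as an integer-valued arithmetic function -/
noncomputable def F : ArithmeticFunction ℤ :=
  ⟨fun n => (r0 n : ℤ), by simp [r0_zero]⟩

open ArithmeticFunction in
lemma F_mult : F.IsMultiplicative := by
  constructor
  · show ((r0 1 : ℕ) : ℤ) = 1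
    rw [r0_one]; rfl
  · intro m n hmn
    show ((r0 (m * n) : ℕ) : ℤ) = (r0 m : ℤ) * (r0 n : ℤ)
    rw [r0_mul hmn]
    push_cast
    ring

open ArithmeticFunction ArithmeticFunction.zeta in
/-- the χ₄ divisor-sum arithmetic function -/
noncomputable def G : ArithmeticFunction ℤ :=
  ↑ζ * toArithmeticFunction (fun d => ZMod.χ₄ (d : ZMod 4))

open ArithmeticFunction in
lemma G_mult : G.IsMultiplicative :=
  isMultiplicative_zeta.natCast.mul
    (DirichletCharacter.isMultiplicative_toArithmeticFunction (ZMod.χ₄ : DirichletCharacter ℤ 4))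

open ArithmeticFunction in
lemma G_apply (n : ℕ) (hn : n ≠ 0) : G n = ∑ d ∈ n.divisors, ZMod.χ₄ (d : ZMod 4) := by
  rw [G, coe_zeta_mul_apply]
  apply Finset.sum_congr rfl
  intro d hd
  have hd0 : d ≠ 0 := Nat.pos_of_mem_divisors hd |>.ne'
  simp [toArithmeticFunction, hd0]

open ArithmeticFunction in
lemma G_prime_pow (p : ℕ) (hp : p.Prime) (k : ℕ) :
    G (p ^ k) = ∑ i ∈ Finset.range (k + 1), (ZMod.χ₄ (p : ZMod 4)) ^ i := by
  rw [G, coe_zeta_mul_apply, Nat.sum_divisors_prime_pow hp]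
  apply Finset.sum_congr rfl
  intro i _
  have hne : p ^ i ≠ 0 := pow_ne_zero i hp.ne_zero
  simp only [toArithmeticFunction, ArithmeticFunction.coe_mk, hne, if_false]
  push_cast
  rw [map_pow]

open ArithmeticFunction in
lemma F_eq_G : F = G := by
  rw [ArithmeticFunction.IsMultiplicative.eq_iff_eq_on_prime_powers F F_mult G G_mult]
  intro p k hp
  have hFval : F (p ^ k) = ((r0 (p ^ k) : ℕ) : ℤ) := rfl
  rw [hFval, G_prime_pow p hp k]
  rcases hp.eq_two_or_odd' with rfl | hodd
  · -- p = 2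
    rw [r0_two_pow k]
    have hχ : ZMod.χ₄ ((2 : ℕ) : ZMod 4) = 0 := by decide
    rw [hχ]
    simp [zero_geom_sum]
  · have h14 : p % 4 = 1 ∨ p % 4 = 3 := by
      rcases hodd with ⟨m, hm⟩
      omega
    rcases h14 with h1 | h3
    · rw [r0_prime_pow_one p hp h1 k, ZMod.χ₄_nat_one_mod_four h1]
      simp
    · rw [r0_prime_pow_three p hp h3 k, ZMod.χ₄_nat_three_mod_four h3, neg_one_geom_sum]
      rcases Nat.even_or_odd k with he | ho
      · rw [if_pos he, if_neg (by simpa [Nat.even_add_one] using he)]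
        rfl
      · rw [if_neg (by simpa using ho), if_pos (by simpa [Nat.even_add_one] using ho)]
        rfl

end R0Aux

theorem r0_eq_sum_chi4 (n : ℕ) (hn : 0 < n) :
    (r0 n : ℤ) = ∑ d ∈ n.divisors, ZMod.χ₄ (d : ZMod 4) := by
  have h1 : R0Aux.F n = R0Aux.G n := by rw [R0Aux.F_eq_G]
  have h2 : R0Aux.F n = ((r0 n : ℕ) : ℤ) := rfl
  rw [h2, R0Aux.G_apply n hn.ne'] at h1
  exact h1
end

section
/- There is an absolute constant C such that for all x ≥ 2, ∏_{p ≤ x, p ≡ 1 (mod 4)} (1 − 1/p)^{-1} ≤ C (log x)^{1/2}. -/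
open Real

-- norm_lt_one for real MonoidWithZeroHom
lemma my_norm_lt_one {f : ℕ →*₀ ℝ} (h : Summable fun n => ‖f n‖) {p : ℕ} (hp : 1 < p) :
    ‖f p‖ < 1 :=
  Summable.norm_lt_one (f := f.toMonoidHom) h.of_norm hp

noncomputable def toC (f : ℕ →*₀ ℝ) : ℕ →*₀ ℂ :=
  (Complex.ofRealHom : ℝ →+* ℂ).toMonoidWithZeroHom.comp f

lemma toC_apply (f : ℕ →*₀ ℝ) (n : ℕ) : toC f n = (f n : ℂ) := rfl

lemma summable_neg_log_one_sub (f : ℕ →*₀ ℝ) (h : Summable fun n => ‖f n‖) :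
    Summable (fun p : Nat.Primes => -Real.log (1 - f p)) := by
  have hF : Summable fun n => (f n : ℂ) := by
    rw [Complex.summable_ofReal]; exact h.of_norm
  have := (hF.clog_one_sub.subtype {p | p.Prime}).neg
  have heq : ∀ p : Nat.Primes, -Complex.log (1 - (f p : ℂ)) = ((-Real.log (1 - f p) : ℝ) : ℂ) := by
    intro p
    have h1 : (0:ℝ) ≤ 1 - f p := by
      have := my_norm_lt_one h p.prop.one_lt
      have := abs_le.mp this.le
      simp only [Real.norm_eq_abs] at *
      linarith [(abs_le.mp (my_norm_lt_one h p.prop.one_lt).le).2]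
    push_cast
    rw [← Complex.ofReal_one, ← Complex.ofReal_sub, Complex.ofReal_log h1]
  have h2 : Summable fun p : Nat.Primes => ((-Real.log (1 - f p) : ℝ) : ℂ) := by
    exact Summable.congr (f := fun p : Nat.Primes => -Complex.log (1 - (f p : ℂ))) this heq
  exact Complex.summable_ofReal.mp h2

lemma rexp_tsum_primes (f : ℕ →*₀ ℝ) (h : Summable fun n => ‖f n‖) :
    Real.exp (∑' p : Nat.Primes, -Real.log (1 - f p)) = ∑' n, f n := by
  have hF : Summable fun n => ‖toC f n‖ := by
    simpa only [toC_apply, Complex.norm_real] using h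
  have key := EulerProduct.exp_tsum_primes_log_eq_tsum (f := toC f) hF
  have heq : ∀ p : Nat.Primes, -Complex.log (1 - toC f p) = ((-Real.log (1 - f p) : ℝ) : ℂ) := by
    intro p
    have h1 : (0:ℝ) ≤ 1 - f p := by
      linarith [(abs_le.mp (my_norm_lt_one h p.prop.one_lt).le).2]
    rw [toC_apply]
    push_cast
    rw [← Complex.ofReal_one, ← Complex.ofReal_sub, Complex.ofReal_log h1]
  rw [tsum_congr heq, ← Complex.ofReal_tsum, ← Complex.ofReal_exp] at key
  have hR : ((∑' n, f n : ℝ) : ℂ) = ∑' n, toC f n := Complex.ofReal_tsum _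
  rw [← hR] at key
  exact_mod_cast key

noncomputable def zf (s : ℝ) (hs : 1 < s) : ℕ →*₀ ℝ where
  toFun n := (n : ℝ) ^ (-s)
  map_zero' := by
    simp only [Nat.cast_zero]
    exact Real.zero_rpow (by linarith)
  map_one' := by simp
  map_mul' m n := by
    push_cast
    exact Real.mul_rpow (Nat.cast_nonneg m) (Nat.cast_nonneg n)

lemma zf_apply (s : ℝ) (hs : 1 < s) (n : ℕ) : zf s hs n = (n : ℝ) ^ (-s) := rfl

lemma zf_summable (s : ℝ) (hs : 1 < s) : Summable fun n => ‖zf s hs n‖ := by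
  simp only [zf_apply, Real.norm_eq_abs]
  have : Summable fun n : ℕ => (n : ℝ) ^ (-s) := Real.summable_nat_rpow.mpr (by linarith)
  refine this.congr fun n => ?_
  rw [abs_of_nonneg (Real.rpow_nonneg (Nat.cast_nonneg n) _)]

-- χ₄ weighted
noncomputable def cf (s : ℝ) (hs : 1 < s) : ℕ →*₀ ℝ where
  toFun n := ((ZMod.χ₄ (n : ZMod 4) : ℤ) : ℝ) * (n : ℝ) ^ (-s)
  map_zero' := by
    simp only [Nat.cast_zero]
    rw [Real.zero_rpow (by linarith), mul_zero]
  map_one' := by simp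
  map_mul' m n := by
    push_cast
    rw [map_mul]
    push_cast
    rw [Real.mul_rpow (Nat.cast_nonneg m) (Nat.cast_nonneg n)]
    ring

lemma cf_apply (s : ℝ) (hs : 1 < s) (n : ℕ) :
    cf s hs n = ((ZMod.χ₄ (n : ZMod 4) : ℤ) : ℝ) * (n : ℝ) ^ (-s) := rfl

lemma cf_eq_if (s : ℝ) (hs : 1 < s) (n : ℕ) :
    cf s hs n = if n % 2 = 0 then 0 else if n % 4 = 1 then (n : ℝ) ^ (-s)
      else -((n : ℝ) ^ (-s)) := by
  rw [cf_apply, ZMod.χ₄_nat_eq_if_mod_four]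
  split_ifs <;> push_cast <;> ring

lemma cf_summable (s : ℝ) (hs : 1 < s) : Summable fun n => ‖cf s hs n‖ := by
  refine Summable.of_nonneg_of_le (fun n => norm_nonneg _) (fun n => ?_) (zf_summable s hs).of_norm
  rw [cf_eq_if]
  split_ifs <;> simp [abs_of_nonneg (Real.rpow_nonneg (Nat.cast_nonneg n) (-s)),
    Real.rpow_nonneg (Nat.cast_nonneg n) (-s), zf_apply]

lemma zsum_le (s : ℝ) (hs : 1 < s) :
    (∑' n : ℕ, (n : ℝ) ^ (-s)) ≤ s / (s - 1) := by
  have hsum : Summable fun n : ℕ => (n : ℝ) ^ (-s) := Real.summable_nat_rpow.mpr (by linarith)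
  have h0 : ((0:ℕ) : ℝ) ^ (-s) = 0 := by
    simp only [Nat.cast_zero]; exact Real.zero_rpow (by linarith)
  rw [Summable.tsum_eq_zero_add hsum, h0, zero_add]
  have heq : ∀ n : ℕ, ((n + 1 : ℕ) : ℝ) ^ (-s) = 1 / ((n : ℝ) + 1) ^ s := by
    intro n
    push_cast
    rw [Real.rpow_neg (by positivity), one_div]
  rw [tsum_congr heq]
  have key := ZetaAsymptotics.term_tsum_of_lt hs
  have hnn : 0 ≤ ZetaAsymptotics.termTSum s :=
    tsum_nonneg fun n => ZetaAsymptotics.term_nonneg _ _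
  rw [key] at hnn
  have hspos : (0:ℝ) < s := by linarith
  have hs1 : (0:ℝ) < s - 1 := by linarith
  rw [sub_nonneg] at hnn
  rw [one_div, inv_mul_le_iff₀ hspos] at hnn
  calc (∑' n : ℕ, 1 / ((n : ℝ) + 1) ^ s) ≤ s * (1 / (s-1)) := hnn
    _ = s / (s - 1) := by ring

lemma cf_eq_if' (s : ℝ) (hs : 1 < s) (n : ℕ) :
    cf s hs n = if n % 2 = 0 then 0 else if n % 4 = 1 then (n : ℝ) ^ (-s)
      else -((n : ℝ) ^ (-s)) := cf_eq_if s hs n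

lemma partial_le_one (s : ℝ) (hs : 1 < s) (K : ℕ) :
    ∑ n ∈ Finset.range (4 * K + 2), cf s hs n ≤ 1 := by
  induction K with
  | zero =>
    norm_num [Finset.sum_range_succ]
  | succ K ih =>
    have hexp : 4 * (K + 1) + 2 = (4 * K + 2) + 1 + 1 + 1 + 1 := by ring
    rw [hexp, Finset.sum_range_succ, Finset.sum_range_succ, Finset.sum_range_succ,
      Finset.sum_range_succ]
    have h1 : cf s hs (4 * K + 2) = 0 := by
      rw [cf_eq_if]; simp [show (4*K+2) % 2 = 0 by omega]
    have h2 : cf s hs (4 * K + 2 + 1) = -(((4*K+3 : ℕ) : ℝ) ^ (-s)) := by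
      rw [show 4*K+2+1 = 4*K+3 by ring, cf_eq_if]
      rw [if_neg (by omega), if_neg (by omega)]
    have h3 : cf s hs (4 * K + 2 + 1 + 1) = 0 := by
      rw [show 4*K+2+1+1 = 4*K+4 by ring, cf_eq_if]; rw [if_pos (by omega)]
    have h4 : cf s hs (4 * K + 2 + 1 + 1 + 1) = ((4*K+5 : ℕ) : ℝ) ^ (-s) := by
      rw [show 4*K+2+1+1+1 = 4*K+5 by ring, cf_eq_if]
      rw [if_neg (by omega), if_pos (by omega)]
    rw [h1, h2, h3, h4]
    have hle : ((4*K+5 : ℕ) : ℝ) ^ (-s) ≤ ((4*K+3 : ℕ) : ℝ) ^ (-s) := by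
      apply Real.rpow_le_rpow_of_nonpos (by positivity) (by push_cast; linarith) (by linarith)
    linarith

open Filter in
lemma cf_tsum_le_one (s : ℝ) (hs : 1 < s) :
    (∑' n : ℕ, cf s hs n) ≤ 1 := by
  have hsum : Summable fun n => cf s hs n := (cf_summable s hs).of_norm
  have hten := hsum.hasSum.tendsto_sum_nat
  have hmono : Tendsto (fun K : ℕ => 4 * K + 2) atTop atTop :=
    (strictMono_nat_of_lt_succ (by intro n; omega)).tendsto_atTop
  have := hten.comp hmono
  exact le_of_tendsto this (Filter.Eventually.of_forall fun K => partial_le_one s hs K)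

lemma mertens_lite (N : ℕ) (hN : 1 ≤ N) :
    ∑ p ∈ (Finset.range (N+1)).filter Nat.Prime, Real.log p / p
      ≤ Real.log N + Real.log 4 := by
  classical
  set P := (Finset.range (N+1)).filter Nat.Prime with hP
  have hmem : ∀ p ∈ P, p.Prime ∧ p ≤ N := by
    intro p hp
    rw [hP, Finset.mem_filter, Finset.mem_range] at hp
    exact ⟨hp.2, by omega⟩
  -- divisibility
  have hdvd : ∀ p ∈ P, p ^ (N / p) ∣ (Nat.factorial N) := by
    intro p hp
    obtain ⟨hpr, hpN⟩ := hmem p hp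
    rw [Nat.Prime.pow_dvd_factorial_iff hpr (Nat.lt_succ_self _)]
    have h1 : (1:ℕ) ∈ Finset.Ico 1 (Nat.log p N + 1) := by
      rw [Finset.mem_Ico]
      exact ⟨le_refl _, by
        have := Nat.log_pos hpr.one_lt hpN
        omega⟩
    have := Finset.single_le_sum (f := fun i => N / p ^ i) (fun i _ => Nat.zero_le _) h1
    simpa using this
  have hMne : (∏ p ∈ P, p ^ (N / p)) ≠ 0 :=
    Finset.prod_ne_zero_iff.mpr fun p hp => pow_ne_zero _ (hmem p hp).1.pos.ne'
  have hfacne : Nat.factorial N ≠ 0 := (Nat.factorial_pos N).ne'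
  have hMdvd : (∏ p ∈ P, p ^ (N / p)) ∣ (Nat.factorial N) := by
    rw [← Nat.factorization_le_iff_dvd hMne hfacne, Finsupp.le_def]
    intro q
    rw [Nat.factorization_prod (fun p hp => pow_ne_zero _ (hmem p hp).1.pos.ne')]
    rw [Finsupp.finset_sum_apply]
    have heval : ∀ p ∈ P, ((p ^ (N / p)).factorization) q
        = if p = q then N / p else 0 := by
      intro p hp
      rw [(hmem p hp).1.factorization_pow, Finsupp.single_apply]
    rw [Finset.sum_congr rfl heval, Finset.sum_ite_eq' P q (fun p => N / p)]
    split_ifs with hqP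
    · exact (Nat.Prime.pow_dvd_iff_le_factorization (hmem q hqP).1 hfacne).mp (hdvd q hqP)
    · exact Nat.zero_le _
  have hMle : (∏ p ∈ P, p ^ (N / p)) ≤ (Nat.factorial N) := Nat.le_of_dvd (Nat.factorial_pos N) hMdvd
  have hfact : ((Nat.factorial N) : ℝ) ≤ (N:ℝ) ^ N := by
    exact_mod_cast Nat.factorial_le_pow N
  -- log M
  have hppos : ∀ p ∈ P, (0:ℝ) < p := fun p hp => by
    exact_mod_cast (hmem p hp).1.pos
  have hlogM : Real.log (∏ p ∈ P, (p:ℝ) ^ (N / p)) = ∑ p ∈ P, (N / p : ℕ) * Real.log p := by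
    rw [Real.log_prod (fun p hp => by have := hppos p hp; positivity)]
    exact Finset.sum_congr rfl fun p hp => Real.log_pow _ _
  have hMle' : Real.log (∏ p ∈ P, (p:ℝ) ^ (N / p)) ≤ (N:ℝ) * Real.log N := by
    calc Real.log (∏ p ∈ P, (p:ℝ) ^ (N / p)) ≤ Real.log ((N:ℝ) ^ N) := by
          apply Real.log_le_log (Finset.prod_pos fun p hp => by
            have := hppos p hp; positivity)
          calc (∏ p ∈ P, (p:ℝ) ^ (N / p)) = ((∏ p ∈ P, p ^ (N / p) : ℕ) : ℝ) := by push_cast; rfl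
            _ ≤ ((Nat.factorial N) : ℝ) := by exact_mod_cast hMle
            _ ≤ (N:ℝ) ^ N := hfact
      _ = (N:ℝ) * Real.log N := by rw [Real.log_pow]
  -- theta bound
  have htheta : ∑ p ∈ P, Real.log p ≤ (N:ℝ) * Real.log 4 := by
    have h1 : Real.log (primorial N : ℝ) ≤ Real.log ((4:ℝ) ^ N) := by
      apply Real.log_le_log (by exact_mod_cast primorial_pos N)
      exact_mod_cast primorial_le_4_pow N
    rw [Real.log_pow] at h1
    have h2 : Real.log (primorial N : ℝ) = ∑ p ∈ P, Real.log p := by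
      rw [primorial]
      push_cast
      rw [Real.log_prod (fun p hp => by
        have := hppos p hp
        positivity)]
    rw [h2] at h1
    exact h1
  -- floor comparison
  have hfloor : ∀ p ∈ P, ((N:ℝ) / p - 1) * Real.log p ≤ (N / p : ℕ) * Real.log p := by
    intro p hp
    obtain ⟨hpr, _⟩ := hmem p hp
    have hlp : (0:ℝ) ≤ Real.log p := Real.log_nonneg (by exact_mod_cast hpr.one_le)
    apply mul_le_mul_of_nonneg_right _ hlp
    have hmod := Nat.div_add_mod N p
    have hlt : (N:ℝ) < p * (N / p : ℕ) + p := by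
      have : N % p < p := Nat.mod_lt _ hpr.pos
      have : (N:ℝ) = p * (N / p : ℕ) + (N % p : ℕ) := by exact_mod_cast hmod.symm
      rw [this]
      have : ((N % p : ℕ) : ℝ) < p := by exact_mod_cast Nat.mod_lt _ hpr.pos
      linarith
    have hp0 : (0:ℝ) < p := hppos p hp
    rw [div_sub_one (ne_of_gt hp0), div_le_iff₀ hp0]
    ring_nf
    ring_nf at hlt
    linarith
  have hsum : ∑ p ∈ P, ((N:ℝ) / p - 1) * Real.log p ≤ (N:ℝ) * Real.log N := by
    calc ∑ p ∈ P, ((N:ℝ) / p - 1) * Real.log p ≤ ∑ p ∈ P, ((N / p : ℕ) : ℝ) * Real.log p :=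
          Finset.sum_le_sum hfloor
      _ = Real.log (∏ p ∈ P, (p:ℝ) ^ (N / p)) := hlogM.symm
      _ ≤ (N:ℝ) * Real.log N := hMle'
  have hexpand : ∑ p ∈ P, ((N:ℝ) / p - 1) * Real.log p
      = (N:ℝ) * ∑ p ∈ P, Real.log p / p - ∑ p ∈ P, Real.log p := by
    rw [Finset.mul_sum, ← Finset.sum_sub_distrib]
    apply Finset.sum_congr rfl
    intro p hp
    have hp0 : (0:ℝ) < p := hppos p hp
    field_simp
  have hNpos : (0:ℝ) < N := by exact_mod_cast hN
  rw [hexpand] at hsum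
  have := sub_le_iff_le_add.mp hsum
  have h4 : (N:ℝ) * ∑ p ∈ P, Real.log p / p ≤ (N:ℝ) * Real.log N + (N:ℝ) * Real.log 4 := by
    calc (N:ℝ) * ∑ p ∈ P, Real.log p / p ≤ (N:ℝ) * Real.log N + ∑ p ∈ P, Real.log p := this
      _ ≤ (N:ℝ) * Real.log N + (N:ℝ) * Real.log 4 := by linarith [htheta]
  have := (mul_le_mul_iff_right₀ hNpos).mp (by linarith [h4] : (N:ℝ) * ∑ p ∈ P, Real.log p / p ≤ (N:ℝ) * (Real.log N + Real.log 4))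
  exact this

lemma inv_sq_sum_le (N : ℕ) : ∑ n ∈ Finset.Icc 2 N, 1/(n:ℝ)^2 ≤ 1 := by
  have key : ∀ M : ℕ, 1 ≤ M → ∑ n ∈ Finset.Icc 2 M, 1/(n:ℝ)^2 ≤ 1 - 1/(M:ℝ) := by
    intro M hM
    induction M with
    | zero => omega
    | succ M ih =>
      rcases Nat.eq_or_lt_of_le hM with h1 | h1
      · simp [← h1]
      · have hM1 : 1 ≤ M := by omega
        have hIcc : Finset.Icc 2 (M+1) = insert (M+1) (Finset.Icc 2 M) := by
          rw [← Finset.insert_Icc_right_eq_Icc_add_one (by omega)]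
        rw [hIcc, Finset.sum_insert (by simp)]
        have hMpos : (0:ℝ) < M := by exact_mod_cast hM1
        have h2 : 1/((M:ℝ)+1)^2 ≤ 1/(M:ℝ) - 1/((M:ℝ)+1) := by
          rw [div_sub_div _ _ (ne_of_gt hMpos) (by positivity)]
          rw [div_le_div_iff₀ (by positivity) (by positivity)]
          ring_nf
          nlinarith [hMpos]
        have := ih hM1
        push_cast
        push_cast at this h2
        linarith
  rcases Nat.lt_or_ge N 2 with h | h
  · rw [Finset.Icc_eq_empty (by omega)]; norm_num
  · have := key N (by omega)
    have hNpos : (0:ℝ) < N := by positivity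
    have : 1/(N:ℝ) ≥ 0 := by positivity
    linarith [key N (by omega)]

set_option maxHeartbeats 1000000 in
theorem mertens_one_mod_four :
    ∃ C : ℝ, ∀ x : ℝ, 2 ≤ x →
      ∏ p ∈ (Finset.Icc 1 ⌊x⌋₊).filter (fun p => p.Prime ∧ p % 4 = 1),
        (1 - 1 / (p : ℝ))⁻¹ ≤ C * Real.log x ^ (1 / 2 : ℝ) := by
  refine ⟨Real.exp 6, fun x hx => ?_⟩
  have hlog2 : (0:ℝ) < Real.log 2 := Real.log_pos (by norm_num)
  have hlog2' : (1:ℝ)/2 < Real.log 2 := by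
    have := Real.log_two_gt_d9; linarith
  have hlogx2 : Real.log 2 ≤ Real.log x := Real.log_le_log (by norm_num) hx
  have hlx : (0:ℝ) < Real.log x := lt_of_lt_of_le hlog2 hlogx2
  set s : ℝ := 1 + 1 / Real.log x with hsdef
  have hs : 1 < s := by
    have := one_div_pos.mpr hlx; rw [hsdef]; linarith
  have hs1 : s - 1 = 1 / Real.log x := by rw [hsdef]; ring
  set N := ⌊x⌋₊ with hNdef
  have hN2 : 2 ≤ N := Nat.le_floor (by exact_mod_cast hx)
  set S := (Finset.Icc 1 N).filter (fun p => p.Prime ∧ p % 4 = 1) with hSdef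
  have hSmem : ∀ p ∈ S, p.Prime ∧ p ≤ N ∧ p % 4 = 1 := by
    intro p hp
    rw [hSdef, Finset.mem_filter, Finset.mem_Icc] at hp
    exact ⟨hp.2.1, hp.1.2, hp.2.2⟩
  have hp2 : ∀ p ∈ S, 2 ≤ p := fun p hp => (hSmem p hp).1.two_le
  have hppos : ∀ p ∈ S, (0:ℝ) < p := fun p hp => by
    have := hp2 p hp; positivity
  have hhalf : ∀ p ∈ S, 1/(p:ℝ) ≤ 1/2 := by
    intro p hp
    have h2 : (2:ℝ) ≤ p := by exact_mod_cast hp2 p hp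
    exact one_div_le_one_div_of_le (by norm_num) h2
  have hfacpos : ∀ p ∈ S, (0:ℝ) < (1 - 1/(p:ℝ))⁻¹ := by
    intro p hp
    have := hhalf p hp
    have : (0:ℝ) < 1 - 1/(p:ℝ) := by linarith
    positivity
  have hprodpos : 0 < ∏ p ∈ S, (1 - 1/(p:ℝ))⁻¹ := Finset.prod_pos hfacpos
  -- reduce to log bound
  suffices hlogP : Real.log (∏ p ∈ S, (1 - 1/(p:ℝ))⁻¹)
      ≤ 6 + Real.log (Real.log x) * (1/2) by
    have h1 := Real.exp_le_exp.mpr hlogP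
    rw [Real.exp_log hprodpos] at h1
    calc ∏ p ∈ S, (1 - 1/(p:ℝ))⁻¹ ≤ Real.exp (6 + Real.log (Real.log x) * (1/2)) := h1
      _ = Real.exp 6 * Real.log x ^ (1/2 : ℝ) := by
          rw [Real.exp_add, Real.rpow_def_of_pos hlx]
  -- log of product
  have hlogprod : Real.log (∏ p ∈ S, (1-1/(p:ℝ))⁻¹) = ∑ p ∈ S, -Real.log (1 - 1/(p:ℝ)) := by
    rw [Real.log_prod (fun p hp => (hfacpos p hp).ne')]
    exact Finset.sum_congr rfl fun p hp => Real.log_inv _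
  -- termwise bound by 1/p + 2/p^2
  have hterm : ∀ p ∈ S, -Real.log (1 - 1/(p:ℝ)) ≤ 1/(p:ℝ) + 2 * (1/(p:ℝ)^2) := by
    intro p hp
    have ht : 1/(p:ℝ) ≤ 1/2 := hhalf p hp
    have htpos : 0 < 1/(p:ℝ) := by have := hppos p hp; positivity
    set t := 1/(p:ℝ)
    have h1t : (0:ℝ) < 1 - t := by linarith
    have hlog := Real.log_le_sub_one_of_pos (show (0:ℝ) < (1-t)⁻¹ by positivity)
    rw [Real.log_inv] at hlog
    have hinv : (1-t)⁻¹ - 1 = t / (1-t) := by field_simp; ring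
    rw [hinv] at hlog
    have hfrac : t / (1-t) ≤ t + 2 * t^2 := by
      rw [div_le_iff₀ h1t]
      nlinarith
    have ht2 : t^2 = 1/(p:ℝ)^2 := by
      show (1/(p:ℝ))^2 = _
      rw [div_pow, one_pow]
    linarith [ht2.symm.le, ht2.le]
  -- sum of 1/p^2
  have hsub2 : S ⊆ Finset.Icc 2 N := by
    intro p hp
    rw [Finset.mem_Icc]
    exact ⟨hp2 p hp, (hSmem p hp).2.1⟩
  have hsq : ∑ p ∈ S, 1/(p:ℝ)^2 ≤ 1 := by
    refine le_trans (Finset.sum_le_sum_of_subset_of_nonneg hsub2 ?_) (inv_sq_sum_le N)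
    intro n hn _
    positivity
  -- step: 1/p ≤ p^{-s} + (s-1) log p / p
  have hstep5 : ∀ p ∈ S, 1/(p:ℝ) ≤ (p:ℝ)^(-s) + (s-1) * (Real.log p / p) := by
    intro p hp
    have hp0 : (0:ℝ) < p := hppos p hp
    have hexp : (p:ℝ)^(-(s-1)) = Real.exp (-((s-1) * Real.log p)) := by
      rw [Real.rpow_def_of_pos hp0]; ring_nf
    have hexpge : 1 - (s-1) * Real.log p ≤ (p:ℝ)^(-(s-1)) := by
      rw [hexp]
      have := Real.add_one_le_exp (-((s-1) * Real.log p))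
      linarith
    have hsplit : (p:ℝ)^(-s) = 1/(p:ℝ) * (p:ℝ)^(-(s-1)) := by
      rw [one_div, ← Real.rpow_neg_one (p:ℝ), ← Real.rpow_add hp0]
      congr 1
      ring
    rw [hsplit]
    have h1 : 1/(p:ℝ) * (1 - (s-1) * Real.log p) ≤ 1/(p:ℝ) * (p:ℝ)^(-(s-1)) :=
      mul_le_mul_of_nonneg_left hexpge (by positivity)
    have h2 : 1/(p:ℝ) * (1 - (s-1) * Real.log p) = 1/(p:ℝ) - (s-1) * (Real.log p / p) := by
      ring
    linarith [h1, h2.symm.le]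
  -- mertens lite
  have hml : ∑ p ∈ S, Real.log p / p ≤ Real.log N + Real.log 4 := by
    refine le_trans (Finset.sum_le_sum_of_subset_of_nonneg ?_ ?_) (mertens_lite N (by omega))
    · intro p hp
      rw [Finset.mem_filter, Finset.mem_range]
      exact ⟨by have := (hSmem p hp).2.1; omega, (hSmem p hp).1⟩
    · intro p hp _
      rw [Finset.mem_filter, Finset.mem_range] at hp
      have h1 : (1:ℝ) ≤ p := by exact_mod_cast hp.2.one_le
      have := Real.log_nonneg h1
      positivity
  have hNlex : Real.log N ≤ Real.log x := by
    apply Real.log_le_log (by exact_mod_cast Nat.lt_of_lt_of_le Nat.zero_lt_two hN2)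
    exact Nat.floor_le (by linarith)
  have hc1 : (s-1) * (Real.log N + Real.log 4) ≤ 3 := by
    rw [hs1]
    have hlog4 : Real.log 4 = 2 * Real.log 2 := by
      rw [show (4:ℝ) = 2^2 by norm_num, Real.log_pow]; push_cast; ring
    have h1 : 1/Real.log x * Real.log N ≤ 1 := by
      rw [div_mul_eq_mul_div, one_mul, div_le_one hlx]
      exact hNlex
    have h2 : 1/Real.log x * Real.log 4 ≤ 2 := by
      rw [hlog4]
      rw [div_mul_eq_mul_div, one_mul, div_le_iff₀ hlx]
      nlinarith [hlogx2, hlog2]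
    calc 1/Real.log x * (Real.log N + Real.log 4)
        = 1/Real.log x * Real.log N + 1/Real.log x * Real.log 4 := by ring
      _ ≤ 1 + 2 := add_le_add h1 h2
      _ = 3 := by norm_num
  -- tsum comparisons
  have hsm1 : -s < -1 := by linarith
  have hZPsum : Summable (fun p : Nat.Primes => (p:ℝ)^(-s)) :=
    Nat.Primes.summable_rpow.mpr hsm1
  have hrpnonneg : ∀ p : Nat.Primes, (0:ℝ) ≤ (p:ℝ)^(-s) := fun p =>
    Real.rpow_nonneg (by positivity) _
  have hrplt1 : ∀ p : Nat.Primes, (p:ℝ)^(-s) < 1 := by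
    intro p
    have h1 : (1:ℝ) < p := by exact_mod_cast p.prop.one_lt
    exact Real.rpow_lt_one_of_one_lt_of_neg h1 (by linarith)
  have hcfabs : ∀ p : Nat.Primes, |cf s hs p| ≤ (p:ℝ)^(-s) := by
    intro p
    rw [cf_eq_if]
    split_ifs <;> simp [abs_of_nonneg (hrpnonneg p), hrpnonneg p]
  have hcfsub : Summable (fun p : Nat.Primes => cf s hs p) := by
    apply Summable.of_norm
    exact Summable.of_nonneg_of_le (fun p => norm_nonneg _)
      (fun p => by rw [Real.norm_eq_abs]; exact hcfabs p) hZPsum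
  -- the indicator function
  set h : ℕ → ℝ := fun n => if n.Prime ∧ n % 4 = 1 then (n:ℝ)^(-s) else 0 with hhdef
  have hhnonneg : ∀ n, 0 ≤ h n := by
    intro n
    rw [hhdef]
    dsimp only
    split_ifs
    · exact Real.rpow_nonneg (by positivity) _
    · exact le_refl 0
  have hhsummable : Summable h := by
    refine Summable.of_nonneg_of_le hhnonneg (fun n => ?_) (Real.summable_nat_rpow.mpr hsm1)
    rw [hhdef]
    dsimp only
    split_ifs
    · exact le_refl _
    · exact Real.rpow_nonneg (by positivity) _
  have hfin : ∑ p ∈ S, (p:ℝ)^(-s) ≤ ∑' n, h n := by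
    have heq : ∑ p ∈ S, (p:ℝ)^(-s) = ∑ p ∈ S, h p := Finset.sum_congr rfl (fun p hp => by
      rw [hhdef]
      dsimp only
      rw [if_pos ⟨(hSmem p hp).1, (hSmem p hp).2.2⟩])
    rw [heq]
    exact Summable.sum_le_tsum S (fun n _ => hhnonneg n) hhsummable
  have hsupport : Function.support h ⊆ {p | p.Prime} := by
    intro n hn
    rw [Function.mem_support, hhdef] at hn
    dsimp only at hn
    by_contra hnp
    simp only [Set.mem_setOf_eq] at hnp
    rw [if_neg (fun hc => hnp hc.1)] at hn
    exact hn rfl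
  have hsubtype : ∑' n, h n = ∑' p : Nat.Primes, h p :=
    (tsum_subtype_eq_of_support_subset hsupport).symm
  have hhp : ∀ p : Nat.Primes, h p ≤ 1/2 * ((p:ℝ)^(-s) + cf s hs p) := by
    intro p
    rw [hhdef]
    dsimp only
    by_cases hc : (p:ℕ) % 4 = 1
    · rw [if_pos ⟨p.prop, hc⟩, cf_eq_if, if_neg (by omega), if_pos hc]
      ring_nf
      exact le_refl _
    · rw [if_neg (fun hc2 => hc hc2.2)]
      have habs := abs_le.mp (hcfabs p)
      linarith [habs.1]
  have hWsum : Summable (fun p : Nat.Primes => h (p:ℕ)) := by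
    refine Summable.of_nonneg_of_le (fun p => hhnonneg _) (fun p => ?_) hZPsum
    rw [hhdef]
    dsimp only
    split_ifs
    · exact le_refl _
    · exact hrpnonneg p
  have hW : ∑' p : Nat.Primes, h (p:ℕ)
      ≤ 1/2 * ((∑' p : Nat.Primes, (p:ℝ)^(-s)) + ∑' p : Nat.Primes, cf s hs p) := by
    calc ∑' p : Nat.Primes, h (p:ℕ)
        ≤ ∑' p : Nat.Primes, 1/2 * ((p:ℝ)^(-s) + cf s hs p) :=
          Summable.tsum_le_tsum hhp hWsum ((hZPsum.add hcfsub).mul_left _)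
      _ = 1/2 * ((∑' p : Nat.Primes, (p:ℝ)^(-s)) + ∑' p : Nat.Primes, cf s hs p) := by
          rw [tsum_mul_left, Summable.tsum_add hZPsum hcfsub]
  -- zeta side
  have hAZsummable := summable_neg_log_one_sub (zf s hs) (zf_summable s hs)
  have hZP_le_AZ : (∑' p : Nat.Primes, (p:ℝ)^(-s))
      ≤ ∑' p : Nat.Primes, -Real.log (1 - zf s hs p) := by
    refine Summable.tsum_le_tsum (fun p => ?_) hZPsum hAZsummable
    rw [zf_apply]
    have h1 : (0:ℝ) < 1 - (p:ℝ)^(-s) := by linarith [hrplt1 p]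
    have := Real.log_le_sub_one_of_pos h1
    linarith
  have hexpZ := rexp_tsum_primes (zf s hs) (zf_summable s hs)
  have hZpos : (0:ℝ) < ∑' n, zf s hs n := by rw [← hexpZ]; exact Real.exp_pos _
  have hZle : (∑' n, zf s hs n) ≤ s/(s-1) := by
    calc (∑' n, zf s hs n) = ∑' n : ℕ, (n:ℝ)^(-s) := tsum_congr (fun n => zf_apply s hs n)
      _ ≤ s/(s-1) := zsum_le s hs
  have hZP_le : (∑' p : Nat.Primes, (p:ℝ)^(-s)) ≤ Real.log (s/(s-1)) := by
    refine le_trans hZP_le_AZ ?_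
    have hAZ_eq : (∑' p : Nat.Primes, -Real.log (1 - zf s hs p))
        = Real.log (∑' n, zf s hs n) := by rw [← hexpZ, Real.log_exp]
    rw [hAZ_eq]
    exact Real.log_le_log hZpos hZle
  -- chi side
  have hACsummable := summable_neg_log_one_sub (cf s hs) (cf_summable s hs)
  have hcf_lt1 : ∀ p : Nat.Primes, (0:ℝ) < 1 - cf s hs p := by
    intro p
    have habs := abs_le.mp (hcfabs p)
    linarith [hrplt1 p, habs.2]
  have hexpC := rexp_tsum_primes (cf s hs) (cf_summable s hs)
  have hLpos : (0:ℝ) < ∑' n, cf s hs n := by rw [← hexpC]; exact Real.exp_pos _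
  have hT_le0 : (∑' p : Nat.Primes, cf s hs p) ≤ 0 := by
    have hT_le : (∑' p : Nat.Primes, cf s hs p)
        ≤ ∑' p : Nat.Primes, -Real.log (1 - cf s hs p) := by
      refine Summable.tsum_le_tsum (fun p => ?_) hcfsub hACsummable
      have := Real.log_le_sub_one_of_pos (hcf_lt1 p)
      linarith
    refine le_trans hT_le ?_
    have hAC_eq : (∑' p : Nat.Primes, -Real.log (1 - cf s hs p))
        = Real.log (∑' n, cf s hs n) := by rw [← hexpC, Real.log_exp]
    rw [hAC_eq]
    calc Real.log (∑' n, cf s hs n) ≤ Real.log 1 :=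
          Real.log_le_log hLpos (cf_tsum_le_one s hs)
      _ = 0 := Real.log_one
  -- log ratio bound
  have hratio : s/(s-1) = s * Real.log x := by
    rw [hs1]
    field_simp
  have hlogs : Real.log s ≤ 2 := by
    have h1 := Real.log_le_sub_one_of_pos (by linarith : (0:ℝ) < s)
    have hsle : s - 1 ≤ 2 := by
      rw [hs1, div_le_iff₀ hlx]
      nlinarith [hlog2', hlogx2]
    linarith
  have hlogratio : Real.log (s/(s-1)) ≤ 2 + Real.log (Real.log x) := by
    rw [hratio, Real.log_mul (by linarith : s ≠ 0) (ne_of_gt hlx)]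
    linarith [hlogs]
  -- final combination
  rw [hlogprod]
  have hml2 : (s-1) * (∑ p ∈ S, Real.log p / p) ≤ 3 := by
    refine le_trans ?_ hc1
    exact mul_le_mul_of_nonneg_left hml (by linarith : (0:ℝ) ≤ s - 1)
  calc ∑ p ∈ S, -Real.log (1 - 1/(p:ℝ))
      ≤ ∑ p ∈ S, (1/(p:ℝ) + 2 * (1/(p:ℝ)^2)) := Finset.sum_le_sum hterm
    _ = ∑ p ∈ S, 1/(p:ℝ) + 2 * ∑ p ∈ S, 1/(p:ℝ)^2 := by
        rw [Finset.sum_add_distrib, Finset.mul_sum]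
    _ ≤ ∑ p ∈ S, 1/(p:ℝ) + 2 := by linarith [hsq]
    _ ≤ (∑ p ∈ S, ((p:ℝ)^(-s) + (s-1) * (Real.log p / p))) + 2 :=
        add_le_add_left (Finset.sum_le_sum hstep5) 2
    _ = (∑ p ∈ S, (p:ℝ)^(-s)) + (s-1) * (∑ p ∈ S, Real.log p / p) + 2 := by
        rw [Finset.sum_add_distrib, Finset.mul_sum]
    _ ≤ (∑' n, h n) + 3 + 2 := by linarith [hfin, hml2]
    _ ≤ 1/2 * (Real.log (s/(s-1)) + 0) + 5 := by
        rw [hsubtype]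
        linarith [hW, hZP_le, hT_le0]
    _ ≤ 6 + Real.log (Real.log x) * (1/2) := by linarith [hlogratio]
end

section
/- Let k ≥ 2 and let m₁, n₁, …, m_k, n_k be integers with gcd(m_i, n_i) = 1, all satisfying m_i² + n_i² = N with (m_i, n_i) pairwise distinct, and 2‖N (i.e., N ≡ 2 mod 4). Then there exists a subset I ⊆ {1,…,k} with #I ≫ k / (log k)² such that for every prime p there exists a_p ∈ 𝔽_p with (a_p² + 1)·∏_{i ∈ I}(m_i a_p + n_i)(n_i a_p − m_i) ≢ 0 (mod p). -/
open Finset ArithmeticFunction Nat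


-- parity lemma
lemma sq_mod_four (m : ℤ) : m^2 % 4 = if m % 2 = 0 then 0 else 1 := by
  have h := Int.mul_ediv_add_emod m 2
  have h2 : m % 2 = 0 ∨ m % 2 = 1 := by omega
  rcases h2 with h2 | h2 <;> simp [h2]
  · obtain ⟨q, rfl⟩ : ∃ q, m = 2*q := ⟨m/2, by omega⟩
    have : (2*q)^2 = 4*q^2 := by ring
    rw [this]; omega
  · obtain ⟨q, rfl⟩ : ∃ q, m = 2*q+1 := ⟨m/2, by omega⟩
    have : (2*q+1)^2 = 4*(q^2+q)+1 := by ring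
    rw [this]; omega

lemma both_odd {m n N : ℤ} (h : m^2 + n^2 = N) (hN : N % 4 = 2) :
    m % 2 = 1 ∧ n % 2 = 1 := by
  have h1 := sq_mod_four m
  have h2 := sq_mod_four n
  have h3 : (m^2 + n^2) % 4 = 2 := by rw [h]; exact hN
  by_cases hm : m % 2 = 0 <;> by_cases hn : n % 2 = 0 <;>
    simp [hm, hn] at h1 h2 <;> omega

-- linear root count
lemma card_linear_roots {F : Type*} [Field F] [Fintype F] [DecidableEq F]
    {c d : F} (h : ¬(c = 0 ∧ d = 0)) :
    (Finset.univ.filter (fun a : F => c * a + d = 0)).card ≤ 1 := by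
  apply Finset.card_le_one.mpr
  intro a ha b hb
  simp only [Finset.mem_filter] at ha hb
  rcases eq_or_ne c 0 with hc | hc
  · exfalso; apply h; refine ⟨hc, ?_⟩
    simpa [hc] using ha.2
  · have : c * a = c * b := by
      have := ha.2; have := hb.2
      linear_combination ha.2 - hb.2
    exact mul_left_cancel₀ hc this

-- sqrt(-1) count
lemma card_sqrt_neg_one {F : Type*} [Field F] [Fintype F] [DecidableEq F] :
    (Finset.univ.filter (fun a : F => a^2 + 1 = 0)).card ≤ 2 := by
  set s := Finset.univ.filter (fun a : F => a^2 + 1 = 0) with hs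
  rcases s.eq_empty_or_nonempty with h | ⟨a, ha⟩
  · simp [h]
  · have hsub : s ⊆ {a, -a} := by
      intro b hb
      have hb2 : b^2 + 1 = 0 := by simpa [hs] using hb
      have ha2 : a^2 + 1 = 0 := by simpa [hs] using ha
      have : (b - a) * (b + a) = 0 := by ring_nf; linear_combination hb2 - ha2
      rcases mul_eq_zero.mp this with h | h
      · simp [sub_eq_zero.mp h]
      · have : b = -a := eq_neg_of_add_eq_zero_left h
        simp [this]
    calc s.card ≤ ({a, -a} : Finset F).card := Finset.card_le_card hsub
      _ ≤ 2 := Finset.card_insert_le _ _ |>.trans (by simp)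


def Good {k : ℕ} (m n : Fin k → ℤ) (S : Finset (Fin k)) (p : ℕ) : Prop :=
  ∃ a : ZMod p,
    (a ^ 2 + 1) *
      ∏ i ∈ S, ((m i : ZMod p) * a + (n i : ZMod p)) *
        ((n i : ZMod p) * a - (m i : ZMod p)) ≠ 0

lemma good_mono {k : ℕ} {m n : Fin k → ℤ} {S T : Finset (Fin k)} {p : ℕ}
    (hp : p.Prime) (hTS : T ⊆ S) (h : Good m n S p) : Good m n T p := by
  haveI := Fact.mk hp
  obtain ⟨a, ha⟩ := h
  refine ⟨a, ?_⟩
  rw [← Finset.prod_sdiff hTS] at ha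
  intro h0
  apply ha
  rcases mul_eq_zero.mp h0 with h1 | h1
  · rw [mul_comm] at h0 ⊢; rw [h1]; ring
  · rw [h1]; ring


lemma coprime_cast_ne {p : ℕ} (hp : p.Prime) {mi ni : ℤ} (h : IsCoprime mi ni) :
    ¬((mi : ZMod p) = 0 ∧ (ni : ZMod p) = 0) := by
  haveI := Fact.mk hp
  rintro ⟨h1, h2⟩
  obtain ⟨a, b, hab⟩ := h
  have : ((a * mi + b * ni : ℤ) : ZMod p) = 1 := by rw [hab]; simp
  rw [Int.cast_add, Int.cast_mul, Int.cast_mul, h1, h2] at this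
  simp at this

-- p = 2 case
lemma good_two {k : ℕ} {m n : Fin k → ℤ}
    (hm : ∀ i, m i % 2 = 1) (hn : ∀ i, n i % 2 = 1) (S : Finset (Fin k)) :
    ∃ a : ZMod 2,
      (a ^ 2 + 1) *
        ∏ i ∈ S, ((m i : ZMod 2) * a + (n i : ZMod 2)) *
          ((n i : ZMod 2) * a - (m i : ZMod 2)) ≠ 0 := by
  have key : ∀ x : ZMod 2, x ≠ 0 → x = 1 := by decide
  have cast1 : ∀ x : ℤ, x % 2 = 1 → (x : ZMod 2) = 1 := by
    intro x hx
    apply key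
    rw [Ne, ZMod.intCast_zmod_eq_zero_iff_dvd]
    omega
  refine ⟨0, ?_⟩
  have : ∀ i ∈ S, ((m i : ZMod 2) * 0 + (n i : ZMod 2)) *
      ((n i : ZMod 2) * 0 - (m i : ZMod 2)) = 1 := by
    intro i _
    rw [cast1 _ (hm i), cast1 _ (hn i)]
    ring_nf
    decide
  rw [Finset.prod_congr rfl this]
  simp


lemma good_large {k : ℕ} {m n : Fin k → ℤ} (hco : ∀ i, IsCoprime (m i) (n i))
    {p : ℕ} (hp : p.Prime) (S : Finset (Fin k)) (hlarge : 2 * S.card + 2 < p) :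
    ∃ a : ZMod p,
      (a ^ 2 + 1) *
        ∏ i ∈ S, ((m i : ZMod p) * a + (n i : ZMod p)) *
          ((n i : ZMod p) * a - (m i : ZMod p)) ≠ 0 := by
  haveI := Fact.mk hp
  classical
  set B := Finset.univ.filter (fun a : ZMod p =>
    (a ^ 2 + 1) * ∏ i ∈ S, ((m i : ZMod p) * a + (n i : ZMod p)) *
      ((n i : ZMod p) * a - (m i : ZMod p)) = 0) with hB
  have hsub : B ⊆ (Finset.univ.filter (fun a : ZMod p => a^2 + 1 = 0)) ∪
      S.biUnion (fun i =>
        (Finset.univ.filter (fun a : ZMod p => (m i : ZMod p) * a + (n i : ZMod p) = 0)) ∪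
        (Finset.univ.filter (fun a : ZMod p => (n i : ZMod p) * a + (-(m i : ZMod p)) = 0))) := by
    intro a ha
    simp only [hB, Finset.mem_filter, Finset.mem_univ, true_and] at ha
    rcases mul_eq_zero.mp ha with h1 | h1
    · apply Finset.mem_union_left
      simp [h1]
    · obtain ⟨i, hi, hzero⟩ := Finset.prod_eq_zero_iff.mp h1
      apply Finset.mem_union_right
      rw [Finset.mem_biUnion]
      refine ⟨i, hi, ?_⟩
      rcases mul_eq_zero.mp hzero with h2 | h2
      · apply Finset.mem_union_left; simp [h2]
      · apply Finset.mem_union_right; simp only [Finset.mem_filter, Finset.mem_univ, true_and]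
        rw [← h2]; ring
  have hcard : B.card ≤ 2 + 2 * S.card := by
    calc B.card ≤ _ := Finset.card_le_card hsub
    _ ≤ (Finset.univ.filter (fun a : ZMod p => a^2 + 1 = 0)).card +
        (S.biUnion _).card := Finset.card_union_le _ _
    _ ≤ 2 + 2 * S.card := by
        gcongr
        · exact card_sqrt_neg_one
        · calc (S.biUnion _).card ≤ ∑ i ∈ S, _ := Finset.card_biUnion_le
            _ ≤ ∑ i ∈ S, 2 := by
                apply Finset.sum_le_sum
                intro i _
                calc _ ≤ _ := Finset.card_union_le _ _
                  _ ≤ 2 := by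
                    have h1 := card_linear_roots (F := ZMod p)
                      (c := (m i : ZMod p)) (d := (n i : ZMod p))
                      (coprime_cast_ne hp (hco i))
                    have h2 := card_linear_roots (F := ZMod p)
                      (c := (n i : ZMod p)) (d := (-(m i : ZMod p)))
                      (by
                        intro ⟨ha, hb⟩
                        exact coprime_cast_ne hp (hco i) ⟨by rw [← neg_neg (m i : ZMod p), hb]; ring, ha⟩)
                    omega
            _ = 2 * S.card := by rw [Finset.sum_const, smul_eq_mul, mul_comm]
  have hlt : B.card < Fintype.card (ZMod p) := by
    rw [ZMod.card]
    omega
  have hne : B ≠ Finset.univ := by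
    intro h
    rw [h, Finset.card_univ] at hlt
    exact lt_irrefl _ hlt
  obtain ⟨a, _, ha⟩ := Finset.exists_of_ssubset (Finset.ssubset_univ_iff.mpr hne)
  refine ⟨a, ?_⟩
  intro h0
  exact ha (Finset.mem_filter.mpr ⟨Finset.mem_univ a, h0⟩)


noncomputable def ff (p : ℕ) : ℝ := if p = 3 then 1/3 else ((p:ℝ)-4)/((p:ℝ)-2)

lemma prime_five_le {p : ℕ} (hp : p.Prime) (h2 : p ≠ 2) (h3 : p ≠ 3) : 5 ≤ p := by
  by_contra h
  push_neg at h
  have := hp.two_le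
  interval_cases p
  · exact h2 rfl
  · exact h3 rfl
  · norm_num at hp

lemma zmod3_no_root : ∀ a : ZMod 3, a^2 + 1 ≠ 0 := by decide

lemma ff_nonneg {p : ℕ} (hp : p.Prime) (h2 : p ≠ 2) : 0 ≤ ff p := by
  rcases eq_or_ne p 3 with h3 | h3
  · simp [ff, h3]
  · have h5 : 5 ≤ p := prime_five_le hp h2 h3
    rw [ff, if_neg h3]
    apply div_nonneg <;> [skip; skip] <;>
    · have : (5:ℝ) ≤ p := by exact_mod_cast h5
      linarith

lemma greedy_step {k : ℕ} {m n : Fin k → ℤ} (hco : ∀ i, IsCoprime (m i) (n i))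
    {p : ℕ} (hp : p.Prime) (h2 : p ≠ 2) (S : Finset (Fin k)) :
    ∃ T ⊆ S, (S.card : ℝ) * ff p ≤ T.card ∧
      ∃ a : ZMod p,
        (a ^ 2 + 1) *
          ∏ i ∈ T, ((m i : ZMod p) * a + (n i : ZMod p)) *
            ((n i : ZMod p) * a - (m i : ZMod p)) ≠ 0 := by
  haveI := Fact.mk hp
  classical
  set v : Fin k → ZMod p → ZMod p := fun i a =>
    ((m i : ZMod p) * a + (n i : ZMod p)) * ((n i : ZMod p) * a - (m i : ZMod p)) with hv
  set R : Finset (ZMod p) := Finset.univ.filter (fun a => a^2 + 1 ≠ 0) with hR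
  -- card of R
  have hRcard : p - 2 ≤ R.card := by
    have : R = Finset.univ \ Finset.univ.filter (fun a : ZMod p => a^2 + 1 = 0) := by
      rw [hR, Finset.filter_not]
    rw [this, Finset.card_sdiff_of_subset (Finset.filter_subset _ _), Finset.card_univ, ZMod.card]
    have := card_sqrt_neg_one (F := ZMod p)
    omega
  have hRpos : 0 < R.card := by
    rcases eq_or_ne p 3 with h3 | h3
    · subst h3
      have : R = Finset.univ := by
        rw [hR, Finset.filter_true_of_mem (fun a _ => zmod3_no_root a)]
      rw [this, Finset.card_univ, ZMod.card]
      norm_num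
    · have h5 : 5 ≤ p := prime_five_le hp h2 h3
      omega
  have hffR : ff p ≤ 1 - 2 / (R.card : ℝ) := by
    rcases eq_or_ne p 3 with h3 | h3
    · subst h3
      have hu : R = Finset.univ := by
        rw [hR, Finset.filter_true_of_mem (fun a _ => zmod3_no_root a)]
      rw [hu, Finset.card_univ, ZMod.card, ff]
      norm_num
    · have h5 : 5 ≤ p := prime_five_le hp h2 h3
      rw [ff, if_neg h3]
      have hc : ((p:ℝ) - 2) ≤ (R.card : ℝ) := by
        have : ((p - 2 : ℕ) : ℝ) ≤ (R.card : ℝ) := by exact_mod_cast hRcard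
        have hp2 : (2:ℝ) ≤ (p:ℝ) := by exact_mod_cast hp.two_le
        push_cast [Nat.cast_sub (by omega : 2 ≤ p)] at this
        linarith
      have hp5 : (5:ℝ) ≤ (p:ℝ) := by exact_mod_cast h5
      have hpos : (0:ℝ) < (p:ℝ) - 2 := by linarith
      have hRpos' : (0:ℝ) < (R.card:ℝ) := by linarith
      have : 2 / (R.card : ℝ) ≤ 2 / ((p:ℝ) - 2) := by
        apply div_le_div_of_nonneg_left (by norm_num) hpos hc
      have heq : ((p:ℝ)-4)/((p:ℝ)-2) = 1 - 2/((p:ℝ)-2) := by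
        field_simp
        ring
      rw [heq]
      linarith
  -- counting
  set bad : ZMod p → Finset (Fin k) := fun a => S.filter (fun i => v i a = 0) with hbad
  have hcount : ∑ a ∈ R, (bad a).card ≤ 2 * S.card := by
    have : ∀ a ∈ R, (bad a).card = ∑ i ∈ S, if v i a = 0 then 1 else 0 := by
      intro a _; rw [hbad]; exact Finset.card_filter _ _
    rw [Finset.sum_congr rfl this, Finset.sum_comm]
    have inner : ∀ i ∈ S, (∑ a ∈ R, if v i a = 0 then 1 else 0) ≤ 2 := by
      intro i _
      have : (∑ a ∈ R, if v i a = 0 then 1 else 0) = (R.filter (fun a => v i a = 0)).card :=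
        (Finset.card_filter _ _).symm
      rw [this]
      have hsub : R.filter (fun a => v i a = 0) ⊆
          (Finset.univ.filter (fun a : ZMod p => (m i : ZMod p) * a + (n i : ZMod p) = 0)) ∪
          (Finset.univ.filter (fun a : ZMod p => (n i : ZMod p) * a + (-(m i : ZMod p)) = 0)) := by
        intro a ha
        simp only [Finset.mem_filter, hv] at ha
        rcases mul_eq_zero.mp ha.2 with h | h
        · apply Finset.mem_union_left; simp [h]
        · apply Finset.mem_union_right
          simp only [Finset.mem_filter, Finset.mem_univ, true_and]
          rw [← h]; ring
      calc (R.filter (fun a => v i a = 0)).card ≤ _ := Finset.card_le_card hsub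
        _ ≤ _ := Finset.card_union_le _ _
        _ ≤ 2 := by
          have h1 := card_linear_roots (F := ZMod p)
            (c := (m i : ZMod p)) (d := (n i : ZMod p)) (coprime_cast_ne hp (hco i))
          have h2 := card_linear_roots (F := ZMod p)
            (c := (n i : ZMod p)) (d := (-(m i : ZMod p)))
            (by
              intro ⟨ha, hb⟩
              exact coprime_cast_ne hp (hco i) ⟨by rw [← neg_neg (m i : ZMod p), hb]; ring, ha⟩)
          omega
    calc ∑ i ∈ S, (∑ a ∈ R, if v i a = 0 then 1 else 0) ≤ ∑ i ∈ S, 2 :=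
          Finset.sum_le_sum inner
      _ = 2 * S.card := by rw [Finset.sum_const, smul_eq_mul, mul_comm]
  -- min
  have hRne : R.Nonempty := Finset.card_pos.mp hRpos
  obtain ⟨a0, ha0R, ha0min⟩ := Finset.exists_min_image R (fun a => (bad a).card) hRne
  have hminR : R.card * (bad a0).card ≤ 2 * S.card := by
    calc R.card * (bad a0).card = R.card • (bad a0).card := by simp
      _ ≤ ∑ a ∈ R, (bad a).card := Finset.card_nsmul_le_sum R _ _ (fun x hx => ha0min x hx)
      _ ≤ 2 * S.card := hcount
  refine ⟨S \ bad a0, Finset.sdiff_subset, ?_, ?_⟩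
  · have hTcard : (S \ bad a0).card = S.card - (bad a0).card :=
      Finset.card_sdiff_of_subset (Finset.filter_subset _ _)
    have hbS : (bad a0).card ≤ S.card := Finset.card_le_card (Finset.filter_subset _ _)
    have hRr : (0:ℝ) < (R.card:ℝ) := by exact_mod_cast hRpos
    have hminr : (R.card:ℝ) * ((bad a0).card:ℝ) ≤ 2 * (S.card:ℝ) := by exact_mod_cast hminR
    have hTr : ((S \ bad a0).card : ℝ) = (S.card:ℝ) - ((bad a0).card:ℝ) := by
      rw [hTcard]; push_cast [Nat.cast_sub hbS]; ring
    rw [hTr]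
    have hb : ((bad a0).card:ℝ) ≤ 2 * (S.card:ℝ) / (R.card:ℝ) := by
      rw [le_div_iff₀ hRr]; linarith [hminr]
    have hSnn : (0:ℝ) ≤ (S.card:ℝ) := Nat.cast_nonneg _
    calc (S.card:ℝ) * ff p ≤ (S.card:ℝ) * (1 - 2/(R.card:ℝ)) := by
          apply mul_le_mul_of_nonneg_left hffR hSnn
      _ = (S.card:ℝ) - 2 * (S.card:ℝ) / (R.card:ℝ) := by field_simp
      _ ≤ (S.card:ℝ) - ((bad a0).card:ℝ) := by linarith
  · refine ⟨a0, ?_⟩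
    have h1 : a0^2 + 1 ≠ 0 := by
      rw [hR] at ha0R
      exact (Finset.mem_filter.mp ha0R).2
    have h2 : ∏ i ∈ S \ bad a0, v i a0 ≠ 0 := by
      rw [Finset.prod_ne_zero_iff]
      intro i hi
      rw [Finset.mem_sdiff] at hi
      intro h0
      exact hi.2 (Finset.mem_filter.mpr ⟨hi.1, h0⟩)
    exact mul_ne_zero h1 h2


lemma greedy_all {k : ℕ} {m n : Fin k → ℤ} (hco : ∀ i, IsCoprime (m i) (n i))
    (Q : Finset ℕ) (hQ : ∀ p ∈ Q, p.Prime ∧ p ≠ 2) :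
    ∃ S : Finset (Fin k), ((k:ℝ) * ∏ p ∈ Q, ff p ≤ S.card) ∧ ∀ p ∈ Q, Good m n S p := by
  classical
  induction Q using Finset.induction_on with
  | empty =>
    refine ⟨Finset.univ, ?_, by simp⟩
    simp [Finset.card_univ]
  | @insert q Q hq ih =>
    obtain ⟨S, hScard, hSgood⟩ := ih (fun p hp => hQ p (Finset.mem_insert_of_mem hp))
    have hqp := hQ q (Finset.mem_insert_self q Q)
    obtain ⟨T, hTS, hTcard, hTgood⟩ := greedy_step hco hqp.1 hqp.2 S
    refine ⟨T, ?_, ?_⟩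
    · rw [Finset.prod_insert hq]
      calc (k:ℝ) * (ff q * ∏ p ∈ Q, ff p) = ((k:ℝ) * ∏ p ∈ Q, ff p) * ff q := by ring
        _ ≤ (S.card:ℝ) * ff q := by
            apply mul_le_mul_of_nonneg_right hScard (ff_nonneg hqp.1 hqp.2)
        _ ≤ (T.card:ℝ) := hTcard
    · intro p hp
      rcases Finset.mem_insert.mp hp with rfl | hp
      · exact hTgood
      · exact good_mono (hQ p (Finset.mem_insert_of_mem hp)).1 hTS (hSgood p hp)



-- log of factorial as von Mangoldt sum
lemma log_factorial_eq (n : ℕ) :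
    Real.log (n ! : ℝ) = ∑ d ∈ Icc 1 n, Λ d * ((n / d : ℕ) : ℝ) := by
  have h1 : (n ! : ℝ) = ∏ m ∈ Icc 1 n, (m : ℝ) := by
    rw [← Nat.cast_prod]
    norm_cast
    rw [← Finset.Ico_add_one_right_eq_Icc]
    exact (Finset.prod_Ico_id_eq_factorial n).symm
  rw [h1, Real.log_prod (fun m hm => by
    have := (Finset.mem_Icc.mp hm).1
    positivity)]
  have h2 : ∀ m ∈ Icc 1 n, Real.log (m:ℝ) = ∑ d ∈ (Icc 1 n).filter (· ∣ m), Λ d := by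
    intro m hm
    rw [← vonMangoldt_sum]
    apply Finset.sum_congr _ (fun _ _ => rfl)
    ext d
    simp only [Nat.mem_divisors, Finset.mem_filter, Finset.mem_Icc]
    obtain ⟨hm1, hm2⟩ := Finset.mem_Icc.mp hm
    constructor
    · rintro ⟨hd, -⟩
      exact ⟨⟨(Nat.pos_of_dvd_of_pos hd (by omega)), le_trans (Nat.le_of_dvd (by omega) hd) hm2⟩, hd⟩
    · rintro ⟨-, hd⟩
      exact ⟨hd, by omega⟩
  rw [Finset.sum_congr rfl h2]
  have h3 : ∀ m ∈ Icc 1 n, ∑ d ∈ (Icc 1 n).filter (· ∣ m), Λ d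
      = ∑ d ∈ Icc 1 n, if d ∣ m then Λ d else 0 := by
    intro m _
    rw [Finset.sum_filter]
  rw [Finset.sum_congr rfl h3, Finset.sum_comm]
  apply Finset.sum_congr rfl
  intro d hd
  have h4 : ∑ m ∈ Icc 1 n, (if d ∣ m then Λ d else 0)
      = ((Icc 1 n).filter (d ∣ ·)).card • Λ d := by
    rw [← Finset.sum_filter, Finset.sum_const]
  rw [h4, (by exact Finset.Icc_add_one_left_eq_Ioc 0 n : Icc 1 n = Ioc 0 n), Nat.Ioc_filter_dvd_card_eq_div]
  rw [nsmul_eq_mul, mul_comm]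

-- Chebyshev theta bound
lemma theta_le (n : ℕ) :
    ∑ p ∈ (Icc 1 n).filter Nat.Prime, Real.log p ≤ n * Real.log 4 := by
  have h1 : (Icc 1 n).filter Nat.Prime = (range (n+1)).filter Nat.Prime := by
    ext p
    simp only [Finset.mem_filter, Finset.mem_Icc, Finset.mem_range]
    constructor
    · rintro ⟨⟨h1, h2⟩, hp⟩; exact ⟨by omega, hp⟩
    · rintro ⟨h1, hp⟩; exact ⟨⟨hp.one_lt.le.trans (le_refl _) |>.trans' (by omega), by omega⟩, hp⟩
  rw [h1]
  have h2 : ∑ p ∈ (range (n+1)).filter Nat.Prime, Real.log p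
      = Real.log ((primorial n : ℕ) : ℝ) := by
    rw [primorial, Nat.cast_prod, Real.log_prod]
    intro p hp
    have := (Finset.mem_filter.mp hp).2.pos
    positivity
  rw [h2]
  calc Real.log ((primorial n : ℕ) : ℝ) ≤ Real.log ((4^n : ℕ) : ℝ) := by
        apply Real.log_le_log (by exact_mod_cast (primorial_pos n))
        exact_mod_cast primorial_le_4_pow n
    _ = n * Real.log 4 := by
        push_cast
        rw [Real.log_pow]

lemma mertens_first {n : ℕ} (hn : 1 ≤ n) :
    ∑ p ∈ (Icc 1 n).filter Nat.Prime, Real.log p / p ≤ Real.log n + Real.log 4 := by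
  have hnR : (0:ℝ) < n := by exact_mod_cast hn
  -- key chain
  have key : (n:ℝ) * ∑ p ∈ (Icc 1 n).filter Nat.Prime, Real.log p / p
      - ∑ p ∈ (Icc 1 n).filter Nat.Prime, Real.log p ≤ (n:ℝ) * Real.log n := by
    have e1 : (n:ℝ) * ∑ p ∈ (Icc 1 n).filter Nat.Prime, Real.log p / p
        - ∑ p ∈ (Icc 1 n).filter Nat.Prime, Real.log p
        = ∑ p ∈ (Icc 1 n).filter Nat.Prime, Real.log p * ((n:ℝ)/p - 1) := by
      rw [Finset.mul_sum, ← Finset.sum_sub_distrib]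
      apply Finset.sum_congr rfl
      intro p hp
      have hp2 := (Finset.mem_filter.mp hp).2.pos
      field_simp
    rw [e1]
    calc ∑ p ∈ (Icc 1 n).filter Nat.Prime, Real.log p * ((n:ℝ)/p - 1)
        ≤ ∑ p ∈ (Icc 1 n).filter Nat.Prime, Real.log p * ((n / p : ℕ) : ℝ) := by
          apply Finset.sum_le_sum
          intro p hp
          have hpp := (Finset.mem_filter.mp hp).2
          have hlog : (0:ℝ) ≤ Real.log p := Real.log_nonneg (by exact_mod_cast hpp.one_lt.le)
          apply mul_le_mul_of_nonneg_left _ hlog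
          -- (n:ℝ)/p - 1 ≤ (n/p : ℕ)
          have hq := Nat.div_add_mod n p
          have hr : n % p < p := Nat.mod_lt _ hpp.pos
          have : (n:ℝ) ≤ p * (n/p : ℕ) + p := by
            have : n ≤ p * (n/p) + p := by omega
            exact_mod_cast this
          have hppos : (0:ℝ) < p := by exact_mod_cast hpp.pos
          rw [sub_le_iff_le_add, div_le_iff₀ hppos]
          linarith [this]
      _ = ∑ p ∈ (Icc 1 n).filter Nat.Prime, Λ p * ((n / p : ℕ) : ℝ) := by
          apply Finset.sum_congr rfl
          intro p hp
          rw [vonMangoldt_apply_prime (Finset.mem_filter.mp hp).2]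
      _ ≤ ∑ d ∈ Icc 1 n, Λ d * ((n / d : ℕ) : ℝ) := by
          apply Finset.sum_le_sum_of_subset_of_nonneg (Finset.filter_subset _ _)
          intro d _ _
          exact mul_nonneg vonMangoldt_nonneg (Nat.cast_nonneg _)
      _ = Real.log (n ! : ℝ) := (log_factorial_eq n).symm
      _ ≤ (n:ℝ) * Real.log n := by
          have : Real.log (n ! : ℝ) = ∑ m ∈ Icc 1 n, Real.log m := by
            rw [← Real.log_prod (fun m hm => by
              have := (Finset.mem_Icc.mp hm).1
              positivity), ← Nat.cast_prod]
            norm_cast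
            rw [← Finset.Ico_add_one_right_eq_Icc, Finset.prod_Ico_id_eq_factorial n]
          rw [this]
          calc ∑ m ∈ Icc 1 n, Real.log m ≤ ∑ m ∈ Icc 1 n, Real.log n := by
                apply Finset.sum_le_sum
                intro m hm
                obtain ⟨h1, h2⟩ := Finset.mem_Icc.mp hm
                apply Real.log_le_log (by exact_mod_cast h1) (by exact_mod_cast h2)
            _ = (n:ℝ) * Real.log n := by
                rw [Finset.sum_const, Nat.card_Icc]
                simp [nsmul_eq_mul]
  have theta := theta_le n
  have goal1 : (n:ℝ) * ∑ p ∈ (Icc 1 n).filter Nat.Prime, Real.log p / p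
      ≤ (n:ℝ) * (Real.log n + Real.log 4) := by
    have := key
    nlinarith [theta]
  exact le_of_mul_le_mul_left (by linarith [goal1]) hnR


lemma abel_bound {a : ℕ → ℝ} {c d : ℝ} (hc : 0 ≤ c) (hd : 0 ≤ d)
    (ha : ∀ j, 1 ≤ j → 0 ≤ a j)
    (hb : ∀ l, 1 ≤ l → ∑ j ∈ Icc 1 l, a j ≤ c * l + d) :
    ∀ J, 1 ≤ J → ∑ j ∈ Icc 1 J, a j / j ≤ c * Real.log J + c + 2 * d := by
  have inv : ∀ J, 1 ≤ J → ∑ j ∈ Icc 1 J, a j / j ≤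
      (∑ j ∈ Icc 1 J, a j) / J + c * Real.log J + d * (1 - 1/(J:ℝ)) := by
    intro J hJ
    induction J, hJ using Nat.le_induction with
    | base => simp
    | succ J hJ ih =>
      have hJR : (0:ℝ) < J := by exact_mod_cast hJ
      have hJR1 : (0:ℝ) < (J:ℝ) + 1 := by linarith
      have hstep : Real.log ((J:ℝ)+1) - Real.log J ≥ 1/((J:ℝ)+1) := by
        have h1 : Real.log ((J:ℝ)/((J:ℝ)+1)) ≤ (J:ℝ)/((J:ℝ)+1) - 1 :=
          Real.log_le_sub_one_of_pos (by positivity)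
        have h2 : Real.log ((J:ℝ)/((J:ℝ)+1)) = Real.log J - Real.log ((J:ℝ)+1) := by
          rw [Real.log_div (by positivity) (by positivity)]
        have h3 : (J:ℝ)/((J:ℝ)+1) - 1 = -(1/((J:ℝ)+1)) := by field_simp; ring
        rw [h2, h3] at h1
        linarith
      have hBJ := hb J hJ
      rw [Finset.sum_Icc_succ_top (by omega : 1 ≤ J + 1), Finset.sum_Icc_succ_top (by omega : 1 ≤ J + 1)]
      have haJ1 : 0 ≤ a (J+1) := ha _ (by omega)
      push_cast
      have key : (∑ j ∈ Icc 1 J, a j) / J + d * (1 - 1/(J:ℝ)) + a (J+1)/((J:ℝ)+1) ≤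
          ((∑ j ∈ Icc 1 J, a j) + a (J+1)) / ((J:ℝ)+1) + c * (Real.log ((J:ℝ)+1) - Real.log J)
            + d * (1 - 1/((J:ℝ)+1)) := by
        have hsplit : ((∑ j ∈ Icc 1 J, a j) + a (J+1)) / ((J:ℝ)+1)
            = (∑ j ∈ Icc 1 J, a j)/((J:ℝ)+1) + a (J+1)/((J:ℝ)+1) := by ring
        rw [hsplit]
        have hmain : (∑ j ∈ Icc 1 J, a j) / J - (∑ j ∈ Icc 1 J, a j)/((J:ℝ)+1)
            ≤ c * (Real.log ((J:ℝ)+1) - Real.log J) + d * (1/(J:ℝ) - 1/((J:ℝ)+1)) := by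
          have e1 : (∑ j ∈ Icc 1 J, a j) / J - (∑ j ∈ Icc 1 J, a j)/((J:ℝ)+1)
              = (∑ j ∈ Icc 1 J, a j) / ((J:ℝ)*((J:ℝ)+1)) := by
            field_simp
            ring
          have e2 : 1/(J:ℝ) - 1/((J:ℝ)+1) = 1 / ((J:ℝ)*((J:ℝ)+1)) := by
            field_simp
            ring
          rw [e1, e2]
          calc (∑ j ∈ Icc 1 J, a j) / ((J:ℝ)*((J:ℝ)+1))
              ≤ (c * J + d) / ((J:ℝ)*((J:ℝ)+1)) := by
                apply div_le_div_of_nonneg_right hBJ (by positivity) |>.trans_eq rfl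
            _ = c / ((J:ℝ)+1) + d * (1 / ((J:ℝ)*((J:ℝ)+1))) := by
                field_simp
            _ ≤ c * (Real.log ((J:ℝ)+1) - Real.log J) + d * (1 / ((J:ℝ)*((J:ℝ)+1))) := by
                have := mul_le_mul_of_nonneg_left hstep hc
                have e3 : c / ((J:ℝ)+1) = c * (1/((J:ℝ)+1)) := by ring
                linarith
        linarith
      calc (∑ j ∈ Icc 1 J, a j / j) + a (J+1)/((J:ℝ)+1)
          ≤ ((∑ j ∈ Icc 1 J, a j) / J + c * Real.log J + d * (1 - 1/(J:ℝ))) + a (J+1)/((J:ℝ)+1) := by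
            linarith [ih]
        _ ≤ ((∑ j ∈ Icc 1 J, a j) + a (J+1)) / ((J:ℝ)+1) + c * Real.log ((J:ℝ)+1)
              + d * (1 - 1/((J:ℝ)+1)) := by linarith [key]
  intro J hJ
  have h1 := inv J hJ
  have hJR : (0:ℝ) < J := by exact_mod_cast hJ
  have hJ1 : (1:ℝ) ≤ J := by exact_mod_cast hJ
  have h2 : (∑ j ∈ Icc 1 J, a j) / J ≤ c + d / J := by
    rw [div_le_iff₀ hJR]
    have e : (c + d/(J:ℝ))*J = c*J + d := by field_simp
    rw [e]
    exact hb J hJ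
  have h3 : d / J ≤ d := by
    rw [div_le_iff₀ hJR]
    nlinarith [hd, hJ1]
  have h4 : d * (1 - 1/(J:ℝ)) ≤ d := by
    have h5 : 0 < 1/(J:ℝ) := by positivity
    nlinarith
  linarith


lemma sum_Ioc_pow2 (F : ℕ → ℝ) : ∀ L, 1 ≤ L →
    ∑ x ∈ Ioc 2 (2^(L+1)), F x = ∑ j ∈ Icc 1 L, ∑ x ∈ Ioc (2^j) (2^(j+1)), F x := by
  intro L hL
  induction L, hL using Nat.le_induction with
  | base => norm_num
  | succ L hL ih =>
    have h1 : (2:ℕ) ≤ 2^(L+1) := by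
      calc (2:ℕ) = 2^1 := by norm_num
      _ ≤ 2^(L+1) := Nat.pow_le_pow_right (by norm_num) (by omega)
    have h2 : (2:ℕ)^(L+1) ≤ 2^(L+2) := Nat.pow_le_pow_right (by norm_num) (by omega)
    rw [Finset.sum_Icc_succ_top (by omega : 1 ≤ L + 1), ← ih,
      Finset.sum_Ioc_consecutive _ h1 h2]

lemma sum_inv_primes {L : ℕ} (hL : 1 ≤ L) :
    ∑ p ∈ (Ioc 2 (2^(L+1))).filter Nat.Prime, 1/(p:ℝ) ≤ Real.log L + 7 := by
  have hlog2 : (0:ℝ) < Real.log 2 := Real.log_pos (by norm_num)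
  set a : ℕ → ℝ := fun j =>
    (∑ p ∈ (Ioc (2^j) (2^(j+1))).filter Nat.Prime, Real.log p / p) / Real.log 2 with haa
  have hanneg : ∀ j, 1 ≤ j → 0 ≤ a j := by
    intro j _
    apply div_nonneg _ hlog2.le
    apply Finset.sum_nonneg
    intro p hp
    have hp2 := (Finset.mem_filter.mp hp).2
    have : (1:ℝ) ≤ p := by exact_mod_cast hp2.one_lt.le
    apply div_nonneg (Real.log_nonneg this) (by positivity)
  -- cumulative bound
  have hcum : ∀ l, 1 ≤ l → ∑ j ∈ Icc 1 l, a j ≤ 1 * l + 3 := by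
    intro l hl
    have e1 : ∑ j ∈ Icc 1 l, a j
        = (∑ p ∈ (Ioc 2 (2^(l+1))).filter Nat.Prime, Real.log p / p) / Real.log 2 := by
      rw [haa, ← Finset.sum_div]
      congr 1
      have := sum_Ioc_pow2 (fun x => if x.Prime then Real.log x / x else 0) l hl
      simp only [← Finset.sum_filter] at this
      exact this.symm
    rw [e1]
    have e2 : ∑ p ∈ (Ioc 2 (2^(l+1))).filter Nat.Prime, Real.log p / p
        ≤ Real.log (2^(l+1)) + Real.log 4 := by
      calc ∑ p ∈ (Ioc 2 (2^(l+1))).filter Nat.Prime, Real.log p / p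
          ≤ ∑ p ∈ (Icc 1 (2^(l+1))).filter Nat.Prime, Real.log p / p := by
            apply Finset.sum_le_sum_of_subset_of_nonneg
            · apply Finset.filter_subset_filter
              intro x hx
              have := Finset.mem_Ioc.mp hx
              rw [Finset.mem_Icc]
              omega
            · intro p hp _
              have hp2 := (Finset.mem_filter.mp hp).2
              have : (1:ℝ) ≤ p := by exact_mod_cast hp2.one_lt.le
              apply div_nonneg (Real.log_nonneg this) (by positivity)
        _ ≤ Real.log ((2^(l+1) : ℕ) : ℝ) + Real.log 4 :=
            mertens_first (Nat.one_le_two_pow)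
        _ = Real.log (2^(l+1)) + Real.log 4 := by norm_num
    have e3 : Real.log ((2:ℝ)^(l+1)) + Real.log 4 = ((l:ℝ) + 3) * Real.log 2 := by
      rw [Real.log_pow]
      have : (4:ℝ) = 2^2 := by norm_num
      rw [this, Real.log_pow]
      push_cast
      ring
    have e4 : (∑ p ∈ (Ioc 2 (2^(l+1))).filter Nat.Prime, Real.log p / p) / Real.log 2
        ≤ (((l:ℝ) + 3) * Real.log 2) / Real.log 2 := by
      rw [div_le_div_iff_of_pos_right hlog2]
      push_cast at e2 ⊢
      rw [← e3]
      exact e2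
    calc _ ≤ (((l:ℝ) + 3) * Real.log 2) / Real.log 2 := e4
      _ = 1 * l + 3 := by field_simp
  -- per block
  have hblock : ∀ j, 1 ≤ j →
      ∑ p ∈ (Ioc (2^j) (2^(j+1))).filter Nat.Prime, 1/(p:ℝ) ≤ a j / j := by
    intro j hj
    have hjR : (0:ℝ) < j := by exact_mod_cast hj
    rw [haa]
    have : a j / (j:ℝ) = (∑ p ∈ (Ioc (2^j) (2^(j+1))).filter Nat.Prime, Real.log p / p)
        / ((j:ℝ) * Real.log 2) := by
      rw [haa, div_div]
      ring_nf
    rw [this, Finset.sum_div]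
    apply Finset.sum_le_sum
    intro p hp
    obtain ⟨hpIoc, hpp⟩ := Finset.mem_filter.mp hp
    obtain ⟨hplow, hphigh⟩ := Finset.mem_Ioc.mp hpIoc
    have hpR : (0:ℝ) < p := by exact_mod_cast hpp.pos
    have hlogp : (j:ℝ) * Real.log 2 ≤ Real.log p := by
      calc (j:ℝ) * Real.log 2 = Real.log ((2:ℝ)^j) := by rw [Real.log_pow]
        _ ≤ Real.log p := by
            apply Real.log_le_log (by positivity)
            exact_mod_cast hplow.le
    have hjl2 : (0:ℝ) < (j:ℝ) * Real.log 2 := by positivity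
    rw [div_div, div_le_div_iff₀ hpR (by positivity)]
    calc 1 * ((p:ℝ) * ((j:ℝ) * Real.log 2)) = (p:ℝ) * ((j:ℝ) * Real.log 2) := by ring
      _ ≤ (p:ℝ) * Real.log p := by
          apply mul_le_mul_of_nonneg_left hlogp hpR.le
      _ = Real.log p * p := by ring
  -- combine
  have hdecomp : ∑ p ∈ (Ioc 2 (2^(L+1))).filter Nat.Prime, 1/(p:ℝ)
      = ∑ j ∈ Icc 1 L, ∑ p ∈ (Ioc (2^j) (2^(j+1))).filter Nat.Prime, 1/(p:ℝ) := by
    have := sum_Ioc_pow2 (fun x => if x.Prime then 1/(x:ℝ) else 0) L hL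
    simp only [← Finset.sum_filter] at this
    exact this
  rw [hdecomp]
  calc ∑ j ∈ Icc 1 L, ∑ p ∈ (Ioc (2^j) (2^(j+1))).filter Nat.Prime, 1/(p:ℝ)
      ≤ ∑ j ∈ Icc 1 L, a j / j := Finset.sum_le_sum (fun j hj => hblock j (Finset.mem_Icc.mp hj).1)
    _ ≤ 1 * Real.log L + 1 + 2 * 3 := abel_bound (by norm_num) (by norm_num) hanneg hcum L hL
    _ = Real.log L + 7 := by ring


lemma tele : ∀ M : ℕ, 4 ≤ M →
    ∑ n ∈ Icc 5 M, (1/((n:ℝ)-4) - 1/n) ≤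
      25/12 - (1/((M:ℝ)-3) + 1/((M:ℝ)-2) + 1/((M:ℝ)-1) + 1/(M:ℝ)) := by
  intro M hM
  induction M, hM using Nat.le_induction with
  | base => norm_num
  | succ M hM ih =>
    rw [Finset.sum_Icc_succ_top (by omega : 5 ≤ M + 1)]
    have hMR : (4:ℝ) ≤ M := by exact_mod_cast hM
    push_cast
    have e : 25/12 - (1/((M:ℝ)-3) + 1/((M:ℝ)-2) + 1/((M:ℝ)-1) + 1/(M:ℝ))
        + (1/((M:ℝ)+1-4) - 1/((M:ℝ)+1))
        = 25/12 - (1/((M:ℝ)+1-3) + 1/((M:ℝ)+1-2) + 1/((M:ℝ)+1-1) + 1/((M:ℝ)+1)) := by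
      have e1 : (M:ℝ)+1-4 = (M:ℝ)-3 := by ring
      have e2 : (M:ℝ)+1-3 = (M:ℝ)-2 := by ring
      have e3 : (M:ℝ)+1-2 = (M:ℝ)-1 := by ring
      have e4 : (M:ℝ)+1-1 = (M:ℝ) := by ring
      rw [e1, e2, e3, e4]
      ring
    linarith [ih]

lemma ff_pos {p : ℕ} (hp : p.Prime) (h2 : p ≠ 2) : 0 < ff p := by
  rcases eq_or_ne p 3 with h3 | h3
  · simp [ff, h3]
  · have h5 : 5 ≤ p := prime_five_le hp h2 h3
    have : (5:ℝ) ≤ p := by exact_mod_cast h5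
    rw [ff, if_neg h3]
    apply _root_.div_pos <;> linarith

lemma ff_le_one {p : ℕ} (hp : p.Prime) (h2 : p ≠ 2) : ff p ≤ 1 := by
  rcases eq_or_ne p 3 with h3 | h3
  · subst h3; rw [ff]; norm_num
  · have h5 : 5 ≤ p := prime_five_le hp h2 h3
    have : (5:ℝ) ≤ p := by exact_mod_cast h5
    rw [ff, if_neg h3, div_le_one (by linarith)]
    linarith

lemma g_pointwise {p : ℕ} (hp : p.Prime) (h2 : p ≠ 2) (h3 : p ≠ 3) :
    -Real.log (ff p) ≤ 2/(p:ℝ) + 2 * (1/((p:ℝ)-4) - 1/p) := by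
  have h5 : 5 ≤ p := prime_five_le hp h2 h3
  have hpR : (5:ℝ) ≤ p := by exact_mod_cast h5
  have hff : ff p = ((p:ℝ)-4)/((p:ℝ)-2) := by rw [ff, if_neg h3]
  have hinv : (ff p)⁻¹ = ((p:ℝ)-2)/((p:ℝ)-4) := by rw [hff, inv_div]
  rw [← Real.log_inv, hinv]
  have hpos : (0:ℝ) < ((p:ℝ)-2)/((p:ℝ)-4) := by apply _root_.div_pos <;> linarith
  calc Real.log (((p:ℝ)-2)/((p:ℝ)-4)) ≤ ((p:ℝ)-2)/((p:ℝ)-4) - 1 :=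
        Real.log_le_sub_one_of_pos hpos
    _ = 2/((p:ℝ)-4) := by
        have h4 : (p:ℝ) - 4 ≠ 0 := by linarith
        field_simp
        norm_num
    _ = 2/(p:ℝ) + 2 * (1/((p:ℝ)-4) - 1/p) := by
        field_simp
        ring

lemma prod_ff_lower {k : ℕ} (hk : 2 ≤ k) :
    Real.exp (-21) * (Real.log 2)^2 / (9 * (Real.log k)^2) ≤
      ∏ p ∈ (range (2*k+3)).filter (fun p => p.Prime ∧ p ≠ 2), ff p := by
  classical
  set L := Nat.log 2 (2*k+2) with hLdef
  have hL1 : 1 ≤ L := by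
    rw [hLdef]
    exact (Nat.le_log_iff_pow_le (by norm_num) (by omega)).mpr (by omega)
  have hLpos : (0:ℝ) < L := by exact_mod_cast hL1
  set Q := (range (2*k+3)).filter (fun p => p.Prime ∧ p ≠ 2) with hQdef
  set PI := (Ioc 2 (2^(L+1))).filter Nat.Prime with hPIdef
  have hQP : Q ⊆ PI := by
    intro p hp
    have hmem := Finset.mem_filter.mp hp
    obtain ⟨hpp, hp2⟩ := hmem.2
    have hpr := Finset.mem_range.mp hmem.1
    rw [hPIdef, Finset.mem_filter, Finset.mem_Ioc]
    refine ⟨⟨?_, ?_⟩, hpp⟩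
    · have := hpp.two_le; omega
    · have h1 : 2*k+2 < 2^(L+1) := Nat.lt_pow_succ_log_self (by norm_num) (2*k+2)
      omega
  -- all elements of PI are odd primes
  have hPIodd : ∀ p ∈ PI, p.Prime ∧ p ≠ 2 := by
    intro p hp
    rw [hPIdef, Finset.mem_filter, Finset.mem_Ioc] at hp
    exact ⟨hp.2, by omega⟩
  -- sum of g over Q bounded
  have hsum : ∑ p ∈ Q, (-Real.log (ff p)) ≤ 2 * Real.log L + 21 := by
    have h0 : ∑ p ∈ Q, (-Real.log (ff p)) ≤ ∑ p ∈ PI, (-Real.log (ff p)) := by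
      apply Finset.sum_le_sum_of_subset_of_nonneg hQP
      intro p hp _
      obtain ⟨hpp, hp2⟩ := hPIodd p hp
      rw [neg_nonneg]
      exact Real.log_nonpos (ff_pos hpp hp2).le (ff_le_one hpp hp2)
    have h3PI : 3 ∈ PI := by
      rw [hPIdef, Finset.mem_filter, Finset.mem_Ioc]
      refine ⟨⟨by norm_num, ?_⟩, by norm_num⟩
      have : 2^(1+1) ≤ 2^(L+1) := Nat.pow_le_pow_right (by norm_num) (by omega)
      omega
    have hsplit : ∑ p ∈ PI, (-Real.log (ff p))
        = (-Real.log (ff 3)) + ∑ p ∈ PI.erase 3, (-Real.log (ff p)) :=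
      (Finset.add_sum_erase PI _ h3PI).symm
    have hg3 : -Real.log (ff 3) ≤ 2 := by
      have : ff 3 = 1/3 := by rw [ff]; norm_num
      rw [this, ← Real.log_inv]
      norm_num
      calc Real.log 3 ≤ 3 - 1 := Real.log_le_sub_one_of_pos (by norm_num)
        _ = 2 := by norm_num
    have herase : ∑ p ∈ PI.erase 3, (-Real.log (ff p))
        ≤ ∑ p ∈ PI.erase 3, (2/(p:ℝ) + 2 * (1/((p:ℝ)-4) - 1/p)) := by
      apply Finset.sum_le_sum
      intro p hp
      obtain ⟨hne, hpPI⟩ := Finset.mem_erase.mp hp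
      obtain ⟨hpp, hp2⟩ := hPIodd p hpPI
      exact g_pointwise hpp hp2 hne
    have hsum_split : ∑ p ∈ PI.erase 3, (2/(p:ℝ) + 2 * (1/((p:ℝ)-4) - 1/p))
        = ∑ p ∈ PI.erase 3, 2/(p:ℝ) + 2 * ∑ p ∈ PI.erase 3, (1/((p:ℝ)-4) - 1/p) := by
      rw [Finset.sum_add_distrib, Finset.mul_sum]
    have hpart1 : ∑ p ∈ PI.erase 3, 2/(p:ℝ) ≤ 2 * (Real.log L + 7) := by
      have : ∑ p ∈ PI.erase 3, 2/(p:ℝ) ≤ ∑ p ∈ PI, 2/(p:ℝ) := by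
        apply Finset.sum_le_sum_of_subset_of_nonneg (Finset.erase_subset _ _)
        intro p hp _
        have := (hPIodd p hp).1.pos
        positivity
      calc ∑ p ∈ PI.erase 3, 2/(p:ℝ) ≤ ∑ p ∈ PI, 2/(p:ℝ) := this
        _ = 2 * ∑ p ∈ PI, 1/(p:ℝ) := by
            rw [Finset.mul_sum]
            apply Finset.sum_congr rfl
            intro p _
            ring
        _ ≤ 2 * (Real.log L + 7) := by
            have := sum_inv_primes hL1
            rw [hPIdef]
            linarith
    have hpart2 : ∑ p ∈ PI.erase 3, (1/((p:ℝ)-4) - 1/p) ≤ 25/12 := by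
      have hsub : PI.erase 3 ⊆ Icc 5 (2^(L+1)) := by
        intro p hp
        obtain ⟨hne, hpPI⟩ := Finset.mem_erase.mp hp
        obtain ⟨hpp, hp2⟩ := hPIodd p hpPI
        rw [Finset.mem_Icc]
        refine ⟨prime_five_le hpp hp2 hne, ?_⟩
        rw [hPIdef, Finset.mem_filter, Finset.mem_Ioc] at hpPI
        exact hpPI.1.2
      have h4M : 4 ≤ 2^(L+1) := by
        have : 2^(1+1) ≤ 2^(L+1) := Nat.pow_le_pow_right (by norm_num) (by omega)
        omega
      calc ∑ p ∈ PI.erase 3, (1/((p:ℝ)-4) - 1/p)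
          ≤ ∑ n ∈ Icc (5:ℕ) (2^(L+1)), (1/((n:ℝ)-4) - 1/n) := by
            apply Finset.sum_le_sum_of_subset_of_nonneg hsub
            intro n hn _
            obtain ⟨h5, _⟩ := Finset.mem_Icc.mp hn
            have h5R : (5:ℝ) ≤ n := by exact_mod_cast h5
            have h1 : (0:ℝ) < (n:ℝ) - 4 := by linarith
            have h2 : ((n:ℝ) - 4) ≤ n := by linarith
            have := one_div_le_one_div_of_le h1 h2
            linarith
        _ ≤ 25/12 - (1/(((2^(L+1):ℕ):ℝ) - 3) + 1/(((2^(L+1):ℕ):ℝ) - 2)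
              + 1/(((2^(L+1):ℕ):ℝ) - 1) + 1/((2^(L+1):ℕ):ℝ)) := tele _ h4M
        _ ≤ 25/12 := by
            have hM4 : (4:ℝ) ≤ ((2^(L+1):ℕ):ℝ) := by exact_mod_cast h4M
            have t1 : (0:ℝ) < 1/(((2^(L+1):ℕ):ℝ) - 3) := by
              apply one_div_pos.mpr; linarith
            have t2 : (0:ℝ) < 1/(((2^(L+1):ℕ):ℝ) - 2) := by
              apply one_div_pos.mpr; linarith
            have t3 : (0:ℝ) < 1/(((2^(L+1):ℕ):ℝ) - 1) := by
              apply one_div_pos.mpr; linarith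
            have t4 : (0:ℝ) < 1/((2^(L+1):ℕ):ℝ) := by
              apply one_div_pos.mpr; linarith
            linarith
    calc ∑ p ∈ Q, (-Real.log (ff p)) ≤ ∑ p ∈ PI, (-Real.log (ff p)) := h0
      _ = (-Real.log (ff 3)) + ∑ p ∈ PI.erase 3, (-Real.log (ff p)) := hsplit
      _ ≤ 2 + (∑ p ∈ PI.erase 3, 2/(p:ℝ) + 2 * ∑ p ∈ PI.erase 3, (1/((p:ℝ)-4) - 1/p)) := by
          rw [← hsum_split]
          linarith [herase]
      _ ≤ 2 + (2 * (Real.log L + 7) + 2 * (25/12)) := by linarith [hpart1, hpart2]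
      _ ≤ 2 * Real.log L + 21 := by linarith
  -- convert to product
  have hprod : ∏ p ∈ Q, ff p = Real.exp (∑ p ∈ Q, Real.log (ff p)) := by
    rw [Real.exp_sum]
    apply Finset.prod_congr rfl
    intro p hp
    have hmem := Finset.mem_filter.mp hp
    obtain ⟨hpp, hp2⟩ := hmem.2
    rw [Real.exp_log (ff_pos hpp hp2)]
  have hexp : Real.exp (-(2 * Real.log L + 21)) ≤ ∏ p ∈ Q, ff p := by
    rw [hprod]
    apply Real.exp_le_exp.mpr
    have : ∑ p ∈ Q, Real.log (ff p) = -∑ p ∈ Q, (-Real.log (ff p)) := by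
      rw [← Finset.sum_neg_distrib]
      apply Finset.sum_congr rfl
      intro p _; ring
    rw [this]
    linarith [hsum]
  have hexpval : Real.exp (-(2 * Real.log L + 21)) = Real.exp (-21) / (L:ℝ)^2 := by
    rw [show -(2 * Real.log (L:ℝ) + 21) = (-21) + (-2) * Real.log (L:ℝ) by ring,
      Real.exp_add]
    rw [show ((-2):ℝ) * Real.log (L:ℝ) = Real.log ((L:ℝ)^((-2):ℝ)) by
      rw [Real.log_rpow hLpos]]
    rw [Real.exp_log (by positivity)]
    rw [Real.rpow_neg hLpos.le, show ((2:ℝ)) = ((2:ℕ):ℝ) by norm_num, Real.rpow_natCast]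
    ring
  -- L bound: L ≤ 3 log k / log 2
  have hlogk : (0:ℝ) < Real.log k :=
    Real.log_pos (by exact_mod_cast (by omega : 1 < k))
  have hlog2 : (0:ℝ) < Real.log 2 := Real.log_pos (by norm_num)
  have hLk : (L:ℝ) * Real.log 2 ≤ 3 * Real.log k := by
    have h1 : (2:ℕ)^L ≤ 2*k+2 := Nat.pow_log_le_self 2 (by omega)
    have h2 : 2*k+2 ≤ k^3 := by
      have h4 : 4 ≤ k^2 := by
        calc 4 = 2*2 := rfl
          _ ≤ k*k := Nat.mul_le_mul hk hk
          _ = k^2 := (sq k).symm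
      have h5 : k^2*k ≤ k^3 := le_of_eq (by ring)
      have h6 : 4*k ≤ k^2*k := Nat.mul_le_mul_right k h4
      omega
    have h3 : ((2:ℝ))^L ≤ ((k:ℝ))^3 := by
      have := h1.trans h2
      exact_mod_cast this
    calc (L:ℝ) * Real.log 2 = Real.log ((2:ℝ)^L) := by rw [Real.log_pow]
      _ ≤ Real.log ((k:ℝ)^3) := Real.log_le_log (by positivity) h3
      _ = 3 * Real.log k := by rw [Real.log_pow]; norm_num
  have hL2 : (L:ℝ)^2 ≤ 9 * (Real.log k)^2 / (Real.log 2)^2 := by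
    have hLle : (L:ℝ) ≤ 3 * Real.log k / Real.log 2 := by
      rw [le_div_iff₀ hlog2]
      linarith
    calc (L:ℝ)^2 ≤ (3 * Real.log k / Real.log 2)^2 := by
          apply pow_le_pow_left₀ hLpos.le hLle
      _ = 9 * (Real.log k)^2 / (Real.log 2)^2 := by
          field_simp
          ring
  calc Real.exp (-21) * (Real.log 2)^2 / (9 * (Real.log k)^2)
      ≤ Real.exp (-21) / (L:ℝ)^2 := by
        rw [div_le_div_iff₀ (by positivity) (by positivity)]
        calc Real.exp (-21) * (Real.log 2)^2 * (L:ℝ)^2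
            ≤ Real.exp (-21) * (Real.log 2)^2 * (9 * (Real.log k)^2 / (Real.log 2)^2) := by
              apply mul_le_mul_of_nonneg_left hL2 (by positivity)
          _ = Real.exp (-21) * (9 * (Real.log k)^2) := by
              field_simp
    _ ≤ ∏ p ∈ Q, ff p := by rw [← hexpval]; exact hexp

theorem admissible_subset_exists :
    ∃ C : ℝ, 0 < C ∧
      ∀ (k : ℕ), 2 ≤ k →
        ∀ (m n : Fin k → ℤ) (N : ℤ),
          (∀ i, IsCoprime (m i) (n i)) →
          (∀ i, m i ^ 2 + n i ^ 2 = N) →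
          (∀ i j, i ≠ j → (m i, n i) ≠ (m j, n j)) →
          N % 4 = 2 →
          ∃ I : Finset (Fin k),
            C * k / (Real.log k) ^ 2 ≤ I.card ∧
            ∀ p : ℕ, p.Prime →
              ∃ a : ZMod p,
                (a ^ 2 + 1) *
                  ∏ i ∈ I, ((m i : ZMod p) * a + (n i : ZMod p)) *
                    ((n i : ZMod p) * a - (m i : ZMod p)) ≠ 0 := by
  classical
  refine ⟨Real.exp (-21) * (Real.log 2)^2 / 9, by positivity, ?_⟩
  intro k hk m n N hco hsq hdist hN4
  have hodd : ∀ i, m i % 2 = 1 ∧ n i % 2 = 1 := fun i => both_odd (hsq i) hN4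
  set Q := (Finset.range (2*k+3)).filter (fun p => p.Prime ∧ p ≠ 2) with hQdef
  have hQ : ∀ p ∈ Q, p.Prime ∧ p ≠ 2 := fun p hp => (Finset.mem_filter.mp hp).2
  obtain ⟨I, hIcard, hIgood⟩ := greedy_all hco Q hQ
  refine ⟨I, ?_, ?_⟩
  · have hlogk : (0:ℝ) < Real.log k :=
      Real.log_pos (by exact_mod_cast (by omega : 1 < k))
    have hprod := prod_ff_lower hk
    have hkR : (0:ℝ) ≤ k := Nat.cast_nonneg _
    calc Real.exp (-21) * (Real.log 2)^2 / 9 * k / (Real.log k)^2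
        = (k:ℝ) * (Real.exp (-21) * (Real.log 2)^2 / (9 * (Real.log k)^2)) := by
          field_simp
      _ ≤ (k:ℝ) * ∏ p ∈ Q, ff p := by
          apply mul_le_mul_of_nonneg_left hprod hkR
      _ ≤ I.card := hIcard
  · intro p hp
    rcases eq_or_ne p 2 with rfl | hp2
    · exact good_two (fun i => (hodd i).1) (fun i => (hodd i).2) I
    · by_cases hpQ : p ∈ Q
      · exact hIgood p hpQ
      · have hplarge : 2*k+3 ≤ p := by
          by_contra h
          push_neg at h
          exact hpQ (Finset.mem_filter.mpr ⟨Finset.mem_range.mpr h, hp, hp2⟩)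
        have hIk : I.card ≤ k := by
          have := Finset.card_le_univ I
          simpa using this
        exact good_large hco hp I (by omega)
end

section
/- For any k ≥ 1, ∑_{n ≤ x, P⁺(n) ≤ y} r_2(n)^k ≪_k x / (log x)^4, where y = x^{1/log log x} and P⁺(n) denotes the largest prime factor of n. -/
open scoped Classical

/-- `r₂(n)`: number of ordered pairs of primes `(p,q)` with `p² + q² = n`. -/
noncomputable def r2 (n : ℕ) : ℕ :=
  Nat.card {pq : ℕ × ℕ // pq.1.Prime ∧ pq.2.Prime ∧ pq.1 ^ 2 + pq.2 ^ 2 = n}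

def r2set (n : ℕ) : Finset (ℕ × ℕ) :=
  (Finset.range (n+1) ×ˢ Finset.range (n+1)).filter
    (fun pq => pq.1.Prime ∧ pq.2.Prime ∧ pq.1 ^ 2 + pq.2 ^ 2 = n)

lemma mem_r2set {n : ℕ} {pq : ℕ × ℕ} :
    pq ∈ r2set n ↔ pq.1.Prime ∧ pq.2.Prime ∧ pq.1 ^ 2 + pq.2 ^ 2 = n := by
  simp only [r2set, Finset.mem_filter, Finset.mem_product, Finset.mem_range]
  constructor
  · tauto
  · rintro ⟨h1, h2, h3⟩
    refine ⟨⟨?_, ?_⟩, h1, h2, h3⟩ <;> nlinarith [h1.two_le, h2.two_le]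

lemma r2_eq_card (n : ℕ) : r2 n = (r2set n).card := by
  rw [← Nat.card_eq_finsetCard]
  exact Nat.card_congr <| Equiv.subtypeEquivRight fun pq => by
    simpa using mem_r2set.symm
open scoped Classical

-- helper: for a pair in "S1", local divisibility dichotomy at odd primes r ∣ n
lemma key_notboth {n p q p₀ q₀ : ℕ} (hp : p.Prime) (hq₀ : q₀.Prime)
    (hpn : ¬ p ∣ n) (hq₀n : ¬ q₀ ∣ n)
    {r : ℕ} (hr : r.Prime) (hrn : r ∣ n) (hr2 : r ≠ 2) :
    ¬(((r:ℤ) ∣ ((p:ℤ)*q₀ - (q:ℤ)*p₀)) ∧ ((r:ℤ) ∣ ((p:ℤ)*q₀ + (q:ℤ)*p₀))) := by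
  rintro ⟨hd, hs⟩
  have h2 : (r:ℤ) ∣ 2*(p*q₀) := by
    have := dvd_add hd hs
    have e : ((p:ℤ)*q₀ - (q:ℤ)*p₀) + ((p:ℤ)*q₀ + (q:ℤ)*p₀) = 2*(p*q₀) := by ring
    rwa [e] at this
  have h3 : r ∣ 2*(p*q₀) := by exact_mod_cast h2
  rcases (Nat.Prime.dvd_mul hr).mp h3 with h | h
  · exact hr2 (Nat.le_antisymm (Nat.le_of_dvd two_pos h) hr.two_le)
  · rcases (Nat.Prime.dvd_mul hr).mp h with h | h
    · exact hpn (((Nat.prime_dvd_prime_iff_eq hr hp).mp h) ▸ hrn)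
    · exact hq₀n (((Nat.prime_dvd_prime_iff_eq hr hq₀).mp h) ▸ hrn)

lemma key_side {n p q p₀ q₀ : ℕ} (hp : p.Prime) (hq₀ : q₀.Prime)
    (hpn : ¬ p ∣ n) (hq₀n : ¬ q₀ ∣ n)
    (hprod : (n:ℤ) ∣ ((p:ℤ)*q₀ - (q:ℤ)*p₀) * ((p:ℤ)*q₀ + (q:ℤ)*p₀))
    {r : ℕ} (hr : r.Prime) (hrn : r ∣ n) (hr2 : r ≠ 2) :
    ((r:ℤ)^(n.factorization r) ∣ ((p:ℤ)*q₀ - (q:ℤ)*p₀)) ∨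
      ((r:ℤ)^(n.factorization r) ∣ ((p:ℤ)*q₀ + (q:ℤ)*p₀)) := by
  have hre : (r:ℤ)^(n.factorization r) ∣ ((p:ℤ)*q₀ - (q:ℤ)*p₀) * ((p:ℤ)*q₀ + (q:ℤ)*p₀) := by
    refine dvd_trans ?_ hprod
    exact_mod_cast Nat.cast_dvd_cast (Nat.ordProj_dvd n r)
  have hrZ : Prime (r:ℤ) := Nat.prime_iff_prime_int.mp hr
  by_cases hd : (r:ℤ) ∣ ((p:ℤ)*q₀ - (q:ℤ)*p₀)
  · left
    have hnd : ¬ (r:ℤ) ∣ ((p:ℤ)*q₀ + (q:ℤ)*p₀) :=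
      fun hs => key_notboth hp hq₀ hpn hq₀n hr hrn hr2 ⟨hd, hs⟩
    exact ((hrZ.coprime_iff_not_dvd.mpr hnd).pow_left).dvd_of_dvd_mul_right hre
  · right
    exact ((hrZ.coprime_iff_not_dvd.mpr hd).pow_left).dvd_of_dvd_mul_left hre

-- parity helper: if 4 ∣ n, no pair in S1
lemma key_four {n p q : ℕ} (hp : p.Prime) (hq : q.Prime) (h : p^2 + q^2 = n)
    (hpn : ¬ p ∣ n) (h4 : 4 ∣ n) : False := by
  rcases Nat.even_or_odd p with hep | hop
  · have : p = 2 := (Nat.Prime.even_iff hp).mp hep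
    exact hpn (this ▸ dvd_trans (by norm_num) h4)
  · rcases Nat.even_or_odd q with heq | hoq
    · have hq2 : q = 2 := (Nat.Prime.even_iff hq).mp heq
      -- then p^2 = n - 4, p odd, and 4 ∣ n → p^2 ≡ 0 mod 4, but p odd
      obtain ⟨m, hm⟩ := hop
      have e1 : p^2 = 4*(m*m+m) + 1 := by subst hm; ring
      have e2 : q^2 = 4 := by rw [hq2]; norm_num
      omega
    · obtain ⟨m, hm⟩ := hop
      obtain ⟨l, hl⟩ := hoq
      have e1 : p^2 = 4*(m*m+m) + 1 := by subst hm; ring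
      have e2 : q^2 = 4*(l*l+l) + 1 := by subst hl; ring
      omega

lemma key_size {n p1 q1 p2 q2 : ℕ} (h31 : p1^2 + q1^2 = n) (h32 : p2^2 + q2^2 = n)
    (t1 : 2 ≤ q1) (t2 : 2 ≤ p2) (t3 : 2 ≤ p1) (t4 : 2 ≤ q2) :
    |(p1:ℤ)*q2 - (p2:ℤ)*q1| < n := by
  have s1 : (p1:ℤ)^2 + (q1:ℤ)^2 = n := by exact_mod_cast h31
  have s2 : (p2:ℤ)^2 + (q2:ℤ)^2 = n := by exact_mod_cast h32
  have u1 : (2:ℤ) ≤ q1 := by exact_mod_cast t1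
  have u2 : (2:ℤ) ≤ p2 := by exact_mod_cast t2
  have u3 : (2:ℤ) ≤ p1 := by exact_mod_cast t3
  have u4 : (2:ℤ) ≤ q2 := by exact_mod_cast t4
  rw [abs_sub_lt_iff]
  constructor
  · nlinarith [sq_nonneg ((p1:ℤ) - q2), mul_pos (by linarith : (0:ℤ) < p2) (by linarith : (0:ℤ) < q1)]
  · nlinarith [sq_nonneg ((p2:ℤ) - q1), mul_pos (by linarith : (0:ℤ) < p1) (by linarith : (0:ℤ) < q2)]

lemma r2set_card_le {n : ℕ} (hn : n ≠ 0) : (r2set n).card ≤ n.divisors.card + 1 := by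
  classical
  set S1 := (r2set n).filter (fun pq => ¬ pq.1 ∣ n ∧ ¬ pq.2 ∣ n) with hS1
  set S0 := (r2set n).filter (fun pq => ¬(¬ pq.1 ∣ n ∧ ¬ pq.2 ∣ n)) with hS0
  have hsplit : S1.card + S0.card = (r2set n).card :=
    Finset.card_filter_add_card_filter_not _
  -- S0 has at most one element
  have hS0mem : ∀ pq ∈ S0, pq.1 = pq.2 ∧ 2 * pq.1^2 = n := by
    rintro ⟨p, q⟩ hpq
    simp only [hS0, Finset.mem_filter, mem_r2set, not_and, not_not] at hpq
    obtain ⟨⟨hp, hq, h3⟩, hdvd⟩ := hpq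
    have key : p = q := by
      by_cases hpn : p ∣ n
      · have : p ∣ q^2 := (Nat.dvd_add_right (dvd_pow_self p two_ne_zero)).mp (h3 ▸ hpn)
        exact (Nat.prime_dvd_prime_iff_eq hp hq).mp (hp.dvd_of_dvd_pow this)
      · have hqn := hdvd hpn
        have : q ∣ p^2 := (Nat.dvd_add_left (dvd_pow_self q two_ne_zero)).mp (h3 ▸ hqn)
        exact ((Nat.prime_dvd_prime_iff_eq hq hp).mp (hq.dvd_of_dvd_pow this)).symm
    exact ⟨key, by subst key; linarith⟩
  have hS0card : S0.card ≤ 1 := by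
    refine Finset.card_le_one.mpr fun a ha b hb => ?_
    obtain ⟨ha1, ha2⟩ := hS0mem a ha
    obtain ⟨hb1, hb2⟩ := hS0mem b hb
    have : a.1 = b.1 := by nlinarith
    exact Prod.ext this (by rw [← ha1, ← hb1, this])
  -- S1 injects into divisors
  have hS1card : S1.card ≤ n.divisors.card := by
    rcases Finset.eq_empty_or_nonempty S1 with he | ⟨⟨p₀, q₀⟩, hx0⟩
    · simp [he]
    have hx0' := hx0
    simp only [hS1, Finset.mem_filter, mem_r2set] at hx0'
    obtain ⟨⟨hp₀, hq₀, h₀⟩, hp₀n, hq₀n⟩ := hx0'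
    set Φ : ℕ × ℕ → ℕ := fun pq => Int.gcd (n:ℤ) ((pq.1:ℤ)*q₀ - (pq.2:ℤ)*p₀) with hΦ
    -- facts for members of S1
    have hmem : ∀ pq ∈ S1, pq.1.Prime ∧ pq.2.Prime ∧ pq.1^2 + pq.2^2 = n
        ∧ ¬ pq.1 ∣ n ∧ ¬ pq.2 ∣ n := by
      intro pq hpq
      simp only [hS1, Finset.mem_filter, mem_r2set] at hpq
      tauto
    have hprod : ∀ pq ∈ S1, (n:ℤ) ∣ ((pq.1:ℤ)*q₀ - (pq.2:ℤ)*p₀) * ((pq.1:ℤ)*q₀ + (pq.2:ℤ)*p₀) := by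
      intro pq hpq
      obtain ⟨hp, hq, h3, hpn, hqn⟩ := hmem pq hpq
      refine ⟨(q₀:ℤ)^2 - (pq.2:ℤ)^2, ?_⟩
      have h3' : (pq.1:ℤ)^2 + (pq.2:ℤ)^2 = n := by exact_mod_cast h3
      have h₀' : (p₀:ℤ)^2 + (q₀:ℤ)^2 = n := by exact_mod_cast h₀
      linear_combination (q₀:ℤ)^2 * h3' - (pq.2:ℤ)^2 * h₀'
    refine Finset.card_le_card_of_injOn Φ ?_ ?_
    · -- maps into divisors
      intro pq hpq
      rw [Finset.mem_coe, Nat.mem_divisors]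
      constructor
      · exact Int.natCast_dvd_natCast.mp (Int.gcd_dvd_left _ _)
      · exact hn
    · -- injectivity
      rintro ⟨p1, q1⟩ ha ⟨p2, q2⟩ hb heq
      obtain ⟨hp1, hq1, h31, hp1n, hq1n⟩ := hmem _ ha
      obtain ⟨hp2, hq2, h32, hp2n, hq2n⟩ := hmem _ hb
      simp only [hΦ] at heq
      set X : ℤ := (p1:ℤ)*q2 - (p2:ℤ)*q1 with hX
      -- key: n ∣ X
      have hdvdX : (n:ℤ) ∣ X := by
        rcases eq_or_ne X 0 with h0 | h0
        · simp [h0]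
        have hXnat : X.natAbs ≠ 0 := Int.natAbs_ne_zero.mpr h0
        have hfact : n ∣ X.natAbs := by
          rw [← Nat.factorization_le_iff_dvd hn hXnat]
          rw [Finsupp.le_def]
          intro r
          by_cases hr : r.Prime
          swap
          · simp [Nat.factorization_eq_zero_of_not_prime _ hr]
          rw [← Nat.Prime.pow_dvd_iff_le_factorization hr hXnat, ← Int.natCast_dvd_natCast]
          push_cast
          rw [dvd_abs]
          rcases eq_or_ne r 2 with hr2 | hr2
          · -- r = 2 case
            subst hr2
            have he1 : n.factorization 2 ≤ 1 := by
              by_contra hc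
              push_neg at hc
              have h4 : 4 ∣ n := by
                have : 2^2 ∣ 2^(n.factorization 2) := pow_dvd_pow 2 hc
                exact dvd_trans (by norm_num at this ⊢; exact this) (Nat.ordProj_dvd n 2)
              exact key_four hp1 hq1 h31 hp1n h4
            interval_cases h : n.factorization 2
            · simpa using one_dvd X
            · -- need 2 ∣ X; if 2 ∤ n trivialize via h : factorization = 1 means 2 ∣ n
              have h2n : 2 ∣ n := by
                have := Nat.ordProj_dvd n 2
                rw [h] at this; simpa using this
              have hodd : ∀ m : ℕ, m.Prime → ¬ m ∣ n → ¬ (2:ℤ) ∣ (m:ℤ) := by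
                intro m hm hmn hdd
                have : (2:ℕ) ∣ m := by exact_mod_cast hdd
                have : m = 2 := ((Nat.prime_dvd_prime_iff_eq Nat.prime_two hm).mp this).symm
                exact hmn (this ▸ h2n)
              have o1 := hodd _ hp1 hp1n
              have o2 := hodd _ hq2 hq2n
              have o3 := hodd _ hp2 hp2n
              have o4 := hodd _ hq1 hq1n
              have : (2:ℤ) ∣ X := by
                rw [hX]
                rcases Int.even_or_odd (p1:ℤ) with hE | hO
                · exact absurd hE.two_dvd o1
                rcases Int.even_or_odd (q2:ℤ) with hE | hO2
                · exact absurd hE.two_dvd o2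
                rcases Int.even_or_odd (p2:ℤ) with hE | hO3
                · exact absurd hE.two_dvd o3
                rcases Int.even_or_odd (q1:ℤ) with hE | hO4
                · exact absurd hE.two_dvd o4
                have : Even ((p1:ℤ)*q2 - (p2:ℤ)*q1) :=
                  Int.even_sub.mpr (by
                    constructor <;> intro hc
                    · exact absurd hc (Int.not_even_iff_odd.mpr (hO.mul hO2))
                    · exact absurd hc (Int.not_even_iff_odd.mpr (hO3.mul hO4)))
                exact this.two_dvd
              simpa using this
          · -- r odd
            rcases Nat.eq_zero_or_pos (n.factorization r) with h0' | hpos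
            · simp [h0']
            have hrn : r ∣ n := by
              have := Nat.ordProj_dvd n r
              exact dvd_trans (dvd_pow_self r hpos.ne') this
            have side1 := key_side hp1 hq₀ hp1n hq₀n (hprod _ ha) hr hrn hr2
            have side2 := key_side hp2 hq₀ hp2n hq₀n (hprod _ hb) hr hrn hr2
            have hrq₀ : ¬ (r:ℤ) ∣ (q₀:ℤ) := by
              intro hdd
              have : r ∣ q₀ := by exact_mod_cast hdd
              exact hq₀n (((Nat.prime_dvd_prime_iff_eq hr hq₀).mp this) ▸ hrn)
            have hcop : IsCoprime ((r:ℤ)^(n.factorization r)) (q₀:ℤ) :=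
              (((Nat.prime_iff_prime_int.mp hr).coprime_iff_not_dvd.mpr hrq₀)).pow_left
            have hrdvd_of : ∀ (d : ℤ), (r:ℤ)^(n.factorization r) ∣ d → (r:ℤ) ∣ d := by
              intro d hd
              exact dvd_trans (dvd_pow_self (r:ℤ) hpos.ne') hd
            rcases side1 with hd1 | hs1 <;> rcases side2 with hd2 | hs2
            · -- both difference
              have : (r:ℤ)^(n.factorization r) ∣ (q₀:ℤ) * X := by
                have e : (q₀:ℤ) * X = (q2:ℤ)*((p1:ℤ)*q₀ - (q1:ℤ)*p₀)
                    - (q1:ℤ)*((p2:ℤ)*q₀ - (q2:ℤ)*p₀) := by rw [hX]; ring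
                rw [e]
                exact dvd_sub (Dvd.dvd.mul_left hd1 _) (Dvd.dvd.mul_left hd2 _)
              exact hcop.dvd_of_dvd_mul_left this
            · -- mixed: contradiction
              exfalso
              have hr1 : (r:ℤ) ∣ (p1:ℤ)*q₀ - (q1:ℤ)*p₀ := hrdvd_of _ hd1
              have hrg : (r:ℕ) ∣ Int.gcd (n:ℤ) ((p1:ℤ)*q₀ - (q1:ℤ)*p₀) := by
                rw [← Int.natCast_dvd_natCast]
                exact_mod_cast Int.dvd_gcd (by exact_mod_cast Nat.cast_dvd_cast hrn) hr1
              rw [heq] at hrg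
              have hr2' : (r:ℤ) ∣ (p2:ℤ)*q₀ - (q2:ℤ)*p₀ := by
                refine dvd_trans ?_ (Int.gcd_dvd_right (a := (n:ℤ)) (b := (p2:ℤ)*q₀ - (q2:ℤ)*p₀))
                exact_mod_cast Nat.cast_dvd_cast hrg
              exact key_notboth hp2 hq₀ hp2n hq₀n hr hrn hr2 ⟨hr2', hrdvd_of _ hs2⟩
            · -- mixed other way
              exfalso
              have hr2'' : (r:ℤ) ∣ (p2:ℤ)*q₀ - (q2:ℤ)*p₀ := hrdvd_of _ hd2
              have hrg : (r:ℕ) ∣ Int.gcd (n:ℤ) ((p2:ℤ)*q₀ - (q2:ℤ)*p₀) := by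
                rw [← Int.natCast_dvd_natCast]
                exact_mod_cast Int.dvd_gcd (by exact_mod_cast Nat.cast_dvd_cast hrn) hr2''
              rw [← heq] at hrg
              have hr1' : (r:ℤ) ∣ (p1:ℤ)*q₀ - (q1:ℤ)*p₀ := by
                refine dvd_trans ?_ (Int.gcd_dvd_right (a := (n:ℤ)) (b := (p1:ℤ)*q₀ - (q1:ℤ)*p₀))
                exact_mod_cast Nat.cast_dvd_cast hrg
              exact key_notboth hp1 hq₀ hp1n hq₀n hr hrn hr2 ⟨hr1', hrdvd_of _ hs1⟩
            · -- both sum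
              have : (r:ℤ)^(n.factorization r) ∣ (q₀:ℤ) * X := by
                have e : (q₀:ℤ) * X = (q2:ℤ)*((p1:ℤ)*q₀ + (q1:ℤ)*p₀)
                    - (q1:ℤ)*((p2:ℤ)*q₀ + (q2:ℤ)*p₀) := by rw [hX]; ring
                rw [e]
                exact dvd_sub (Dvd.dvd.mul_left hs1 _) (Dvd.dvd.mul_left hs2 _)
              exact hcop.dvd_of_dvd_mul_left this
        calc (n:ℤ) ∣ (X.natAbs : ℤ) := by exact_mod_cast Nat.cast_dvd_cast hfact
          _ ∣ X := Int.natAbs_dvd.mpr dvd_rfl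
      -- size bound: |X| < n
      have hXzero : X = 0 :=
        Int.eq_zero_of_abs_lt_dvd hdvdX
          (key_size h31 h32 hq1.two_le hp2.two_le hp1.two_le hq2.two_le)
      -- conclude equality
      have hXnat : p1 * q2 = p2 * q1 := by
        have : (p1:ℤ)*q2 = (p2:ℤ)*q1 := by linarith [sub_eq_zero.mp (hX ▸ hXzero)]
        exact_mod_cast this
      have hp1d : p1 ∣ p2 * q1 := hXnat ▸ Dvd.intro q2 rfl
      rcases (Nat.Prime.dvd_mul hp1).mp hp1d with h | h
      · have hpp : p1 = p2 := (Nat.prime_dvd_prime_iff_eq hp1 hp2).mp h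
        have hqq : q1 = q2 := by
          subst hpp
          have := hp1.pos
          have : q2 = q1 := Nat.eq_of_mul_eq_mul_left this hXnat
          omega
        exact Prod.ext hpp hqq
      · exfalso
        have : p1 = q1 := (Nat.prime_dvd_prime_iff_eq hp1 hq1).mp h
        apply hp1n
        refine ⟨2 * p1, ?_⟩
        rw [← h31, ← this]; ring
  omega

open Finset

lemma block_card_mul_le (j : ℕ) :
    (((2^(j+1)).primesBelow.filter (fun p => 2^j ≤ p)).card) * j ≤ 2^(j+2) := by
  set B := ((2^(j+1)).primesBelow.filter (fun p => 2^j ≤ p)) with hB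
  have h1 : (2^j)^B.card ≤ ∏ p ∈ B, p :=
    Finset.pow_card_le_prod _ _ _ (fun x hx => (Finset.mem_filter.mp hx).2)
  have h2 : ∏ p ∈ B, p ≤ primorial (2^(j+1)) := by
    apply Finset.prod_le_prod_of_subset_of_one_le'
    · intro p hp
      simp only [hB, Finset.mem_filter] at hp
      obtain ⟨hp1, _⟩ := hp
      simp only [primorial, Finset.mem_filter, Finset.mem_range]
      exact ⟨Nat.lt_succ_of_lt (Nat.lt_of_mem_primesBelow hp1),
        Nat.prime_of_mem_primesBelow hp1⟩
    · intro p hp _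
      simp only [primorial, Finset.mem_filter] at hp
      exact hp.2.one_lt.le
  have h3 : primorial (2^(j+1)) ≤ 4^(2^(j+1)) := primorial_le_4_pow _
  have h4 : (2:ℕ)^(B.card * j) ≤ 2^(2^(j+2)) := by
    calc (2:ℕ)^(B.card * j) = (2^j)^B.card := by rw [pow_mul']
    _ ≤ ∏ p ∈ B, p := h1
    _ ≤ 4^(2^(j+1)) := le_trans h2 h3
    _ = 2^(2^(j+2)) := by
        rw [show (4:ℕ) = 2^2 by norm_num, ← pow_mul]
        congr 1
        rw [pow_succ 2 (j+1)]; ring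
  exact (Nat.pow_le_pow_iff_right one_lt_two).mp h4

lemma fiber_subset_block (N j : ℕ) :
    (N.primesBelow.filter (fun p => Nat.log 2 p = j)) ⊆
      ((2^(j+1)).primesBelow.filter (fun p => 2^j ≤ p)) := by
  intro p hp
  simp only [Finset.mem_filter] at hp ⊢
  obtain ⟨hp1, hp2⟩ := hp
  have hpp := Nat.prime_of_mem_primesBelow hp1
  have h2 : 2^j ≤ p := by rw [← hp2]; exact Nat.pow_log_le_self 2 hpp.pos.ne'
  have h3 : p < 2^(j+1) := by rw [← hp2]; exact Nat.lt_pow_succ_log_self one_lt_two p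
  exact ⟨Nat.mem_primesBelow.mpr ⟨h3, hpp⟩, h2⟩

lemma fiber_card_real (N j : ℕ) (hj : 1 ≤ j) :
    ((N.primesBelow.filter (fun p => Nat.log 2 p = j)).card : ℝ) * j ≤ 2^(j+2) := by
  have h := le_trans
    (Nat.mul_le_mul_right j (Finset.card_le_card (fiber_subset_block N j)))
    (block_card_mul_le j)
  exact_mod_cast h

lemma maps_to_Icc {N : ℕ} : ∀ p ∈ N.primesBelow, Nat.log 2 p ∈ Finset.Icc 1 (Nat.log 2 N) := by
  intro p hp
  rw [Finset.mem_Icc]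
  exact ⟨Nat.log_pos one_lt_two (Nat.prime_of_mem_primesBelow hp).two_le,
    Nat.log_mono_right (le_of_lt (Nat.lt_of_mem_primesBelow hp))⟩

lemma J_le (N : ℕ) (hN : 2 ≤ N) : (Nat.log 2 N : ℝ) ≤ 2 * Real.log N := by
  have h1 : (2:ℕ)^(Nat.log 2 N) ≤ N := Nat.pow_log_le_self 2 (by omega)
  have h2 : ((2:ℝ))^(Nat.log 2 N) ≤ (N:ℝ) := by exact_mod_cast h1
  have h3 : (Nat.log 2 N : ℝ) * Real.log 2 ≤ Real.log N := by
    rw [← Real.log_pow]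
    exact Real.log_le_log (by positivity) h2
  nlinarith [Real.log_two_gt_d9, Real.log_nonneg (by exact_mod_cast Nat.one_le_cast.mpr (by omega) : (1:ℝ) ≤ N)]

lemma mertens1 (N : ℕ) (hN : 2 ≤ N) :
    ∑ p ∈ N.primesBelow, Real.log p / p ≤ 12 * Real.log N := by
  set J := Nat.log 2 N with hJ
  rw [← Finset.sum_fiberwise_of_maps_to maps_to_Icc (fun p => Real.log p / p)]
  have hinner : ∀ j ∈ Finset.Icc 1 J,
      ∑ p ∈ N.primesBelow.filter (fun p => Nat.log 2 p = j), Real.log p / p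
        ≤ 8 * Real.log 2 := by
    intro j hj
    rw [Finset.mem_Icc] at hj
    obtain ⟨hj1, hj2⟩ := hj
    set fib := N.primesBelow.filter (fun p => Nat.log 2 p = j) with hfib
    have hjR : (1:ℝ) ≤ j := by exact_mod_cast hj1
    have hterm : ∀ p ∈ fib, Real.log p / p ≤ ((j:ℝ)+1) * Real.log 2 / 2^j := by
      intro p hp
      have hp' := Finset.mem_filter.mp hp
      have hblock := fiber_subset_block N j hp
      have hblock' := Finset.mem_filter.mp hblock
      have hple : (p:ℝ) < 2^(j+1) := by
        exact_mod_cast Nat.lt_of_mem_primesBelow hblock'.1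
      have hpge : ((2:ℝ))^j ≤ p := by exact_mod_cast hblock'.2
      have hppos : (0:ℝ) < p := lt_of_lt_of_le (by positivity) hpge
      refine div_le_div₀ (by positivity) ?_ (by positivity) hpge
      calc Real.log p ≤ Real.log (2^(j+1)) :=
            Real.log_le_log hppos (le_of_lt hple)
      _ = ((j:ℝ)+1) * Real.log 2 := by rw [Real.log_pow]; push_cast; ring
    calc ∑ p ∈ fib, Real.log p / p ≤ fib.card • (((j:ℝ)+1) * Real.log 2 / 2^j) :=
          Finset.sum_le_card_nsmul _ _ _ hterm
    _ = (fib.card : ℝ) * (((j:ℝ)+1) * Real.log 2 / 2^j) := by rw [nsmul_eq_mul]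
    _ ≤ 8 * Real.log 2 := by
        have hc := fiber_card_real N j hj1
        have h2j : (0:ℝ) < 2^j := by positivity
        have hlog2 : (0:ℝ) < Real.log 2 := Real.log_pos one_lt_two
        rw [div_eq_mul_inv]
        have hj1R : (j:ℝ)+1 ≤ 2*j := by linarith
        have hcard : (fib.card : ℝ) ≤ 2^(j+2) / j := by
          rw [le_div_iff₀ (by linarith : (0:ℝ) < (j:ℝ))]
          exact hc
        calc (fib.card : ℝ) * (((j:ℝ)+1) * Real.log 2 * ((2:ℝ)^j)⁻¹)
            ≤ (2^(j+2)/j) * (((j:ℝ)+1) * Real.log 2 * ((2:ℝ)^j)⁻¹) := by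
              apply mul_le_mul_of_nonneg_right hcard
              positivity
        _ ≤ (2^(j+2)/j) * ((2*(j:ℝ)) * Real.log 2 * ((2:ℝ)^j)⁻¹) := by
              apply mul_le_mul_of_nonneg_left _ (by positivity)
              apply mul_le_mul_of_nonneg_right _ (by positivity)
              exact mul_le_mul_of_nonneg_right hj1R hlog2.le
        _ = 8 * Real.log 2 * ((2^j) * (2^j)⁻¹) * ((j:ℝ) * ((j:ℝ))⁻¹) := by
              rw [pow_add]
              field_simp
              ring
        _ = 8 * Real.log 2 := by
              rw [mul_inv_cancel₀ (by positivity : ((2:ℝ)^j) ≠ 0),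
                mul_inv_cancel₀ (by linarith : ((j:ℝ)) ≠ 0)]
              ring
  calc ∑ j ∈ Finset.Icc 1 J, ∑ p ∈ N.primesBelow.filter (fun p => Nat.log 2 p = j),
          Real.log p / p ≤ ∑ j ∈ Finset.Icc 1 J, 8 * Real.log 2 :=
        Finset.sum_le_sum hinner
  _ = (J:ℝ) * (8 * Real.log 2) := by rw [Finset.sum_const, Nat.card_Icc]; simp [nsmul_eq_mul]
  _ ≤ 12 * Real.log N := by
      have := J_le N hN
      have hl2 : Real.log 2 < 0.75 := by
        have := Real.log_two_lt_d9
        linarith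
      have hl2' : (0:ℝ) < Real.log 2 := Real.log_pos one_lt_two
      have hlogN : 0 ≤ Real.log N := Real.log_nonneg (by exact_mod_cast Nat.one_le_cast.mpr (by omega))
      nlinarith

lemma sum_inv_Icc_le (J : ℕ) (hJ : 1 ≤ J) :
    ∑ j ∈ Finset.Icc 1 J, (1:ℝ)/j ≤ 1 + Real.log J := by
  have h1 : ∑ j ∈ Finset.Icc 1 J, (1:ℝ)/j = ((harmonic J : ℚ) : ℝ) := by
    rw [harmonic_eq_sum_Icc]
    push_cast
    simp [one_div]
  rw [h1]
  exact harmonic_le_one_add_log J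

lemma mertens2 (N : ℕ) (hN : 16 ≤ N) :
    ∑ p ∈ N.primesBelow, (1:ℝ)/p ≤ 12 * Real.log (Real.log N) := by
  set J := Nat.log 2 N with hJ
  have hJ1 : 1 ≤ J := Nat.log_pos one_lt_two (by omega)
  rw [← Finset.sum_fiberwise_of_maps_to maps_to_Icc (fun p => (1:ℝ)/p)]
  have hinner : ∀ j ∈ Finset.Icc 1 J,
      ∑ p ∈ N.primesBelow.filter (fun p => Nat.log 2 p = j), (1:ℝ)/p ≤ 4 * (1/j) := by
    intro j hj
    rw [Finset.mem_Icc] at hj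
    obtain ⟨hj1, _⟩ := hj
    set fib := N.primesBelow.filter (fun p => Nat.log 2 p = j) with hfib
    have hjpos : (0:ℝ) < j := by exact_mod_cast hj1
    have hterm : ∀ p ∈ fib, (1:ℝ)/p ≤ 1/2^j := by
      intro p hp
      have hblock' := Finset.mem_filter.mp (fiber_subset_block N j hp)
      have hpge : ((2:ℝ))^j ≤ p := by exact_mod_cast hblock'.2
      exact div_le_div₀ zero_le_one le_rfl (by positivity) hpge
    calc ∑ p ∈ fib, (1:ℝ)/p ≤ fib.card • ((1:ℝ)/2^j) :=
          Finset.sum_le_card_nsmul _ _ _ hterm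
    _ = (fib.card : ℝ) * (1/2^j) := by rw [nsmul_eq_mul]
    _ ≤ 4 * (1/j) := by
        have hc := fiber_card_real N j hj1
        have h2j : (0:ℝ) < 2^j := by positivity
        rw [div_eq_mul_inv, div_eq_mul_inv]
        have hcard : (fib.card : ℝ) ≤ 2^(j+2) / j := by
          rw [le_div_iff₀ hjpos]; exact hc
        calc (fib.card:ℝ) * (1 * ((2:ℝ)^j)⁻¹) ≤ (2^(j+2)/j) * (1 * ((2:ℝ)^j)⁻¹) := by
              apply mul_le_mul_of_nonneg_right hcard (by positivity)
        _ = 4 * ((j:ℝ))⁻¹ * ((2^j) * (2^j)⁻¹) := by rw [pow_add]; field_simp; ring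
        _ = 4 * (1 * ((j:ℝ))⁻¹) := by rw [mul_inv_cancel₀ (ne_of_gt h2j)]; ring
  calc ∑ j ∈ Finset.Icc 1 J, ∑ p ∈ N.primesBelow.filter (fun p => Nat.log 2 p = j), (1:ℝ)/p
      ≤ ∑ j ∈ Finset.Icc 1 J, (4:ℝ) * (1/(j:ℝ)) := Finset.sum_le_sum hinner
  _ = 4 * ∑ j ∈ Finset.Icc 1 J, (1:ℝ)/j := by rw [Finset.mul_sum]
  _ ≤ 4 * (1 + Real.log J) := by
      have := sum_inv_Icc_le J hJ1
      linarith
  _ ≤ 12 * Real.log (Real.log N) := by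
      -- log J ≤ log (2 log N) = log 2 + log log N
      have hN1 : (1:ℝ) < N := by exact_mod_cast (by omega : 1 < N)
      have hlogN : Real.log 16 ≤ Real.log N :=
        Real.log_le_log (by norm_num) (by exact_mod_cast hN)
      have h16 : (2.77:ℝ) < Real.log 16 := by
        rw [show (16:ℝ) = 2^4 by norm_num, Real.log_pow]
        have := Real.log_two_gt_d9
        push_cast
        nlinarith
      have hloglogN : (1:ℝ) ≤ Real.log (Real.log N) := by
        have h27 : (2.77:ℝ) ≤ Real.log N := by linarith
        rw [Real.le_log_iff_exp_le (by linarith)]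
        have := Real.exp_one_lt_d9
        linarith
      have hJle : (J:ℝ) ≤ 2 * Real.log N := J_le N (by omega)
      have hJR : (1:ℝ) ≤ (J:ℝ) := by exact_mod_cast hJ1
      have hlogJ : Real.log J ≤ Real.log 2 + Real.log (Real.log N) := by
        calc Real.log J ≤ Real.log (2 * Real.log N) :=
              Real.log_le_log (by linarith) hJle
        _ = Real.log 2 + Real.log (Real.log N) := by
              rw [Real.log_mul (by norm_num) (by nlinarith [Real.log_two_gt_d9] : Real.log N ≠ 0)]
      have hl2 : Real.log 2 < 0.75 := by have := Real.log_two_lt_d9; linarith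
      nlinarith

lemma exp_le_aux {t A : ℝ} (ht : 0 ≤ t) (htA : t ≤ A) :
    Real.exp t ≤ 1 + t * Real.exp A := by
  have h1 : (1 - t) * Real.exp t ≤ 1 := by
    have := mul_le_mul_of_nonneg_right (Real.add_one_le_exp (-t)) (Real.exp_pos t).le
    rwa [← Real.exp_add, neg_add_cancel, Real.exp_zero, neg_add_eq_sub] at this
  nlinarith [Real.exp_le_exp.mpr htA, Real.exp_pos t]

lemma one_le_loglog {x : ℝ} (hx : 16 ≤ x) : 1 ≤ Real.log (Real.log x) := by
  have h16 : (2.77:ℝ) < Real.log 16 := by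
    rw [show (16:ℝ) = 2^4 by norm_num, Real.log_pow]
    have := Real.log_two_gt_d9
    push_cast
    nlinarith
  have h27 : (2.77:ℝ) ≤ Real.log x := by
    have := Real.log_le_log (by norm_num : (0:ℝ) < 16) hx
    linarith
  rw [Real.le_log_iff_exp_le (by linarith)]
  have := Real.exp_one_lt_d9
  linarith

lemma mertens_sigma {A y : ℝ} (hA : 1 ≤ A) (h16 : 16 ≤ y) (hAy : 4*A ≤ Real.log y) :
    ∑ p ∈ (⌊y⌋₊+1).primesBelow, (p:ℝ)^(-(1 - A/Real.log y))
      ≤ 24 * Real.log (Real.log y) + 24 * (A * Real.exp A) := by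
  set N := ⌊y⌋₊ + 1 with hN
  set L := Real.log y with hL
  have hL4 : 4 ≤ L := by linarith
  have hLpos : (0:ℝ) < L := by linarith
  have hfloor : 16 ≤ ⌊y⌋₊ := Nat.le_floor (by exact_mod_cast h16)
  have hN16 : 16 ≤ N := by omega
  have hyN : ∀ p : ℕ, p ∈ N.primesBelow → (p:ℝ) ≤ y := by
    intro p hp
    have h1 : p ≤ ⌊y⌋₊ := by
      have := Nat.lt_of_mem_primesBelow hp
      omega
    calc (p:ℝ) ≤ (⌊y⌋₊ : ℝ) := by exact_mod_cast h1
    _ ≤ y := Nat.floor_le (by linarith)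
  -- pointwise bound
  have hpoint : ∀ p ∈ N.primesBelow,
      (p:ℝ)^(-(1 - A/L)) ≤ 1/p + (A * Real.exp A / L) * (Real.log p / p) := by
    intro p hp
    have hpp := Nat.prime_of_mem_primesBelow hp
    have hp2 : (2:ℝ) ≤ p := by exact_mod_cast hpp.two_le
    have hppos : (0:ℝ) < p := by linarith
    have hlogp : 0 ≤ Real.log p := Real.log_nonneg (by linarith)
    have hlogpy : Real.log p ≤ L := Real.log_le_log hppos (hyN p hp)
    set t := (A/L) * Real.log p with hT
    have ht0 : 0 ≤ t := by
      apply mul_nonneg (by positivity) hlogp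
    have htA : t ≤ A := by
      rw [hT, div_mul_eq_mul_div, div_le_iff₀ hLpos]
      nlinarith
    have hrw : (p:ℝ)^(-(1 - A/L)) = (1/p) * Real.exp t := by
      rw [show -(1 - A/L) = (-1) + A/L by ring, Real.rpow_add hppos,
        Real.rpow_neg_one, Real.rpow_def_of_pos hppos]
      rw [hT]
      ring_nf
    rw [hrw]
    have := exp_le_aux ht0 htA
    calc (1/(p:ℝ)) * Real.exp t ≤ (1/p) * (1 + t * Real.exp A) := by
          apply mul_le_mul_of_nonneg_left this (by positivity)
    _ = 1/p + (A * Real.exp A / L) * (Real.log p / p) := by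
          rw [hT]; field_simp
  calc ∑ p ∈ N.primesBelow, (p:ℝ)^(-(1 - A/L))
      ≤ ∑ p ∈ N.primesBelow, (1/p + (A * Real.exp A / L) * (Real.log p / p)) :=
        Finset.sum_le_sum hpoint
  _ = (∑ p ∈ N.primesBelow, (1:ℝ)/p)
        + (A * Real.exp A / L) * ∑ p ∈ N.primesBelow, Real.log p / p := by
      rw [Finset.sum_add_distrib, Finset.mul_sum]
  _ ≤ 12 * Real.log (Real.log N) + (A * Real.exp A / L) * (12 * Real.log N) := by
      have m2 := mertens2 N hN16
      have m1 := mertens1 N (by omega)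
      have hpos : (0:ℝ) ≤ A * Real.exp A / L := by positivity
      have := mul_le_mul_of_nonneg_left m1 hpos
      linarith
  _ ≤ 24 * Real.log (Real.log y) + 24 * (A * Real.exp A) := by
      -- log N ≤ 2 * L and loglog N ≤ 2 * loglog y
      have hNy : (N:ℝ) ≤ y + 1 := by
        rw [hN]
        push_cast
        have := Nat.floor_le (by linarith : (0:ℝ) ≤ y)
        linarith
      have hlogN : Real.log N ≤ 2 * L := by
        calc Real.log N ≤ Real.log (y^2) := by
              apply Real.log_le_log (by positivity)
              nlinarith
        _ = 2 * L := by rw [Real.log_pow]; push_cast; ring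
      have hNpos : (1:ℝ) < N := by
        have : (16:ℝ) ≤ N := by exact_mod_cast hN16
        linarith
      have hlogNpos : 0 < Real.log N := Real.log_pos hNpos
      have hll : Real.log (Real.log N) ≤ 2 * Real.log (Real.log y) := by
        have h1 : Real.log (Real.log N) ≤ Real.log (2 * L) :=
          Real.log_le_log hlogNpos hlogN
        have h2 : Real.log (2 * L) = Real.log 2 + Real.log L :=
          Real.log_mul (by norm_num) (by linarith)
        have h3 : Real.log 2 < 0.75 := by have := Real.log_two_lt_d9; linarith
        have h4 : 1 ≤ Real.log L := one_le_loglog h16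
        linarith
      have hexp : (0:ℝ) < A * Real.exp A := by positivity
      have hfrac : (A * Real.exp A / L) * (12 * Real.log N) ≤ 24 * (A * Real.exp A) := by
        rw [div_mul_eq_mul_div, div_le_iff₀ hLpos]
        calc A * Real.exp A * (12 * Real.log N) ≤ A * Real.exp A * (24 * L) := by
              apply mul_le_mul_of_nonneg_left _ hexp.le
              linarith
        _ = 24 * (A * Real.exp A) * L := by ring
      linarith

open Finset

lemma card_divisors_prime_pow' {p a : ℕ} (hp : p.Prime) :
    ((p^a).divisors.card) = a + 1 := by
  have := ArithmeticFunction.sigma_zero_apply_prime_pow (i := a) hp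
  rwa [ArithmeticFunction.sigma_zero_apply] at this

lemma summable_shift (k : ℕ) (m : ℕ) {t : ℝ} (h0 : 0 < t) (h1 : t < 1) :
    Summable (fun a : ℕ => ((a:ℝ)+m)^k * t^a) := by
  have hbase : Summable (fun n : ℕ => (n:ℝ)^k * t^n) := by
    have := summable_pow_mul_geometric_of_norm_lt_one (R := ℝ) k
      (r := t) (by rwa [Real.norm_eq_abs, abs_of_pos h0])
    exact this
  have hcomp : Summable (fun a : ℕ => ((a+m:ℕ):ℝ)^k * t^(a+m)) :=
    hbase.comp_injective (add_left_injective m)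
  have := hcomp.mul_left (t^m)⁻¹
  apply this.congr
  intro a
  have htm : (t:ℝ)^m ≠ 0 := by positivity
  push_cast
  rw [pow_add]
  field_simp

noncomputable def ckw : ℝ := (2:ℝ)^(-(3/4 : ℝ))

lemma ckw_pos : 0 < ckw := Real.rpow_pos_of_pos two_pos _

lemma ckw_lt_one : ckw < 1 :=
  Real.rpow_lt_one_of_one_lt_of_neg one_lt_two (by norm_num)

noncomputable def ck (k : ℕ) : ℝ := ∑' b : ℕ, ((b:ℝ)+2)^k * ckw^b

lemma ck_nonneg (k : ℕ) : 0 ≤ ck k :=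
  tsum_nonneg fun b => mul_nonneg (by positivity) (pow_nonneg ckw_pos.le b)

lemma rpow_neg_le_base {p : ℕ} (hp : 2 ≤ p) {σ : ℝ} (hσ : 3/4 ≤ σ) :
    (p:ℝ)^(-σ) ≤ ckw := by
  have hp2 : (2:ℝ) ≤ p := by exact_mod_cast hp
  have h1 : (p:ℝ)^(-σ) ≤ (2:ℝ)^(-σ) := by
    rw [Real.rpow_neg (by linarith), Real.rpow_neg (by norm_num)]
    apply inv_anti₀ (Real.rpow_pos_of_pos two_pos σ)
    exact Real.rpow_le_rpow (by norm_num) hp2 (by linarith)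
  have h2 : (2:ℝ)^(-σ) ≤ ckw :=
    Real.rpow_le_rpow_of_exponent_le one_le_two (by linarith)
  linarith

lemma local_bound (k : ℕ) {p : ℕ} (hp : 2 ≤ p) {σ : ℝ} (hσ : 3/4 ≤ σ) :
    ∑' a : ℕ, ((a:ℝ)+1)^k * ((p:ℝ)^(-σ))^a ≤ 1 + ck k * (p:ℝ)^(-σ) := by
  have hppos : (0:ℝ) < p := by exact_mod_cast (by omega : 0 < p)
  set t := (p:ℝ)^(-σ) with hT
  have ht0 : 0 < t := Real.rpow_pos_of_pos hppos _
  have htw : t ≤ ckw := rpow_neg_le_base hp hσ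
  have ht1 : t < 1 := lt_of_le_of_lt htw ckw_lt_one
  have hsummable : Summable (fun a : ℕ => ((a:ℝ)+1)^k * t^a) := by
    have := summable_shift k 1 ht0 ht1
    apply this.congr; intro a; push_cast; ring_nf
  have hsback : Summable (fun b : ℕ => ((b:ℝ)+2)^k * t^b) := summable_shift k 2 ht0 ht1
  have hsw : Summable (fun b : ℕ => ((b:ℝ)+2)^k * ckw^b) := summable_shift k 2 ckw_pos ckw_lt_one
  rw [hsummable.tsum_eq_zero_add]
  have hshift : ∀ b : ℕ, (((b+1:ℕ):ℝ)+1)^k * t^(b+1) = t * (((b:ℝ)+2)^k * t^b) := by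
    intro b; push_cast; ring
  calc (((0:ℕ):ℝ)+1)^k * t^(0:ℕ) + ∑' b : ℕ, (((b+1:ℕ):ℝ)+1)^k * t^(b+1)
      = 1 + t * ∑' b : ℕ, ((b:ℝ)+2)^k * t^b := by
        rw [tsum_congr hshift, tsum_mul_left]
        norm_num
  _ ≤ 1 + t * ck k := by
      have hle : ∑' b : ℕ, ((b:ℝ)+2)^k * t^b ≤ ck k := by
        apply hsback.tsum_le_tsum _ hsw
        intro b
        apply mul_le_mul_of_nonneg_left _ (by positivity)
        exact pow_le_pow_left₀ ht0.le htw b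
      nlinarith
  _ = 1 + ck k * t := by ring

lemma f_prime_pow (k : ℕ) (σ : ℝ) {p : ℕ} (hp : p.Prime) (a : ℕ) :
    (((p^a : ℕ).divisors.card : ℝ))^k * ((p^a : ℕ):ℝ)^(-σ)
      = ((a:ℝ)+1)^k * ((p:ℝ)^(-σ))^a := by
  rw [card_divisors_prime_pow' hp]
  have hppos : (0:ℝ) < p := by exact_mod_cast hp.pos
  have h2 : (((p^a : ℕ)):ℝ)^(-σ) = ((p:ℝ)^(-σ))^a := by
    push_cast
    rw [← Real.rpow_natCast ((p:ℝ)^(-σ)) a, ← Real.rpow_natCast (p:ℝ) a,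
      ← Real.rpow_mul hppos.le, ← Real.rpow_mul hppos.le]
    ring_nf
  rw [h2]
  push_cast
  ring

lemma smooth_sum_le (k : ℕ) (hk : 1 ≤ k) {σ : ℝ} (hσ : 3/4 ≤ σ) (N : ℕ)
    (F : Finset ℕ) (hF : ∀ n ∈ F, n ∈ N.smoothNumbers) :
    ∑ n ∈ F, ((n.divisors.card : ℝ))^k * (n:ℝ)^(-σ)
      ≤ Real.exp (ck k * ∑ p ∈ N.primesBelow, (p:ℝ)^(-σ)) := by
  set f : ℕ → ℝ := fun n => ((n.divisors.card : ℝ))^k * (n:ℝ)^(-σ) with hf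
  have hf0 : ∀ n, 0 ≤ f n := by
    intro n
    apply mul_nonneg (by positivity) (Real.rpow_nonneg (by positivity) _)
  have hf1 : f 1 = 1 := by simp [hf]
  have hmul : ∀ {m n : ℕ}, Nat.Coprime m n → f (m * n) = f m * f n := by
    intro m n hmn
    rcases Nat.eq_zero_or_pos m with hm | hm
    · subst hm
      have : n = 1 := (Nat.coprime_zero_left n).mp hmn
      subst this
      simp [hf1]
    rcases Nat.eq_zero_or_pos n with hn | hn
    · subst hn
      have : m = 1 := (Nat.coprime_zero_right m).mp hmn
      subst this
      simp [hf1]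
    simp only [hf]
    rw [hmn.card_divisors_mul]
    have : ((m*n : ℕ):ℝ)^(-σ) = (m:ℝ)^(-σ) * (n:ℝ)^(-σ) := by
      push_cast
      rw [Real.mul_rpow (by positivity) (by positivity)]
    rw [this]
    push_cast
    ring
  have hsum : ∀ {p : ℕ}, p.Prime → Summable (fun a : ℕ => ‖f (p^a)‖) := by
    intro p hp
    have hppos : (0:ℝ) < p := by exact_mod_cast hp.pos
    have ht0 : 0 < (p:ℝ)^(-σ) := Real.rpow_pos_of_pos hppos _
    have ht1 : (p:ℝ)^(-σ) < 1 :=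
      lt_of_le_of_lt (rpow_neg_le_base hp.two_le hσ) ckw_lt_one
    have h1 : Summable (fun a : ℕ => ((a:ℝ)+1)^k * ((p:ℝ)^(-σ))^a) := by
      have := summable_shift k 1 ht0 ht1
      apply this.congr; intro a; push_cast; ring_nf
    apply h1.congr
    intro a
    rw [Real.norm_eq_abs, abs_of_nonneg (hf0 _)]
    exact (f_prime_pow k σ hp a).symm
  obtain ⟨hnorm, hhs⟩ :=
    EulerProduct.summable_and_hasSum_smoothNumbers_prod_primesBelow_tsum
      (f := f) hf1 hmul hsum N
  have hind : HasSum (Set.indicator N.smoothNumbers f)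
      (∏ p ∈ N.primesBelow, ∑' a : ℕ, f (p^a)) := by
    rwa [← hasSum_subtype_iff_indicator]
  have hstep1 : ∑ n ∈ F, f n ≤ ∏ p ∈ N.primesBelow, ∑' a : ℕ, f (p^a) := by
    have : ∑ n ∈ F, f n = ∑ n ∈ F, Set.indicator N.smoothNumbers f n := by
      apply Finset.sum_congr rfl
      intro n hn
      rw [Set.indicator_of_mem (hF n hn)]
    rw [this]
    exact sum_le_hasSum F
      (fun n _ => Set.indicator_nonneg (fun m _ => hf0 m) n) hind
  have hstep2 : ∏ p ∈ N.primesBelow, ∑' a : ℕ, f (p^a)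
      ≤ ∏ p ∈ N.primesBelow, Real.exp (ck k * (p:ℝ)^(-σ)) := by
    apply Finset.prod_le_prod
    · intro p _
      exact tsum_nonneg (fun a => hf0 _)
    · intro p hp
      have hpp := Nat.prime_of_mem_primesBelow hp
      have h1 : ∑' a : ℕ, f (p^a) = ∑' a : ℕ, ((a:ℝ)+1)^k * ((p:ℝ)^(-σ))^a :=
        tsum_congr (fun a => f_prime_pow k σ hpp a)
      rw [h1]
      calc ∑' a : ℕ, ((a:ℝ)+1)^k * ((p:ℝ)^(-σ))^a
          ≤ 1 + ck k * (p:ℝ)^(-σ) := local_bound k hpp.two_le hσ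
      _ ≤ Real.exp (ck k * (p:ℝ)^(-σ)) := by
          have := Real.add_one_le_exp (ck k * (p:ℝ)^(-σ))
          linarith
  calc ∑ n ∈ F, f n ≤ ∏ p ∈ N.primesBelow, ∑' a : ℕ, f (p^a) := hstep1
  _ ≤ ∏ p ∈ N.primesBelow, Real.exp (ck k * (p:ℝ)^(-σ)) := hstep2
  _ = Real.exp (∑ p ∈ N.primesBelow, ck k * (p:ℝ)^(-σ)) := (Real.exp_sum _ _).symm
  _ = Real.exp (ck k * ∑ p ∈ N.primesBelow, (p:ℝ)^(-σ)) := by rw [Finset.mul_sum]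

lemma r2_le {n : ℕ} (hn : n ≠ 0) : r2 n ≤ 2 * n.divisors.card := by
  have h1 := r2set_card_le hn
  have h2 : 1 ≤ n.divisors.card :=
    Finset.card_pos.mpr ⟨n, Nat.mem_divisors_self n hn⟩
  rw [r2_eq_card]; omega

set_option maxHeartbeats 1000000 in
theorem smooth_part_bound (k : ℕ) (hk : 1 ≤ k) :
    ∃ C : ℝ, 0 < C ∧ ∃ x₀ : ℝ, ∀ x : ℝ, x₀ ≤ x →
      (∑ n ∈ Finset.Icc 1 ⌊x⌋₊,
          (if ∀ p : ℕ, p.Prime → p ∣ n →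
              (p : ℝ) ≤ x ^ (1 / Real.log (Real.log x))
            then (r2 n : ℝ) ^ k else 0)) ≤
        C * x / Real.log x ^ 4 := by
  classical
  set c := ck k with hc
  have hc0 : 0 ≤ c := ck_nonneg k
  clear_value c
  set A : ℝ := 24 * c + 4 with hA
  have hA1 : (1:ℝ) ≤ A := by linarith
  refine ⟨(2:ℝ)^k * Real.exp (24 * c * (A * Real.exp A)), by positivity,
    Real.exp ((8*(A+3))^2), ?_⟩
  intro x hx
  set L := Real.log x with hL
  set u := Real.log L with hu
  have hM : (0:ℝ) < (8*(A+3))^2 := by positivity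
  have hx1 : (1:ℝ) < x := by
    calc (1:ℝ) = Real.exp 0 := Real.exp_zero.symm
    _ < Real.exp ((8*(A+3))^2) := Real.exp_lt_exp.mpr hM
    _ ≤ x := hx
  have hxpos : (0:ℝ) < x := by linarith
  have hLbig : (8*(A+3))^2 ≤ L := by
    rw [hL, ← Real.log_exp ((8*(A+3))^2)]
    exact Real.log_le_log (Real.exp_pos _) hx
  have hL1 : (1:ℝ) < L := by nlinarith
  have hLpos : (0:ℝ) < L := by linarith
  have hL3 : (3:ℝ) ≤ L := by nlinarith
  have hu1 : (1:ℝ) ≤ u := by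
    rw [hu, Real.le_log_iff_exp_le hLpos]
    have := Real.exp_one_lt_d9
    linarith
  have hupos : (0:ℝ) < u := by linarith
  set y := x ^ (1 / u) with hy
  have hypos : 0 < y := Real.rpow_pos_of_pos hxpos _
  have hlogy : Real.log y = L / u := by
    rw [hy, Real.log_rpow hxpos]
    ring
  have hsqrt : Real.sqrt L ^ 2 = L := Real.sq_sqrt hLpos.le
  have hsqrtpos : 0 < Real.sqrt L := Real.sqrt_pos.mpr hLpos
  have husqrt : u ≤ 2 * Real.sqrt L := by
    rw [hu]
    have h1 : Real.log L = 2 * Real.log (Real.sqrt L) := by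
      rw [Real.log_sqrt hLpos.le]; ring
    rw [h1]
    have := Real.log_le_sub_one_of_pos hsqrtpos
    linarith
  have hsqrtbig : 4*(A+3) ≤ Real.sqrt L / 2 := by
    have h8 : (8*(A+3)) ≤ Real.sqrt L := by
      have := Real.sqrt_le_sqrt hLbig
      rwa [Real.sqrt_sq (by positivity)] at this
    linarith
  have hlogybig : 4*(A+3) ≤ Real.log y := by
    rw [hlogy]
    calc (4:ℝ)*(A+3) ≤ Real.sqrt L / 2 := hsqrtbig
    _ ≤ L / u := by
        rw [div_le_div_iff₀ (by norm_num) hupos]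
        calc Real.sqrt L * u ≤ Real.sqrt L * (2*Real.sqrt L) :=
              mul_le_mul_of_nonneg_left husqrt hsqrtpos.le
        _ = 2 * (Real.sqrt L^2) := by ring
        _ = L * 2 := by rw [hsqrt]; ring
  have hlogypos : 0 < Real.log y := by nlinarith
  have hy16 : (16:ℝ) ≤ y := by
    rw [← Real.exp_log (by norm_num : (0:ℝ) < 16), ← Real.exp_log hypos]
    apply Real.exp_le_exp.mpr
    have h16 : Real.log 16 ≤ 2.78 := by
      rw [show (16:ℝ) = 2^4 by norm_num, Real.log_pow]
      have := Real.log_two_lt_d9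
      push_cast; nlinarith
    nlinarith
  have hAy : 4*A ≤ Real.log y := by nlinarith
  set σ : ℝ := 1 - A / Real.log y with hσdef
  have hσ34 : 3/4 ≤ σ := by
    rw [hσdef]
    have h1 : A / Real.log y ≤ 1/4 := by
      rw [div_le_iff₀ hlogypos]; nlinarith
    linarith
  have hσ0 : (0:ℝ) ≤ σ := le_trans (by norm_num) hσ34
  set N := ⌊y⌋₊ + 1 with hN
  set F := (Finset.Icc 1 ⌊x⌋₊).filter
      (fun n => ∀ p : ℕ, p.Prime → p ∣ n → (p : ℝ) ≤ y) with hF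
  -- Step A : the sum equals sum over F
  have hstepA : ∑ n ∈ Finset.Icc 1 ⌊x⌋₊,
      (if ∀ p : ℕ, p.Prime → p ∣ n → (p : ℝ) ≤ y then (r2 n : ℝ) ^ k else 0)
        = ∑ n ∈ F, (r2 n : ℝ)^k := (Finset.sum_filter _ _).symm
  rw [hstepA]
  -- F consists of smooth numbers
  have hFsmooth : ∀ n ∈ F, n ∈ N.smoothNumbers := by
    intro n hn
    rw [hF, Finset.mem_filter] at hn
    obtain ⟨hn1, hn2⟩ := hn
    rw [Nat.mem_smoothNumbers']
    intro p hp hpn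
    have h1 : (p:ℝ) ≤ y := hn2 p hp hpn
    have h2 : p ≤ ⌊y⌋₊ := Nat.le_floor h1
    rw [hN]
    omega
  -- Step B : pointwise bound
  have hstepB : ∀ n ∈ F, (r2 n : ℝ)^k
      ≤ (2:ℝ)^k * x^σ * (((n.divisors.card : ℝ))^k * (n:ℝ)^(-σ)) := by
    intro n hn
    rw [hF, Finset.mem_filter, Finset.mem_Icc] at hn
    obtain ⟨⟨hn1, hn2⟩, _⟩ := hn
    have hnne : n ≠ 0 := by omega
    have hnx : (n:ℝ) ≤ x := by
      calc (n:ℝ) ≤ (⌊x⌋₊ : ℝ) := by exact_mod_cast hn2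
      _ ≤ x := Nat.floor_le hxpos.le
    have hnpos : (0:ℝ) < n := by exact_mod_cast Nat.pos_of_ne_zero hnne
    have h1 : (r2 n : ℝ) ≤ 2 * n.divisors.card := by exact_mod_cast r2_le hnne
    have h2 : (r2 n : ℝ)^k ≤ (2 * (n.divisors.card:ℝ))^k :=
      pow_le_pow_left₀ (by positivity) h1 k
    have h3 : (1:ℝ) ≤ x^σ * (n:ℝ)^(-σ) := by
      have hnσ : (0:ℝ) < (n:ℝ)^σ := Real.rpow_pos_of_pos hnpos σ
      rw [Real.rpow_neg hnpos.le, ← div_eq_mul_inv, le_div_iff₀ hnσ, one_mul]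
      exact Real.rpow_le_rpow hnpos.le hnx hσ0
    calc (r2 n : ℝ)^k ≤ (2 * (n.divisors.card:ℝ))^k := h2
    _ = (2:ℝ)^k * ((n.divisors.card:ℝ))^k * 1 := by rw [mul_pow]; ring
    _ ≤ (2:ℝ)^k * ((n.divisors.card:ℝ))^k * (x^σ * (n:ℝ)^(-σ)) := by
        apply mul_le_mul_of_nonneg_left h3 (by positivity)
    _ = (2:ℝ)^k * x^σ * (((n.divisors.card : ℝ))^k * (n:ℝ)^(-σ)) := by ring
  have hxσpos : (0:ℝ) < x^σ := Real.rpow_pos_of_pos hxpos σ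
  calc ∑ n ∈ F, (r2 n : ℝ)^k
      ≤ ∑ n ∈ F, (2:ℝ)^k * x^σ * (((n.divisors.card : ℝ))^k * (n:ℝ)^(-σ)) :=
        Finset.sum_le_sum hstepB
  _ = (2:ℝ)^k * x^σ * ∑ n ∈ F, ((n.divisors.card : ℝ))^k * (n:ℝ)^(-σ) := by
      rw [Finset.mul_sum]
  _ ≤ (2:ℝ)^k * x^σ * Real.exp (c * ∑ p ∈ N.primesBelow, (p:ℝ)^(-σ)) := by
      have := smooth_sum_le k hk hσ34 N F hFsmooth
      rw [← hc] at this
      exact mul_le_mul_of_nonneg_left this (by positivity)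
  _ ≤ (2:ℝ)^k * x^σ * Real.exp (c * (24 * Real.log (Real.log y) + 24 * (A * Real.exp A))) := by
      apply mul_le_mul_of_nonneg_left _ (by positivity)
      apply Real.exp_le_exp.mpr
      apply mul_le_mul_of_nonneg_left _ hc0
      exact mertens_sigma hA1 hy16 hAy
  _ ≤ (2:ℝ)^k * x^σ * Real.exp (24 * c * u + 24 * c * (A * Real.exp A)) := by
      apply mul_le_mul_of_nonneg_left _ (by positivity)
      apply Real.exp_le_exp.mpr
      have hll : Real.log (Real.log y) ≤ u := by
        rw [hu]
        apply Real.log_le_log hlogypos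
        rw [hlogy]
        calc L / u ≤ L / 1 := by
              apply div_le_div_of_nonneg_left hLpos.le zero_lt_one hu1
        _ = L := by ring
      nlinarith
  _ = ((2:ℝ)^k * Real.exp (24 * c * (A * Real.exp A))) * x / L ^ 4 := by
      have hLne : L ≠ 0 := ne_of_gt hLpos
      have hune : u ≠ 0 := ne_of_gt hupos
      have hxσ : x^σ = x * Real.exp (-(A*u)) := by
        rw [Real.rpow_def_of_pos hxpos, ← hL]
        have hσL : L * σ = L - A * u := by
          rw [hσdef, hlogy]
          field_simp
          try ring
        rw [hσL, Real.exp_sub]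
        rw [hL, Real.exp_log hxpos]
        rw [Real.exp_neg, div_eq_mul_inv]
      have h4u : Real.exp (-(4*u)) = (L^4)⁻¹ := by
        rw [Real.exp_neg]
        congr 1
        rw [show (4:ℝ)*u = ((4:ℕ):ℝ)*u by norm_num, Real.exp_nat_mul]
        rw [hu, Real.exp_log hLpos]
      have key : Real.exp (-(A*u)) * Real.exp (24*c*u + 24*c*(A*Real.exp A))
          = Real.exp (24*c*(A*Real.exp A)) * (L^4)⁻¹ := by
        rw [← h4u, ← Real.exp_add, ← Real.exp_add]
        congr 1
        rw [hA]
        ring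
      rw [hxσ]
      rw [show (2:ℝ)^k * (x * Real.exp (-(A*u))) * Real.exp (24*c*u + 24*c*(A*Real.exp A))
          = (2:ℝ)^k * x * (Real.exp (-(A*u)) * Real.exp (24*c*u + 24*c*(A*Real.exp A))) from by
            ring]
      rw [key]
      field_simp
end

section
/- For any k ≥ 1, for all x ≥ 1 and d ≥ 1: ∑_{a ≤ √x, d | a} ∏_{p | a}(1 + 2^{k+1}/p) ≪_k √x / d^{1/2}. -/
open scoped Classical

open Finset

lemma sqfree_prod_primes {s : Finset ℕ} (hs : ∀ p ∈ s, p.Prime) : Squarefree (∏ p ∈ s, p) := by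
  induction s using Finset.cons_induction with
  | empty => simpa using squarefree_one
  | cons p s hp ih =>
    rw [Finset.prod_cons]
    refine (Nat.squarefree_mul ?_).2 ⟨(hs p (Finset.mem_cons_self _ _)).squarefree,
      ih fun q hq => hs q (Finset.mem_cons_of_mem hq)⟩
    exact Nat.Coprime.prod_right fun q hq => (Nat.coprime_primes (hs p (Finset.mem_cons_self _ _))
      (hs q (Finset.mem_cons_of_mem hq))).2 (by rintro rfl; exact hp hq)

lemma expand_lemma (M : ℝ) (a : ℕ) (ha : a ≠ 0) :
    ∏ p ∈ a.primeFactors, (1 + M / (p : ℝ)) =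
      ∑ ℓ ∈ a.divisors.filter Squarefree, M ^ ℓ.primeFactors.card / (ℓ : ℝ) := by
  have h1 : ∀ p ∈ a.primeFactors, (1 : ℝ) + M / p = M / p + 1 := fun p _ => by ring
  rw [Finset.prod_congr rfl h1, Finset.prod_add]
  simp only [Finset.prod_const_one, mul_one]
  refine Finset.sum_nbij' (fun (T : Finset ℕ) => ∏ p ∈ T, p)
    (fun (ℓ : ℕ) => ℓ.primeFactors) ?_ ?_ ?_ ?_ ?_
  · intro T hT
    rw [Finset.mem_powerset] at hT
    have hprime : ∀ p ∈ T, p.Prime := fun p hp => Nat.prime_of_mem_primeFactors (hT hp)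
    rw [Finset.mem_filter, Nat.mem_divisors]
    exact ⟨⟨(Finset.prod_dvd_prod_of_subset _ _ _ hT).trans (Nat.prod_primeFactors_dvd a), ha⟩,
      sqfree_prod_primes hprime⟩
  · intro ℓ hℓ
    rw [Finset.mem_filter, Nat.mem_divisors] at hℓ
    exact Finset.mem_powerset.2 (Nat.primeFactors_mono hℓ.1.1 ha)
  · intro T hT
    rw [Finset.mem_powerset] at hT
    exact Nat.primeFactors_prod fun p hp => Nat.prime_of_mem_primeFactors (hT hp)
  · intro ℓ hℓ
    rw [Finset.mem_filter] at hℓ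
    exact Nat.prod_primeFactors_of_squarefree hℓ.2
  · intro T hT
    rw [Finset.mem_powerset] at hT
    have hprime : ∀ p ∈ T, p.Prime := fun p hp => Nat.prime_of_mem_primeFactors (hT hp)
    rw [Nat.primeFactors_prod hprime, Nat.cast_prod]
    rw [Finset.prod_div_distrib, Finset.prod_const]

lemma pow_omega_le (M : ℝ) (hM : 1 ≤ M) (T : ℕ) (hT : M ^ 4 ≤ (T : ℝ)) {ℓ : ℕ}
    (hℓ : Squarefree ℓ) :
    M ^ ℓ.primeFactors.card ≤ M ^ (T + 1) * (ℓ : ℝ) ^ (1/4 : ℝ) := by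
  have hM0 : (0:ℝ) ≤ M := le_trans zero_le_one hM
  have hP := ℓ.primeFactors
  rw [← Finset.prod_const]
  rw [← Finset.prod_filter_mul_prod_filter_not ℓ.primeFactors (fun p => p ≤ T)]
  have h1 : ∏ _p ∈ ℓ.primeFactors.filter (fun p => p ≤ T), M ≤ M ^ (T + 1) := by
    rw [Finset.prod_const]
    apply pow_le_pow_right₀ hM
    have hsub : ℓ.primeFactors.filter (fun p => p ≤ T) ⊆ Finset.range (T + 1) := by
      intro p hp
      rw [Finset.mem_filter] at hp
      exact Finset.mem_range.2 (Nat.lt_succ_of_le hp.2)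
    simpa using Finset.card_le_card hsub
  have h2 : ∏ _p ∈ ℓ.primeFactors.filter (fun p => ¬ p ≤ T), M ≤ (ℓ : ℝ) ^ (1/4 : ℝ) := by
    have step : ∏ _p ∈ ℓ.primeFactors.filter (fun p => ¬ p ≤ T), M ≤
        ∏ p ∈ ℓ.primeFactors.filter (fun p => ¬ p ≤ T), (p : ℝ) ^ (1/4 : ℝ) := by
      apply Finset.prod_le_prod (fun _ _ => hM0)
      intro p hp
      rw [Finset.mem_filter, not_le] at hp
      have hMp : M ^ 4 ≤ (p : ℝ) := le_trans hT (by exact_mod_cast hp.2.le)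
      calc M = (M ^ 4) ^ (1/4 : ℝ) := by
              rw [← Real.rpow_natCast M 4, ← Real.rpow_mul hM0]
              norm_num
        _ ≤ (p : ℝ) ^ (1/4 : ℝ) := Real.rpow_le_rpow (by positivity) hMp (by norm_num)
    refine step.trans ?_
    rw [Real.finset_prod_rpow _ _ (fun p _ => by positivity) _]
    apply Real.rpow_le_rpow (by positivity) _ (by norm_num)
    rw [← Nat.cast_prod]
    have hdvd : (∏ p ∈ ℓ.primeFactors.filter (fun p => ¬ p ≤ T), p) ∣ ℓ := by
      calc (∏ p ∈ ℓ.primeFactors.filter (fun p => ¬ p ≤ T), p) ∣ ∏ p ∈ ℓ.primeFactors, p :=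
            Finset.prod_dvd_prod_of_subset _ _ _ (Finset.filter_subset _ _)
        _ = ℓ := Nat.prod_primeFactors_of_squarefree hℓ
    exact_mod_cast Nat.le_of_dvd hℓ.ne_zero.bot_lt hdvd
  exact mul_le_mul h1 h2 (Finset.prod_nonneg fun _ _ => hM0) (by positivity)

theorem divisor_product_sum_bound (k : ℕ) (hk : 1 ≤ k) :
    ∃ C : ℝ, 0 < C ∧ ∀ x : ℝ, 1 ≤ x → ∀ d : ℕ, 1 ≤ d →
      ∑ a ∈ (Finset.Icc 1 ⌊Real.sqrt x⌋₊).filter (fun a => d ∣ a),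
          ∏ p ∈ a.primeFactors, (1 + (2 : ℝ) ^ (k + 1) / (p : ℝ)) ≤
        C * Real.sqrt x / (d : ℝ) ^ (1 / 2 : ℝ) := by
  set M : ℝ := (2 : ℝ) ^ (k + 1) with hMdef
  have hM : (1 : ℝ) ≤ M := one_le_pow₀ (by norm_num)
  have hM0 : (0 : ℝ) ≤ M := le_trans zero_le_one hM
  set T : ℕ := 2 ^ (4 * (k + 1)) with hTdef
  have hT : M ^ 4 ≤ (T : ℝ) := by
    rw [hMdef, hTdef]
    push_cast
    rw [← pow_mul]
    ring_nf
    exact le_rfl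
  set K : ℝ := M ^ (T + 1) with hKdef
  have hK : (1 : ℝ) ≤ K := one_le_pow₀ hM
  have hK0 : (0 : ℝ) ≤ K := le_trans zero_le_one hK
  have hsummable : Summable (fun n : ℕ => 1 / (n : ℝ) ^ (5/4 : ℝ)) :=
    Real.summable_one_div_nat_rpow.2 (by norm_num)
  set S : ℝ := ∑' n : ℕ, 1 / (n : ℝ) ^ (5/4 : ℝ) with hSdef
  have hS0 : (0 : ℝ) ≤ S := tsum_nonneg fun n => by positivity
  refine ⟨K * S + 1, by positivity, ?_⟩
  intro x hx d hd
  set N : ℕ := ⌊Real.sqrt x⌋₊ with hNdef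
  have hsx0 : (0 : ℝ) ≤ Real.sqrt x := Real.sqrt_nonneg x
  have hsx1 : (1 : ℝ) ≤ Real.sqrt x := by
    rw [show (1:ℝ) = Real.sqrt 1 by simp]; exact Real.sqrt_le_sqrt hx
  have hNx : (N : ℝ) ≤ Real.sqrt x := Nat.floor_le hsx0
  have hd0 : (0 : ℝ) < (d : ℝ) := by exact_mod_cast hd
  have hdr : (0 : ℝ) < (d : ℝ) ^ (1/2 : ℝ) := Real.rpow_pos_of_pos hd0 _
  set A := (Finset.Icc 1 N).filter (fun a => d ∣ a) with hAdef
  set g : ℕ → ℝ := fun ℓ => M ^ ℓ.primeFactors.card / (ℓ : ℝ) with hgdef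
  have hg0 : ∀ ℓ : ℕ, 0 ≤ g ℓ := fun ℓ => by
    simp only [hgdef]; positivity
  calc ∑ a ∈ A, ∏ p ∈ a.primeFactors, (1 + M / (p : ℝ))
      = ∑ a ∈ A, ∑ ℓ ∈ (Finset.Icc 1 N).filter (fun ℓ => ℓ ∣ a ∧ Squarefree ℓ), g ℓ := by
        refine Finset.sum_congr rfl fun a ha => ?_
        rw [hAdef, Finset.mem_filter, Finset.mem_Icc] at ha
        have ha0 : a ≠ 0 := by omega
        rw [expand_lemma M a ha0]
        refine Finset.sum_congr ?_ fun _ _ => rfl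
        ext ℓ
        simp only [Finset.mem_filter, Nat.mem_divisors, Finset.mem_Icc]
        constructor
        · rintro ⟨⟨hdvd, -⟩, hsq⟩
          refine ⟨⟨?_, le_trans (Nat.le_of_dvd (by omega) hdvd) ha.1.2⟩, hdvd, hsq⟩
          exact Nat.pos_of_dvd_of_pos hdvd (by omega)
        · rintro ⟨-, hdvd, hsq⟩
          exact ⟨⟨hdvd, ha0⟩, hsq⟩
    _ = ∑ ℓ ∈ Finset.Icc 1 N, ∑ a ∈ A, if ℓ ∣ a ∧ Squarefree ℓ then g ℓ else 0 := by
        simp_rw [Finset.sum_filter]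
        exact Finset.sum_comm
    _ ≤ ∑ ℓ ∈ Finset.Icc 1 N, K * N / (d : ℝ) ^ (1/2 : ℝ) * (1 / (ℓ : ℝ) ^ (5/4 : ℝ)) := by
        refine Finset.sum_le_sum fun ℓ hℓ => ?_
        rw [Finset.mem_Icc] at hℓ
        have hℓ0 : (0 : ℝ) < (ℓ : ℝ) := by exact_mod_cast hℓ.1
        by_cases hsq : Squarefree ℓ
        · simp only [hsq, and_true]
          rw [← Finset.sum_filter, Finset.sum_const, nsmul_eq_mul]
          have hcard : (A.filter (fun a => ℓ ∣ a)).card = N / Nat.lcm d ℓ := by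
            rw [hAdef, Finset.filter_filter]
            have hfil : (Finset.Icc 1 N).filter (fun a => d ∣ a ∧ ℓ ∣ a) =
                (Finset.Icc 1 N).filter (fun a => Nat.lcm d ℓ ∣ a) := by
              ext a
              simp only [Finset.mem_filter]
              refine and_congr_right fun _ => ⟨fun h => Nat.lcm_dvd h.1 h.2,
                fun h => ⟨(Nat.dvd_lcm_left d ℓ).trans h, (Nat.dvd_lcm_right d ℓ).trans h⟩⟩
            rw [hfil, show Finset.Icc 1 N = Finset.Ioc 0 N from Finset.Icc_add_one_left_eq_Ioc 0 N]
            exact Nat.Ioc_filter_dvd_card_eq_div N (Nat.lcm d ℓ)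
          rw [hcard]
          have hlcm_pos : 0 < Nat.lcm d ℓ :=
            Nat.pos_of_ne_zero (Nat.lcm_ne_zero (by omega) (by omega))
          have hlcm_lb : (d : ℝ) ^ (1/2 : ℝ) * (ℓ : ℝ) ^ (1/2 : ℝ) ≤ (Nat.lcm d ℓ : ℝ) := by
            have h1 : d * ℓ ≤ Nat.lcm d ℓ * Nat.lcm d ℓ := by
              calc d * ℓ = Nat.gcd d ℓ * Nat.lcm d ℓ := (Nat.gcd_mul_lcm d ℓ).symm
                _ ≤ Nat.lcm d ℓ * Nat.lcm d ℓ := by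
                    apply Nat.mul_le_mul_right
                    exact Nat.le_of_dvd hlcm_pos ((Nat.gcd_dvd_left d ℓ).trans (Nat.dvd_lcm_left d ℓ))
            have h2 : (d : ℝ) * (ℓ : ℝ) ≤ ((Nat.lcm d ℓ : ℝ)) ^ 2 := by
              rw [sq]; exact_mod_cast h1
            calc (d : ℝ) ^ (1/2 : ℝ) * (ℓ : ℝ) ^ (1/2 : ℝ)
                = ((d : ℝ) * (ℓ : ℝ)) ^ (1/2 : ℝ) := (Real.mul_rpow hd0.le hℓ0.le).symm
              _ ≤ (((Nat.lcm d ℓ : ℝ)) ^ 2) ^ (1/2 : ℝ) :=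
                  Real.rpow_le_rpow (by positivity) h2 (by norm_num)
              _ = (Nat.lcm d ℓ : ℝ) := by
                  rw [← Real.rpow_natCast (Nat.lcm d ℓ : ℝ) 2, ← Real.rpow_mul (by positivity)]
                  norm_num
          have hcast : ((N / Nat.lcm d ℓ : ℕ) : ℝ) ≤ (N : ℝ) / (Nat.lcm d ℓ : ℝ) :=
            Nat.cast_div_le
          calc ((N / Nat.lcm d ℓ : ℕ) : ℝ) * g ℓ
              ≤ ((N : ℝ) / (Nat.lcm d ℓ : ℝ)) * g ℓ :=
                mul_le_mul_of_nonneg_right hcast (hg0 ℓ)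
            _ ≤ ((N : ℝ) / ((d : ℝ) ^ (1/2 : ℝ) * (ℓ : ℝ) ^ (1/2 : ℝ))) * g ℓ := by
                apply mul_le_mul_of_nonneg_right _ (hg0 ℓ)
                apply div_le_div_of_nonneg_left (by positivity) (by positivity) hlcm_lb
            _ ≤ ((N : ℝ) / ((d : ℝ) ^ (1/2 : ℝ) * (ℓ : ℝ) ^ (1/2 : ℝ))) *
                  (K * (ℓ : ℝ) ^ (1/4 : ℝ) / (ℓ : ℝ)) := by
                apply mul_le_mul_of_nonneg_left _ (by positivity)
                rw [hgdef]
                exact (div_le_div_iff_of_pos_right hℓ0).2 (pow_omega_le M hM T hT hsq)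
            _ = K * N / (d : ℝ) ^ (1/2 : ℝ) *
                  ((ℓ : ℝ) ^ (1/4 : ℝ) / ((ℓ : ℝ) ^ (1/2 : ℝ) * (ℓ : ℝ))) := by ring
            _ = K * N / (d : ℝ) ^ (1/2 : ℝ) * (1 / (ℓ : ℝ) ^ (5/4 : ℝ)) := by
                rw [show (ℓ : ℝ) ^ (1/2 : ℝ) * (ℓ : ℝ) = (ℓ : ℝ) ^ (3/2 : ℝ) from by
                      rw [← Real.rpow_add_one hℓ0.ne']; norm_num,
                  ← Real.rpow_sub hℓ0, show (1/4 : ℝ) - 3/2 = -(5/4) by norm_num,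
                  Real.rpow_neg hℓ0.le]
                norm_num
        · simp only [hsq, and_false, if_false, Finset.sum_const_zero]
          positivity
    _ = K * N / (d : ℝ) ^ (1/2 : ℝ) * ∑ ℓ ∈ Finset.Icc 1 N, 1 / (ℓ : ℝ) ^ (5/4 : ℝ) := by
        rw [Finset.mul_sum]
    _ ≤ K * N / (d : ℝ) ^ (1/2 : ℝ) * S := by
        apply mul_le_mul_of_nonneg_left _ (by positivity)
        exact Summable.sum_le_tsum _ (fun n _ => by positivity) hsummable
    _ ≤ (K * S + 1) * Real.sqrt x / (d : ℝ) ^ (1/2 : ℝ) := by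
        rw [div_mul_eq_mul_div]
        apply (div_le_div_iff_of_pos_right hdr).2
        nlinarith [mul_nonneg (mul_nonneg hK0 hS0) (sub_nonneg.2 hNx),
          mul_nonneg hS0 hsx0, hsx1]
end
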